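/- arXiv:2209.04279 — 8 statements merged into one kernel-verified Lean document; each statement's English description precedes it below -/
import Mathlib

section
/- Assume k(s) > 0 for all s and let p ∈ ℝ² lie neither on the image of α nor on the image of the evolute β. Then the set S_p = { s ∈ [0,l) : (α(s) − p)·α'(s) = 0 } is finite and nonempty; for every s ∈ S_p one has ρ_s·k(s) ≠ 1 (where ρ_s = (p − α(s))·n(s), so that p = α(s) + ρ_s n(s)); the number of s ∈ S_p with ρ_s·k(s) > 1 equals the number of s ∈ S_p with ρ_s·k(s) < 1; and each of these two counts is at least 1. -/
open Filter Topology

noncomputable def dotR (z w : ℂ) : ℝ := z.re * w.re + z.im * w.im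

lemma hasDerivAt_re' {u : ℝ → ℂ} {u' : ℂ} {s : ℝ} (hu : HasDerivAt u u' s) :
    HasDerivAt (fun t => (u t).re) u'.re s :=
  Complex.reCLM.hasFDerivAt.comp_hasDerivAt s hu

lemma hasDerivAt_im' {u : ℝ → ℂ} {u' : ℂ} {s : ℝ} (hu : HasDerivAt u u' s) :
    HasDerivAt (fun t => (u t).im) u'.im s :=
  Complex.imCLM.hasFDerivAt.comp_hasDerivAt s hu

lemma hasDerivAt_dotR {u v : ℝ → ℂ} {u' v' : ℂ} {s : ℝ}
    (hu : HasDerivAt u u' s) (hv : HasDerivAt v v' s) :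
    HasDerivAt (fun t => dotR (u t) (v t)) (dotR u' (v s) + dotR (u s) v') s := by
  have h : HasDerivAt (fun t => (u t).re * (v t).re + (u t).im * (v t).im) _ s :=
    ((hasDerivAt_re' hu).mul (hasDerivAt_re' hv)).add
    ((hasDerivAt_im' hu).mul (hasDerivAt_im' hv))
  convert h using 1
  · rfl
  · simp only [dotR]; ring

lemma decompR {z w : ℂ} (hw : ‖w‖ = 1) (h : dotR z w = 0) :
    z = ((dotR z (Complex.I * w) : ℝ) : ℂ) * (Complex.I * w) := by
  have h2 : w.re * w.re + w.im * w.im = 1 := by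
    have h4 := Complex.normSq_apply w
    have h3 : Complex.normSq w = 1 := by
      rw [← Complex.sq_norm, hw]; norm_num
    linarith [h4 ▸ h3]
  simp only [dotR] at h ⊢
  apply Complex.ext <;> simp
  · linear_combination w.re * h - z.re * h2
  · linear_combination w.im * h - z.im * h2

lemma periodic_deriv'' {F : Type*} [NormedAddCommGroup F] [NormedSpace ℝ F]
    {f : ℝ → F} {l : ℝ} (h : Function.Periodic f l) :
    Function.Periodic (deriv f) l := by
  intro x
  rw [← deriv_comp_add_const f l x, h.funext]

lemma deriv_nonneg_right' {g : ℝ → ℝ} (hg : Differentiable ℝ g) {a b : ℝ} (hab : a < b)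
    (ha : g a = 0) (hpos : ∀ y ∈ Set.Ioo a b, 0 ≤ g y) : 0 ≤ deriv g a := by
  have hda : HasDerivAt g (deriv g a) a := (hg a).hasDerivAt
  rw [hasDerivAt_iff_tendsto_slope] at hda
  have hmono : 𝓝[>] a ≤ 𝓝[≠] a := nhdsWithin_mono a fun y hy => ne_of_gt hy
  have ht : Filter.Tendsto (slope g a) (𝓝[>] a) (𝓝 (deriv g a)) := hda.mono_left hmono
  refine ge_of_tendsto ht ?_
  have hIo : Set.Ioo a b ∈ 𝓝[>] a := Ioo_mem_nhdsGT_of_mem ⟨le_refl a, hab⟩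
  filter_upwards [hIo] with y hy
  have : slope g a y = g y / (y - a) := by simp [slope, ha, div_eq_inv_mul]
  rw [this]
  exact div_nonneg (hpos y hy) (by linarith [hy.1])

lemma deriv_nonpos_left' {g : ℝ → ℝ} (hg : Differentiable ℝ g) {a b : ℝ} (hab : a < b)
    (hb : g b = 0) (hpos : ∀ y ∈ Set.Ioo a b, 0 ≤ g y) : deriv g b ≤ 0 := by
  have hda : HasDerivAt g (deriv g b) b := (hg b).hasDerivAt
  rw [hasDerivAt_iff_tendsto_slope] at hda
  have hmono : 𝓝[<] b ≤ 𝓝[≠] b := nhdsWithin_mono b fun y hy => ne_of_lt hy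
  have ht : Filter.Tendsto (slope g b) (𝓝[<] b) (𝓝 (deriv g b)) := hda.mono_left hmono
  refine le_of_tendsto ht ?_
  have hIo : Set.Ioo a b ∈ 𝓝[<] b := Ioo_mem_nhdsLT_of_mem ⟨hab, le_refl b⟩
  filter_upwards [hIo] with y hy
  have : slope g b y = g y / (y - b) := by simp [slope, hb, div_eq_inv_mul]
  rw [this]
  exact div_nonpos_of_nonneg_of_nonpos (hpos y hy) (by linarith [hy.2])

lemma alt_signs {g : ℝ → ℝ} (hg : Differentiable ℝ g) {a b : ℝ} (hab : a < b)
    (ha : g a = 0) (hb : g b = 0) (hno : ∀ y ∈ Set.Ioo a b, g y ≠ 0)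
    (ha' : deriv g a ≠ 0) (hb' : deriv g b ≠ 0) :
    (0 < deriv g a ↔ deriv g b < 0) := by
  have hm : (a + b) / 2 ∈ Set.Ioo a b := ⟨by linarith, by linarith⟩
  have hsign : (∀ y ∈ Set.Ioo a b, 0 < g y) ∨ (∀ y ∈ Set.Ioo a b, g y < 0) := by
    rcases (hno _ hm).lt_or_gt with hneg | hpos
    · right
      intro y hy
      rcases (hno y hy).lt_or_gt with h1 | h1
      · exact h1
      · exfalso
        have hsub : Set.uIcc y ((a + b) / 2) ⊆ Set.Ioo a b :=
          (Set.ordConnected_Ioo).uIcc_subset hy hm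
        have hcont : ContinuousOn g (Set.uIcc y ((a + b) / 2)) :=
          hg.continuous.continuousOn
        have h0 : (0 : ℝ) ∈ Set.uIcc (g y) (g ((a + b) / 2)) :=
          Set.mem_uIcc.2 (Or.inr ⟨le_of_lt hneg, le_of_lt h1⟩)
        obtain ⟨z, hz, hz0⟩ := intermediate_value_uIcc hcont h0
        exact hno z (hsub hz) hz0
    · left
      intro y hy
      rcases (hno y hy).lt_or_gt with h1 | h1
      · exfalso
        have hsub : Set.uIcc y ((a + b) / 2) ⊆ Set.Ioo a b :=
          (Set.ordConnected_Ioo).uIcc_subset hy hm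
        have hcont : ContinuousOn g (Set.uIcc y ((a + b) / 2)) :=
          hg.continuous.continuousOn
        have h0 : (0 : ℝ) ∈ Set.uIcc (g y) (g ((a + b) / 2)) :=
          Set.mem_uIcc.2 (Or.inl ⟨le_of_lt h1, le_of_lt hpos⟩)
        obtain ⟨z, hz, hz0⟩ := intermediate_value_uIcc hcont h0
        exact hno z (hsub hz) hz0
      · exact h1
  rcases hsign with hpos | hneg
  · have h1 : 0 ≤ deriv g a := deriv_nonneg_right' hg hab ha fun y hy => le_of_lt (hpos y hy)
    have h2 : deriv g b ≤ 0 := deriv_nonpos_left' hg hab hb fun y hy => le_of_lt (hpos y hy)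
    exact iff_of_true (lt_of_le_of_ne h1 (Ne.symm ha')) (lt_of_le_of_ne h2 hb')
  · have h1 : 0 ≤ deriv (fun y => -g y) a :=
      deriv_nonneg_right' hg.neg hab (by simp [ha])
        (fun y hy => by simpa using le_of_lt (hneg y hy))
    have h2 : deriv (fun y => -g y) b ≤ 0 :=
      deriv_nonpos_left' hg.neg hab (by simp [hb])
        (fun y hy => by simpa using le_of_lt (hneg y hy))
    rw [deriv.fun_neg] at h1 h2
    exact iff_of_false (by intro h; linarith) (by intro h; linarith)

lemma flipped {da db : ℝ} (h : 0 < da ↔ db < 0) (hda : da ≠ 0) (hdb : db ≠ 0) :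
    (0 < db ↔ ¬ 0 < da) := by
  constructor
  · intro h1 h2
    have := h.mp h2
    linarith
  · intro h1
    by_contra h2
    have h3 : db < 0 := lt_of_le_of_ne (not_lt.mp h2) hdb
    exact h1 (h.mpr h3)

lemma cyclic_count {m : ℕ} [NeZero m] (P : Fin m → Prop) [DecidablePred P]
    (h : ∀ i, P (i + 1) ↔ ¬ P i) :
    (Finset.univ.filter P).card = (Finset.univ.filter fun i => ¬ P i).card := by
  refine Finset.card_bij' (fun i _ => i + 1) (fun j _ => j - 1) ?_ ?_ ?_ ?_
  · intro i hi
    simp only [Finset.mem_filter, Finset.mem_univ, true_and] at hi ⊢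
    rw [h]; exact not_not_intro hi
  · intro j hj
    simp only [Finset.mem_filter, Finset.mem_univ, true_and] at hj ⊢
    have h2 := h (j - 1)
    rw [sub_add_cancel] at h2
    by_contra hn
    exact hj (h2.mpr hn)
  · intro i _; exact add_sub_cancel_right i 1
  · intro j _; exact sub_add_cancel j 1

lemma fin_val_add_one_of_lt {m : ℕ} [NeZero m] (i : Fin m) (h : (i : ℕ) + 1 < m) :
    ((i + 1 : Fin m) : ℕ) = (i : ℕ) + 1 := by
  obtain ⟨n, rfl⟩ : ∃ n, m = n + 1 := ⟨m - 1, by omega⟩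
  rw [Fin.val_add_one_of_lt (by rw [Fin.lt_iff_val_lt_val, Fin.val_last]; omega)]

lemma fin_add_one_eq_zero' {m : ℕ} [NeZero m] (i : Fin m) (h : (i : ℕ) + 1 = m) :
    i + 1 = 0 := by
  obtain ⟨n, rfl⟩ : ∃ n, m = n + 1 := ⟨m - 1, by omega⟩
  have h2 : i = Fin.last n := by rw [Fin.ext_iff, Fin.val_last]; omega
  rw [h2, Fin.last_add_one]

/-- Assume `k > 0` and `p` lies neither on `α` nor on the evolute `β`. Then the set
`S_p` of parameters of normals to `α` through `p` (within one period) is finite and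
nonempty; writing `ρ_s = (p − α(s))·n(s)` one has `ρ_s·k(s) ≠ 1` on `S_p`; the number
of `s ∈ S_p` with `ρ_s·k(s) > 1` equals the number with `ρ_s·k(s) < 1`; and both
counts are at least 1. -/
theorem normals_through_point_count
    (l : ℝ) (hl : 0 < l) (α : ℝ → ℂ)
    (hα : ContDiff ℝ (⊤ : ℕ∞) α)
    (hper : Function.Periodic α l)
    (hunit : ∀ s, ‖deriv α s‖ = 1)
    (k : ℝ → ℝ)
    (hk : ∀ s, deriv (deriv α) s = (k s : ℂ) * (Complex.I * deriv α s))
    (hkpos : ∀ s, 0 < k s)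
    (p : ℂ)
    (hpα : p ∉ Set.range α)
    (hpβ : p ∉ Set.range (fun s => α s + ((1 / k s : ℝ) : ℂ) * (Complex.I * deriv α s)))
    (ρ : ℝ → ℝ) (hρ : ∀ s, ρ s = dotR (p - α s) (Complex.I * deriv α s))
    (S : Set ℝ) (hS : S = {s ∈ Set.Ico 0 l | dotR (α s - p) (deriv α s) = 0}) :
    S.Finite ∧ S.Nonempty ∧
    (∀ s ∈ S, ρ s * k s ≠ 1) ∧
    {s ∈ S | 1 < ρ s * k s}.ncard = {s ∈ S | ρ s * k s < 1}.ncard ∧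
    {s ∈ S | 1 < ρ s * k s}.Nonempty ∧
    {s ∈ S | ρ s * k s < 1}.Nonempty := by
  classical
  have hα1 : Differentiable ℝ α := hα.differentiable (by simp)
  have hainf : ContDiff ℝ ((⊤ : ℕ∞) : WithTop ℕ∞) α := hα.of_le (by simp)
  have hα1' : Differentiable ℝ (deriv α) :=
    (contDiff_infty_iff_deriv.mp hainf).2.differentiable (by simp)
  set g : ℝ → ℝ := fun s => dotR (α s - p) (deriv α s) with hg_def
  have hsq : ∀ t, (deriv α t).re * (deriv α t).re + (deriv α t).im * (deriv α t).im = 1 := by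
    intro t
    have h2 := Complex.sq_norm (deriv α t)
    rw [hunit t, Complex.normSq_apply] at h2
    nlinarith [h2]
  -- derivative of g
  have hgd : ∀ s, HasDerivAt g (1 - ρ s * k s) s := by
    intro s
    have h1 := hasDerivAt_dotR (((hα1 s).hasDerivAt).sub_const p) ((hα1' s).hasDerivAt)
    convert h1 using 1
    rw [hk s, hρ s]
    simp only [dotR, Complex.mul_re, Complex.mul_im, Complex.I_re, Complex.I_im,
      Complex.ofReal_re, Complex.ofReal_im, Complex.sub_re, Complex.sub_im]
    linear_combination - hsq s
  have hgdiff : Differentiable ℝ g := fun s => (hgd s).differentiableAt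
  have hgderiv : ∀ s, deriv g s = 1 - ρ s * k s := fun s => (hgd s).deriv
  have hdper : Function.Periodic (deriv α) l := periodic_deriv'' hper
  have hgper : Function.Periodic g l := by
    intro x
    simp only [hg_def, hper x, hdper x]
  have hdgper : Function.Periodic (deriv g) l := periodic_deriv'' hgper
  -- nondegeneracy
  have hkey : ∀ s, g s = 0 → ρ s * k s ≠ 1 := by
    intro s hs heq
    have h0 : dotR (p - α s) (deriv α s) = 0 := by
      have hflip : dotR (p - α s) (deriv α s) = - g s := by
        simp [hg_def, dotR]; ring
      rw [hflip, hs, neg_zero]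
    have hd := decompR (hunit s) h0
    rw [← hρ s] at hd
    have hρval : ρ s = 1 / k s := by
      rw [eq_div_iff (hkpos s).ne']; linarith
    apply hpβ
    refine ⟨s, ?_⟩
    show α s + ((1 / k s : ℝ) : ℂ) * (Complex.I * deriv α s) = p
    rw [hρval] at hd
    rw [← hd]; ring
  have hdg_ne : ∀ s, g s = 0 → deriv g s ≠ 0 := by
    intro s hs h
    rw [hgderiv s] at h
    exact hkey s hs (by linarith)
  -- S as zeros of g
  have hS' : S = {s ∈ Set.Ico 0 l | g s = 0} := hS
  -- Finiteness
  have hZeq : {s ∈ Set.Icc 0 l | g s = 0} = Set.Icc 0 l ∩ g ⁻¹' {0} := by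
    ext x; simp [Set.mem_sep_iff, Set.mem_inter_iff]
  have hZc : IsCompact {s ∈ Set.Icc 0 l | g s = 0} := by
    rw [hZeq]
    exact isCompact_Icc.inter_right (isClosed_singleton.preimage hgdiff.continuous)
  have hdisc : DiscreteTopology ({s ∈ Set.Icc 0 l | g s = 0} : Set ℝ) := by
    rw [discreteTopology_subtype_iff]
    intro x hx
    rw [inf_principal_eq_bot]
    have hslope : Filter.Tendsto (slope g x) (𝓝[≠] x) (𝓝 (deriv g x)) :=
      hasDerivAt_iff_tendsto_slope.mp (hgdiff x).hasDerivAt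
    have hne : ∀ᶠ y in 𝓝[≠] x, slope g x y ≠ 0 := hslope.eventually_ne (hdg_ne x hx.2)
    filter_upwards [hne, self_mem_nhdsWithin] with y hy hyx
    intro hyZ
    apply hy
    have : g y = 0 := hyZ.2
    simp [slope, this, hx.2]
  have hSsub : S ⊆ {s ∈ Set.Icc 0 l | g s = 0} := by
    rw [hS']
    intro s hs
    exact ⟨Set.Ico_subset_Icc_self hs.1, hs.2⟩
  have hSfin : S.Finite := (hZc.finite (isDiscrete_iff_discreteTopology.mpr hdisc)).subset hSsub
  -- Nonemptiness
  set f : ℝ → ℝ := fun s => dotR (α s - p) (α s - p) with hf_def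
  have hfd : ∀ s, HasDerivAt f (2 * g s) s := by
    intro s
    have h1 := hasDerivAt_dotR (((hα1 s).hasDerivAt).sub_const p) (((hα1 s).hasDerivAt).sub_const p)
    convert h1 using 1
    simp [dotR, hg_def]; ring
  have hfper : Function.Periodic f l := by
    intro x
    simp only [hf_def, hper x]
  have hfdiff : Differentiable ℝ f := fun s => (hfd s).differentiableAt
  have hfc : Continuous f := hfdiff.continuous
  obtain ⟨c, hcmem, hcmin⟩ :=
    isCompact_Icc.exists_isMinOn (Set.nonempty_Icc.mpr (le_of_lt hl)) hfc.continuousOn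
  have hglobal : ∀ x, f c ≤ f x := by
    intro x
    have h1 : toIcoMod hl 0 x ∈ Set.Ico 0 l := by simpa using toIcoMod_mem_Ico' hl x
    have h2 : f x = f (toIcoMod hl 0 x) := by
      conv_lhs => rw [← toIcoMod_add_toIcoDiv_zsmul hl 0 x]
      exact (hfper.zsmul (toIcoDiv hl 0 x)) (toIcoMod hl 0 x)
    rw [h2]
    exact hcmin (Set.mem_Icc_of_Ico h1)
  have hlm : IsLocalMin f c := Filter.Eventually.of_forall hglobal
  have hgc : g c = 0 := by
    have h3 := (hfd c).deriv
    rw [hlm.deriv_eq_zero] at h3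
    linarith
  have hSne : S.Nonempty := by
    refine ⟨toIcoMod hl 0 c, ?_⟩
    rw [hS']
    refine ⟨by simpa using toIcoMod_mem_Ico' hl c, ?_⟩
    have h2 : g c = g (toIcoMod hl 0 c) := by
      conv_lhs => rw [← toIcoMod_add_toIcoDiv_zsmul hl 0 c]
      exact (hgper.zsmul (toIcoDiv hl 0 c)) (toIcoMod hl 0 c)
    rw [← h2, hgc]
  -- membership facts
  have hmemS : ∀ s ∈ S, s ∈ Set.Ico 0 l ∧ g s = 0 := by
    intro s hs; rw [hS'] at hs; exact hs
  -- counting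
  set F : Finset ℝ := hSfin.toFinset with hF_def
  set m : ℕ := F.card with hm_def
  have hmpos : 0 < m := Finset.card_pos.mpr (hSfin.toFinset_nonempty.mpr hSne)
  haveI : NeZero m := ⟨hmpos.ne'⟩
  set e : Fin m ≃o {x // x ∈ F} := F.orderIsoOfFin rfl with he_def
  have heS : ∀ i : Fin m, ((e i : ℝ)) ∈ S := fun i => hSfin.mem_toFinset.mp (e i).2
  set P : Fin m → Prop := fun i => 0 < deriv g ((e i : ℝ)) with hP_def
  have hdgne : ∀ i : Fin m, deriv g ((e i : ℝ)) ≠ 0 :=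
    fun i => hdg_ne _ (hmemS _ (heS i)).2
  -- alternation
  have halt : ∀ i : Fin m, P (i + 1) ↔ ¬ P i := by
    intro i
    by_cases hcase : (i : ℕ) + 1 < m
    · have hlt : i < i + 1 := by
        rw [Fin.lt_def, fin_val_add_one_of_lt i hcase]
        omega
      have hab : (e i : ℝ) < (e (i + 1) : ℝ) := Subtype.coe_lt_coe.mpr (e.strictMono hlt)
      have hno : ∀ y ∈ Set.Ioo (e i : ℝ) (e (i + 1) : ℝ), g y ≠ 0 := by
        intro y hy hgy
        have hyS : y ∈ S := by
          rw [hS']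
          refine ⟨⟨?_, ?_⟩, hgy⟩
          · exact le_trans (hmemS _ (heS i)).1.1 (le_of_lt hy.1)
          · exact lt_trans hy.2 (hmemS _ (heS (i + 1))).1.2
        have hyF : y ∈ F := hSfin.mem_toFinset.mpr hyS
        set j := e.symm ⟨y, hyF⟩ with hj_def
        have hej : (e j : ℝ) = y := by rw [hj_def]; simp
        have h1 : i < j := by
          rw [← e.lt_iff_lt, ← Subtype.coe_lt_coe, hej]
          exact hy.1
        have h2 : j < i + 1 := by
          rw [← e.lt_iff_lt, ← Subtype.coe_lt_coe, hej]
          exact hy.2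
        rw [Fin.lt_def] at h1 h2
        rw [fin_val_add_one_of_lt i hcase] at h2
        omega
      have halts := alt_signs hgdiff hab (hmemS _ (heS i)).2 (hmemS _ (heS (i + 1))).2 hno
        (hdgne i) (hdgne (i + 1))
      exact flipped halts (hdgne i) (hdgne (i + 1))
    · have hival : (i : ℕ) + 1 = m := by have := i.isLt; omega
      have hi1 : i + 1 = 0 := fin_add_one_eq_zero' i hival
      set a : ℝ := (e i : ℝ) with ha_def
      set b0 : ℝ := (e (i + 1) : ℝ) with hb0_def
      have hab : a < b0 + l := by
        have h1 : a < l := (hmemS _ (heS i)).1.2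
        have h2 : 0 ≤ b0 := (hmemS _ (heS (i + 1))).1.1
        linarith
      have hgb : g (b0 + l) = 0 := by
        rw [hgper b0]
        exact (hmemS _ (heS (i + 1))).2
      have hdb : deriv g (b0 + l) = deriv g b0 := hdgper b0
      have hno : ∀ y ∈ Set.Ioo a (b0 + l), g y ≠ 0 := by
        intro y hy hgy
        by_cases hyl : y < l
        · have hyS : y ∈ S := by
            rw [hS']
            exact ⟨⟨le_trans (hmemS _ (heS i)).1.1 (le_of_lt hy.1), hyl⟩, hgy⟩
          have hyF : y ∈ F := hSfin.mem_toFinset.mpr hyS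
          set j := e.symm ⟨y, hyF⟩ with hj_def
          have hej : (e j : ℝ) = y := by rw [hj_def]; simp
          have h1 : i < j := by
            rw [← e.lt_iff_lt, ← Subtype.coe_lt_coe, hej]
            exact hy.1
          rw [Fin.lt_def] at h1
          have hjlt := j.isLt
          omega
        · have hy0 : y - l ∈ Set.Ico (0 : ℝ) l := by
            constructor
            · linarith [not_lt.mp hyl]
            · have h2 : b0 < l := (hmemS _ (heS (i + 1))).1.2
              have := hy.2
              linarith
          have hgy' : g (y - l) = 0 := by
            have := hgper (y - l)
            rw [sub_add_cancel] at this
            rw [← this]; exact hgy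
          have hyS : y - l ∈ S := by rw [hS']; exact ⟨hy0, hgy'⟩
          have hyF : y - l ∈ F := hSfin.mem_toFinset.mpr hyS
          set j := e.symm ⟨y - l, hyF⟩ with hj_def
          have hej : (e j : ℝ) = y - l := by rw [hj_def]; simp
          have h1 : j < i + 1 := by
            rw [← e.lt_iff_lt, ← Subtype.coe_lt_coe, hej, ← hb0_def]
            linarith [hy.2]
          rw [hi1] at h1
          simp [Fin.lt_def] at h1
      have halts := alt_signs hgdiff hab (hmemS _ (heS i)).2 hgb hno
        (hdgne i) (by rw [hdb]; exact hdgne (i + 1))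
      rw [hdb] at halts
      exact flipped halts (hdgne i) (hdgne (i + 1))
  have hcount := cyclic_count P halt
  -- transfer to ℝ finsets
  set A : Finset ℝ := F.filter (fun s => 0 < deriv g s) with hA_def
  set B : Finset ℝ := F.filter (fun s => deriv g s < 0) with hB_def
  have hAcard : (Finset.univ.filter P).card = A.card := by
    refine Finset.card_bij (fun i _ => (e i : ℝ)) ?_ ?_ ?_
    · intro i hi
      rw [Finset.mem_filter] at hi ⊢
      exact ⟨(e i).2, hi.2⟩
    · intro i _ j _ hij
      exact e.injective (Subtype.coe_injective hij)
    · intro b hb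
      rw [Finset.mem_filter] at hb
      refine ⟨e.symm ⟨b, hb.1⟩, ?_, by simp⟩
      rw [Finset.mem_filter]
      refine ⟨Finset.mem_univ _, ?_⟩
      show 0 < deriv g ((e (e.symm ⟨b, hb.1⟩) : ℝ))
      simpa using hb.2
  have hBcard : (Finset.univ.filter fun i => ¬ P i).card = B.card := by
    refine Finset.card_bij (fun i _ => (e i : ℝ)) ?_ ?_ ?_
    · intro i hi
      rw [Finset.mem_filter] at hi ⊢
      refine ⟨(e i).2, ?_⟩
      exact lt_of_le_of_ne (not_lt.mp hi.2) (hdgne i)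
    · intro i _ j _ hij
      exact e.injective (Subtype.coe_injective hij)
    · intro b hb
      rw [Finset.mem_filter] at hb
      refine ⟨e.symm ⟨b, hb.1⟩, ?_, by simp⟩
      rw [Finset.mem_filter]
      refine ⟨Finset.mem_univ _, ?_⟩
      show ¬ 0 < deriv g ((e (e.symm ⟨b, hb.1⟩) : ℝ))
      simp only [OrderIso.apply_symm_apply]
      exact not_lt.mpr (le_of_lt hb.2)
  -- set identifications
  have hset1 : {s ∈ S | 1 < ρ s * k s} = (B : Set ℝ) := by
    ext x
    simp only [Set.mem_setOf_eq, hB_def, Finset.coe_filter, hSfin.mem_toFinset]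
    constructor
    · intro ⟨h1, h2⟩
      exact ⟨hSfin.mem_toFinset.mpr h1, by rw [hgderiv x]; linarith⟩
    · intro ⟨h1, h2⟩
      rw [hgderiv x] at h2
      exact ⟨hSfin.mem_toFinset.mp h1, by linarith⟩
  have hset2 : {s ∈ S | ρ s * k s < 1} = (A : Set ℝ) := by
    ext x
    simp only [Set.mem_setOf_eq, hA_def, Finset.coe_filter, hSfin.mem_toFinset]
    constructor
    · intro ⟨h1, h2⟩
      exact ⟨hSfin.mem_toFinset.mpr h1, by rw [hgderiv x]; linarith⟩
    · intro ⟨h1, h2⟩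
      rw [hgderiv x] at h2
      exact ⟨hSfin.mem_toFinset.mp h1, by linarith⟩
  have hcards : B.card = A.card := by rw [← hAcard, ← hBcard, hcount]
  -- nonemptiness of both
  have hAne : A.Nonempty := by
    by_contra hA
    rw [Finset.not_nonempty_iff_eq_empty] at hA
    have hB0 : B.card = 0 := by rw [hcards, hA]; simp
    obtain ⟨s, hsS⟩ := hSne
    have hsF : s ∈ F := hSfin.mem_toFinset.mpr hsS
    have hne := hdg_ne s (hmemS s hsS).2
    rcases hne.lt_or_gt with h1 | h1
    · have : s ∈ B := Finset.mem_filter.mpr ⟨hsF, h1⟩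
      rw [Finset.card_eq_zero] at hB0
      simp [hB0] at this
    · have : s ∈ A := Finset.mem_filter.mpr ⟨hsF, h1⟩
      simp [hA] at this
  have hBne : B.Nonempty := by
    obtain ⟨s, hs⟩ := hAne
    have h1 : 0 < B.card := by rw [hcards]; exact Finset.card_pos.mpr ⟨s, hs⟩
    exact Finset.card_pos.mp h1
  refine ⟨hSfin, hSne, ?_, ?_, ?_, ?_⟩
  · intro s hs
    exact hkey s (hmemS s hs).2
  · rw [hset1, hset2, Set.ncard_coe_finset, Set.ncard_coe_finset, hcards]
  · rw [hset1]
    exact_mod_cast hBne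
  · rw [hset2]
    exact_mod_cast hAne
end

section
/- Assume k(s) > 0 for all s and let p ∈ ℝ² lie neither on the image of α nor on the image of the evolute β. Let S_p = { s ∈ [0,l) : (α(s) − p)·α'(s) = 0 } (the parameters of normals to α through p), and write ρ_s = (p − α(s))·n(s), so p = α(s) + ρ_s n(s). Then the cardinality N_p of S_p is even, and for exactly N_p/2 of the elements s ∈ S_p the focal point β(s) lies strictly between α(s) and p on the normal line (equivalently ρ_s > 1/k(s)), while for the other N_p/2 elements the segment from p to α(s) does not contain β(s) (equivalently ρ_s < 1/k(s)). -/
section Aux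
open Complex Filter Set

lemma dotR_eq_re_mul_conj (z w : ℂ) : dotR z w = (z * (starRingEnd ℂ) w).re := by
  simp [dotR, Complex.mul_re]

lemma decomp (v z : ℂ) (hv : ‖v‖ = 1) :
    z = (dotR z v : ℂ) * v + (dotR z (Complex.I * v) : ℂ) * (Complex.I * v) := by
  have h2 : Complex.normSq v = 1 := by
    rw [← Complex.sq_norm, hv]; norm_num
  have h : v.re * v.re + v.im * v.im = 1 := by
    simpa [Complex.normSq_apply] using h2
  apply Complex.ext
  · simp only [dotR, Complex.add_re, Complex.mul_re, Complex.mul_im,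
      Complex.ofReal_re, Complex.ofReal_im, Complex.I_re, Complex.I_im]
    ring_nf
    linear_combination (-z.re) * h
  · simp only [dotR, Complex.add_im, Complex.mul_re, Complex.mul_im,
      Complex.ofReal_re, Complex.ofReal_im, Complex.I_re, Complex.I_im]
    ring_nf
    linear_combination (-z.im) * h

lemma dotR_neg_left (z w : ℂ) : dotR (-z) w = - dotR z w := by simp [dotR]; ring

lemma ev_pos_right {g : ℝ → ℝ} {a da : ℝ} (hda : HasDerivAt g da a) (ha0 : g a = 0)
    (h : 0 < da) : ∀ᶠ t in nhdsWithin a (Set.Ioi a), 0 < g t := by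
  have hs := hasDerivAt_iff_tendsto_slope.mp hda
  have hs' : Tendsto (slope g a) (nhdsWithin a (Set.Ioi a)) (nhds da) :=
    hs.mono_left (nhdsWithin_mono a (fun x hx => ne_of_gt hx))
  have hev : ∀ᶠ t in nhdsWithin a (Set.Ioi a), 0 < slope g a t :=
    hs'.eventually (eventually_gt_nhds h)
  filter_upwards [hev, self_mem_nhdsWithin] with t ht hta
  have h1 : 0 < (g t - g a) / (t - a) := by rwa [slope_def_field] at ht
  have h2 : (0:ℝ) < t - a := sub_pos.mpr hta
  have h3 : 0 < g t - g a := by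
    rcases div_pos_iff.mp h1 with ⟨h4, _⟩ | ⟨_, h5⟩
    · exact h4
    · linarith
  linarith

lemma ev_neg_left {g : ℝ → ℝ} {b db : ℝ} (hdb : HasDerivAt g db b) (hb0 : g b = 0)
    (h : 0 < db) : ∀ᶠ t in nhdsWithin b (Set.Iio b), g t < 0 := by
  have hs := hasDerivAt_iff_tendsto_slope.mp hdb
  have hs' : Tendsto (slope g b) (nhdsWithin b (Set.Iio b)) (nhds db) :=
    hs.mono_left (nhdsWithin_mono b (fun x hx => ne_of_lt hx))
  have hev : ∀ᶠ t in nhdsWithin b (Set.Iio b), 0 < slope g b t :=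
    hs'.eventually (eventually_gt_nhds h)
  filter_upwards [hev, self_mem_nhdsWithin] with t ht htb
  have h1 : 0 < (g t - g b) / (t - b) := by rwa [slope_def_field] at ht
  have h2 : t - b < 0 := sub_neg.mpr htb
  have h3 : g t - g b < 0 := by
    rcases div_pos_iff.mp h1 with ⟨_, h4⟩ | ⟨h4, _⟩
    · linarith
    · exact h4
  linarith

lemma sign_flip_aux {g : ℝ → ℝ} {a b da db : ℝ} (hab : a < b)
    (hcont : Continuous g) (ha0 : g a = 0) (hb0 : g b = 0)
    (hnz : ∀ t ∈ Set.Ioo a b, g t ≠ 0)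
    (hda : HasDerivAt g da a) (hdb : HasDerivAt g db b)
    (h1 : 0 < da) (h2 : 0 < db) : False := by
  have e1 := ev_pos_right hda ha0 h1
  have e2 : Set.Ioo a b ∈ nhdsWithin a (Set.Ioi a) :=
    Ioo_mem_nhdsGT_of_mem ⟨le_refl a, hab⟩
  obtain ⟨t₁, ht₁pos, ht₁mem⟩ := (e1.and (eventually_of_mem e2 (fun x hx => hx))).exists
  have e3 := ev_neg_left hdb hb0 h2
  have e4 : Set.Ioo t₁ b ∈ nhdsWithin b (Set.Iio b) :=
    Ioo_mem_nhdsLT_of_mem ⟨ht₁mem.2, le_refl b⟩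
  obtain ⟨t₂, ht₂neg, ht₂mem⟩ := (e3.and (eventually_of_mem e4 (fun x hx => hx))).exists
  have hIVT := intermediate_value_Icc' (le_of_lt ht₂mem.1) (hcont.continuousOn (s := Set.Icc t₁ t₂))
  have h0 : (0:ℝ) ∈ Set.Icc (g t₂) (g t₁) := ⟨le_of_lt ht₂neg, le_of_lt ht₁pos⟩
  obtain ⟨c, hcmem, hc0⟩ := hIVT h0
  exact hnz c ⟨lt_of_lt_of_le ht₁mem.1 hcmem.1, lt_of_le_of_lt hcmem.2 ht₂mem.2⟩ hc0

lemma sign_flip {g : ℝ → ℝ} {a b da db : ℝ} (hab : a < b)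
    (hcont : Continuous g) (ha0 : g a = 0) (hb0 : g b = 0)
    (hnz : ∀ t ∈ Set.Ioo a b, g t ≠ 0)
    (hda : HasDerivAt g da a) (hdb : HasDerivAt g db b)
    (hda0 : da ≠ 0) (hdb0 : db ≠ 0) : (0 < da ↔ db < 0) := by
  constructor
  · intro h
    rcases hdb0.lt_or_gt with h' | h'
    · exact h'
    · exact absurd (sign_flip_aux hab hcont ha0 hb0 hnz hda hdb h h') not_false
  · intro h
    rcases hda0.lt_or_gt with h' | h'
    · exfalso
      have hnz' : ∀ t ∈ Set.Ioo a b, (fun t => -g t) t ≠ 0 := by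
        intro t ht; simpa using hnz t ht
      exact sign_flip_aux hab hcont.neg (by simp [ha0]) (by simp [hb0]) hnz'
        hda.neg hdb.neg (by linarith) (by linarith)
    · exact h'

lemma card_evens (n : ℕ) : ((Finset.range n).filter (fun i => Even i)).card = (n+1)/2 := by
  induction n with
  | zero => simp
  | succ n ih =>
    rw [Finset.range_add_one, Finset.filter_insert]
    by_cases h : Even n
    · rw [if_pos h, Finset.card_insert_of_notMem (by simp), ih]
      obtain ⟨m, rfl⟩ := h; omega
    · rw [if_neg h, ih]
      obtain ⟨m, rfl⟩ := Nat.not_even_iff_odd.mp h; omega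

lemma card_fin_even (n : ℕ) :
    (Finset.univ.filter (fun i : Fin n => Even i.val)).card = (n+1)/2 := by
  rw [← card_evens]
  apply Finset.card_bij (fun i _ => i.val)
  · intro i hi
    simp only [Finset.mem_filter, Finset.mem_range]
    exact ⟨i.isLt, (Finset.mem_filter.mp hi).2⟩
  · intro i _ j _ h; exact Fin.val_injective h
  · intro j hj
    simp only [Finset.mem_filter, Finset.mem_range] at hj
    exact ⟨⟨j, hj.1⟩, by simp [hj.2], rfl⟩

lemma alt_signs_s5 {n : ℕ} (hn : 0 < n) (P : Fin n → Prop) [DecidablePred P]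
    (hstep : ∀ i : Fin n, (h : i.val + 1 < n) → (P i ↔ ¬ P ⟨i.val+1, h⟩))
    (hwrap : P ⟨n-1, by omega⟩ ↔ ¬ P ⟨0, hn⟩) :
    Even n ∧ (Finset.univ.filter P).card = n / 2 ∧
      (Finset.univ.filter (fun i => ¬ P i)).card = n / 2 := by
  have key : ∀ (i : ℕ) (hi : i < n), (P ⟨i, hi⟩ ↔ (Even i ↔ P ⟨0, hn⟩)) := by
    intro i
    induction i with
    | zero => intro hi; simp only [Even.zero]; tauto
    | succ j ihj =>
      intro hi
      have hj : j < n := by omega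
      have h1 : P ⟨j, hj⟩ ↔ ¬ P ⟨j+1, hi⟩ := hstep ⟨j, hj⟩ hi
      have h2 := ihj hj
      have h3 := Nat.even_add_one (n := j)
      tauto
  have hev : Even n := by
    have h1 := key (n-1) (by omega)
    have h4 : ¬ Even (n-1) := by tauto
    obtain ⟨m, hm⟩ := Nat.not_even_iff_odd.mp h4
    exact ⟨m+1, by omega⟩
  have hcardP : (Finset.univ.filter P).card = n / 2 := by
    by_cases hP0 : P ⟨0, hn⟩
    · have : Finset.univ.filter P = Finset.univ.filter (fun i : Fin n => Even i.val) := by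
        apply Finset.filter_congr; intro i _
        have := key i.val i.isLt; simp only [Fin.eta] at this
        simp only [this, hP0, iff_true]
      rw [this, card_fin_even]
      obtain ⟨m, rfl⟩ := hev; omega
    · have : Finset.univ.filter P = Finset.univ.filter (fun i : Fin n => ¬ Even i.val) := by
        apply Finset.filter_congr; intro i _
        have := key i.val i.isLt; simp only [Fin.eta] at this
        simp only [this, hP0, eq_iff_iff]
        tauto
      rw [this]
      have htot := Finset.card_filter_add_card_filter_not
        (s := (Finset.univ : Finset (Fin n))) (p := fun i : Fin n => Even i.val)
      have hc := card_fin_even n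
      simp only [Finset.card_univ, Fintype.card_fin] at htot
      obtain ⟨m, rfl⟩ := hev; omega
  refine ⟨hev, hcardP, ?_⟩
  have htot := Finset.card_filter_add_card_filter_not
    (s := (Finset.univ : Finset (Fin n))) (p := P)
  simp only [Finset.card_univ, Fintype.card_fin] at htot
  obtain ⟨m, rfl⟩ := hev; omega

end Aux

open Complex Filter Set in
/-- Assume `k > 0` and `p` lies neither on `α` nor on the evolute `β`. The number
`N_p` of normals to `α` through `p` (per period) is even; for exactly `N_p/2` of
them the focal point lies strictly between `α(s)` and `p` (equivalently
`ρ_s > 1/k(s)`), and for the other `N_p/2` it does not (equivalently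
`ρ_s < 1/k(s)`). -/
theorem half_of_normals_pass_focal_point
    (l : ℝ) (hl : 0 < l) (α : ℝ → ℂ)
    (hα : ContDiff ℝ (⊤ : ℕ∞) α)
    (hper : Function.Periodic α l)
    (hunit : ∀ s, ‖deriv α s‖ = 1)
    (k : ℝ → ℝ)
    (hk : ∀ s, deriv (deriv α) s = (k s : ℂ) * (Complex.I * deriv α s))
    (hkpos : ∀ s, 0 < k s)
    (p : ℂ)
    (hpα : p ∉ Set.range α)
    (hpβ : p ∉ Set.range (fun s => α s + ((1 / k s : ℝ) : ℂ) * (Complex.I * deriv α s)))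
    (ρ : ℝ → ℝ) (hρ : ∀ s, ρ s = dotR (p - α s) (Complex.I * deriv α s))
    (S : Set ℝ) (hS : S = {s ∈ Set.Ico 0 l | dotR (α s - p) (deriv α s) = 0})
    (N : ℕ) (hN : N = S.ncard) :
    2 ∣ N ∧
    {s ∈ S | 1 / k s < ρ s}.ncard = N / 2 ∧
    {s ∈ S | ρ s < 1 / k s}.ncard = N / 2 := by
  classical
  set g : ℝ → ℝ := fun s => dotR (α s - p) (deriv α s) with hgdef
  set D : ℝ → ℝ := fun s => 1 - k s * ρ s with hDdef
  have hdiff : Differentiable ℝ α := hα.differentiable (by simp)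
  have hα' : ContDiff ℝ (⊤:ℕ∞) (deriv α) := (contDiff_infty_iff_deriv.mp (hα.of_le (by simp))).2
  have hdiffv : Differentiable ℝ (deriv α) := hα'.differentiable (by simp)
  -- g has derivative D
  have hgd : ∀ s, HasDerivAt g (D s) s := by
    intro s
    have h1 : HasDerivAt α (deriv α s) s := (hdiff s).hasDerivAt
    have h2 : HasDerivAt (deriv α) ((k s : ℂ) * (Complex.I * deriv α s)) s := by
      have := (hdiffv s).hasDerivAt
      rwa [hk s] at this
    have h3 : HasDerivAt (fun t => α t - p) (deriv α s) s := h1.sub_const p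
    have h4 : HasDerivAt (fun t => (starRingEnd ℂ) (deriv α t))
        ((starRingEnd ℂ) ((k s : ℂ) * (Complex.I * deriv α s))) s := by
      have := (Complex.conjCLE.toContinuousLinearMap.hasFDerivAt
        (x := deriv α s)).comp_hasDerivAt s h2
      simpa [Function.comp_def] using this
    have h5 := h3.mul h4
    have h6 := (Complex.reCLM.hasFDerivAt
        (x := (α s - p) * (starRingEnd ℂ) (deriv α s))).comp_hasDerivAt s h5
    have hv1 : (deriv α s).re ^ 2 + (deriv α s).im ^ 2 = 1 := by
      have h2' : Complex.normSq (deriv α s) = 1 := by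
        rw [← Complex.sq_norm, hunit s]; norm_num
      simpa [Complex.normSq_apply, sq] using h2'
    have heq : g = (Complex.reCLM ∘ fun t => (α t - p) * (starRingEnd ℂ) (deriv α t)) := by
      funext t; simp [hgdef, dotR_eq_re_mul_conj, Function.comp]
    rw [heq]
    refine h6.congr_deriv ?_
    simp only [ContinuousLinearMap.coe_coe, Complex.reCLM_apply, Complex.add_re,
      Complex.mul_re, Complex.conj_re, Complex.conj_im, Complex.mul_im,
      Complex.ofReal_re, Complex.ofReal_im, Complex.I_re, Complex.I_im, hDdef, hρ s,
      dotR, Complex.sub_re, Complex.sub_im]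
    ring_nf
    nlinarith [hv1]
  have hgcont : Continuous g :=
    Differentiable.continuous (fun s => (hgd s).differentiableAt)
  -- orthogonal decomposition at zeros of g
  have hperp : ∀ s, g s = 0 → p - α s = ((ρ s : ℝ) : ℂ) * (Complex.I * deriv α s) := by
    intro s hgs
    have hdec := decomp (deriv α s) (p - α s) (hunit s)
    have h0 : dotR (p - α s) (deriv α s) = 0 := by
      have hps : p - α s = -(α s - p) := by ring
      rw [hps, dotR_neg_left]
      simpa using hgs
    rw [h0, ← hρ s] at hdec
    simpa using hdec
  -- nondegeneracy: at zeros of g the derivative of g is nonzero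
  have hnd : ∀ s, g s = 0 → D s ≠ 0 := by
    intro s hgs hD0
    have hk' : k s ≠ 0 := (hkpos s).ne'
    have h1 : ρ s = 1 / k s := by
      rw [eq_div_iff hk']
      simp only [hDdef] at hD0
      linarith [hD0]
    apply hpβ
    refine ⟨s, ?_⟩
    have h2 := hperp s hgs
    simp only []
    rw [← h1, ← h2]
    ring
  -- periodicity
  have hvper : ∀ s, deriv α (s + l) = deriv α s := by
    intro s
    have h1 := deriv_comp_add_const α l s
    have h2 : (fun t => α (t + l)) = α := funext fun t => hper t
    rw [h2] at h1
    exact h1.symm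
  have hgper : ∀ s, g (s + l) = g s := by
    intro s
    simp only [hgdef, hper s, hvper s]
  have hgsub : ∀ t, g (t - l) = g t := by
    intro t
    exact (hgper (t - l)).symm.trans (congrArg g (sub_add_cancel t l))
  -- finiteness of S
  have hSsub : S ⊆ Set.Icc 0 l := by
    rw [hS]; rintro t ⟨⟨h1, h2⟩, _⟩; exact ⟨h1, le_of_lt h2⟩
  have hSzero : S ⊆ {t : ℝ | g t = 0} := by
    rw [hS]; rintro t ⟨_, h⟩; exact h
  have hSfin : S.Finite := by
    by_contra hinf
    have hSinf : S.Infinite := hinf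
    obtain ⟨x, hxK, hx⟩ := hSinf.exists_accPt_of_subset_isCompact isCompact_Icc hSsub
    have hx2 : AccPt x (Filter.principal {t : ℝ | g t = 0}) :=
      hx.mono (principal_mono.mpr hSzero)
    have hZc : IsClosed {t : ℝ | g t = 0} := isClosed_eq hgcont continuous_const
    have hgx : g x = 0 := by
      have hcl : x ∈ closure {t : ℝ | g t = 0} :=
        mem_closure_iff_clusterPt.mpr hx2.clusterPt
      have := hZc.closure_eq ▸ hcl
      exact this
    have hD0 : D x = 0 := by
      have hslope := hasDerivAt_iff_tendsto_slope.mp (hgd x)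
      have h1 : Tendsto (slope g x)
          ((nhdsWithin x {x}ᶜ) ⊓ Filter.principal {t : ℝ | g t = 0}) (nhds (D x)) :=
        hslope.mono_left inf_le_left
      have h2 : Tendsto (slope g x)
          ((nhdsWithin x {x}ᶜ) ⊓ Filter.principal {t : ℝ | g t = 0}) (nhds 0) := by
        refine Filter.Tendsto.congr' ?_ tendsto_const_nhds
        filter_upwards [Filter.mem_inf_of_right (Filter.mem_principal_self _)] with t ht
        simp [slope_def_field, Set.mem_setOf_eq.mp ht, hgx]
      haveI : ((nhdsWithin x {x}ᶜ) ⊓ Filter.principal {t : ℝ | g t = 0}).NeBot := hx2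
      exact (tendsto_nhds_unique h2 h1).symm
    exact hnd x hgx hD0
  -- pass to the finset of zeros
  set F : Finset ℝ := hSfin.toFinset with hF
  have hFS : ∀ t, t ∈ F ↔ t ∈ S := fun t => hSfin.mem_toFinset
  have hNcard : N = F.card := by
    rw [hN, Set.ncard_eq_toFinset_card S hSfin]
  have hset1 : {s ∈ S | 1 / k s < ρ s} = ↑(F.filter (fun s => D s < 0)) := by
    ext t
    simp only [Set.mem_setOf_eq, Finset.coe_filter, hFS, hDdef]
    constructor
    · rintro ⟨h1, h2⟩
      refine ⟨h1, ?_⟩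
      have := (div_lt_iff₀ (hkpos t)).mp h2
      nlinarith [this]
    · rintro ⟨h1, h2⟩
      refine ⟨h1, ?_⟩
      rw [div_lt_iff₀ (hkpos t)]
      nlinarith [h2]
  have hset2 : {s ∈ S | ρ s < 1 / k s} = ↑(F.filter (fun s => 0 < D s)) := by
    ext t
    simp only [Set.mem_setOf_eq, Finset.coe_filter, hFS, hDdef]
    constructor
    · rintro ⟨h1, h2⟩
      refine ⟨h1, ?_⟩
      have := (lt_div_iff₀ (hkpos t)).mp h2
      nlinarith [this]
    · rintro ⟨h1, h2⟩
      refine ⟨h1, ?_⟩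
      rw [lt_div_iff₀ (hkpos t)]
      nlinarith [h2]
  rcases Nat.eq_zero_or_pos F.card with hn0 | hnpos
  · have hFe : F = ∅ := Finset.card_eq_zero.mp hn0
    have hN0 : N = 0 := by rw [hNcard, hn0]
    refine ⟨by simp [hN0], ?_, ?_⟩
    · rw [hset1, hFe]; simp [hN0]
    · rw [hset2, hFe]; simp [hN0]
  · set n := F.card with hn
    set e := F.orderIsoOfFin rfl with he
    have heS : ∀ i : Fin n, (e i : ℝ) ∈ S := fun i => (hFS _).mp (e i).2
    have hg0 : ∀ i : Fin n, g (e i : ℝ) = 0 := by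
      intro i; have := heS i; rw [hS] at this; exact this.2
    have hrange : ∀ i : Fin n, (0:ℝ) ≤ (e i : ℝ) ∧ (e i : ℝ) < l := by
      intro i; have := heS i; rw [hS] at this; exact ⟨this.1.1, this.1.2⟩
    have hDnz : ∀ i : Fin n, D (e i : ℝ) ≠ 0 := fun i => hnd _ (hg0 i)
    have hmono : ∀ {i j : Fin n}, i < j → (e i : ℝ) < (e j : ℝ) := by
      intro i j hij
      exact_mod_cast e.strictMono hij
    have hememF : ∀ (t : ℝ), t ∈ S → ∃ j : Fin n, (e j : ℝ) = t := by
      intro t ht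
      have htF : t ∈ F := (hFS t).mpr ht
      exact ⟨e.symm ⟨t, htF⟩, by rw [OrderIso.apply_symm_apply]⟩
    have hlt : ∀ {i j : Fin n}, (e i : ℝ) < (e j : ℝ) → i < j := by
      intro i j hij
      by_contra hcon
      push_neg at hcon
      rcases eq_or_lt_of_le hcon with hEq | hlt'
      · rw [hEq] at hij; exact lt_irrefl _ hij
      · exact absurd (hmono hlt') (by linarith)
    -- no zeros strictly between consecutive parameters
    have hbetween : ∀ (i : Fin n) (h : i.val + 1 < n),
        ∀ t ∈ Set.Ioo (e i : ℝ) (e ⟨i.val+1, h⟩ : ℝ), g t ≠ 0 := by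
      intro i h t ht hgt
      have htS : t ∈ S := by
        rw [hS]
        exact ⟨⟨le_trans (hrange i).1 (le_of_lt ht.1),
          lt_trans ht.2 (hrange ⟨i.val+1, h⟩).2⟩, hgt⟩
      obtain ⟨j, hj⟩ := hememF t htS
      have h1 : i < j := hlt (by rw [hj]; exact ht.1)
      have h2 : j < ⟨i.val+1, h⟩ := hlt (by rw [hj]; exact ht.2)
      have h1' : (i : ℕ) < (j : ℕ) := h1
      have h2' : (j : ℕ) < i.val + 1 := h2
      omega
    -- define the sign predicate
    set P : Fin n → Prop := fun i => 0 < D (e i : ℝ) with hP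
    have hstep : ∀ i : Fin n, (h : i.val + 1 < n) → (P i ↔ ¬ P ⟨i.val+1, h⟩) := by
      intro i h
      have hab : (e i : ℝ) < (e ⟨i.val+1, h⟩ : ℝ) := hmono (by rw [Fin.lt_def]; exact Nat.lt_succ_self _)
      have hsf := sign_flip hab hgcont (hg0 i) (hg0 ⟨i.val+1, h⟩) (hbetween i h)
        (hgd _) (hgd _) (hDnz i) (hDnz ⟨i.val+1, h⟩)
      rw [hP]
      simp only []
      rw [hsf]
      constructor
      · intro h1 h2; linarith
      · intro h1
        rcases (hDnz ⟨i.val+1, h⟩).lt_or_gt with h' | h'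
        · exact h'
        · exact absurd h' h1
    have hwrapb : ∀ t ∈ Set.Ioo (e ⟨n-1, by omega⟩ : ℝ) ((e ⟨0, hnpos⟩ : ℝ) + l), g t ≠ 0 := by
      intro t ht hgt
      rcases lt_or_ge t l with hcase | hcase
      · have htS : t ∈ S := by
          rw [hS]
          exact ⟨⟨le_trans (hrange ⟨n-1, by omega⟩).1 (le_of_lt ht.1), hcase⟩, hgt⟩
        obtain ⟨j, hj⟩ := hememF t htS
        have h1 : (⟨n-1, by omega⟩ : Fin n) < j := hlt (by rw [hj]; exact ht.1)
        have h1' : n - 1 < (j : ℕ) := h1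
        have := j.isLt
        omega
      · have htl : g (t - l) = 0 := by
          rw [hgsub]; exact hgt
        have htS : t - l ∈ S := by
          rw [hS]
          refine ⟨⟨by linarith, ?_⟩, htl⟩
          have h2 := ht.2
          have h3 := (hrange ⟨0, hnpos⟩).2
          linarith
        obtain ⟨j, hj⟩ := hememF _ htS
        have h1 : j < ⟨0, hnpos⟩ := hlt (by
          rw [hj]
          have h2 := ht.2
          linarith)
        have h1' : (j : ℕ) < 0 := h1
        omega
    have hwrapD : HasDerivAt g (D (e ⟨0, hnpos⟩ : ℝ)) ((e ⟨0, hnpos⟩ : ℝ) + l) := by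
      set b := (e ⟨0, hnpos⟩ : ℝ) + l with hb
      have hgeq : g = fun t => g (t - l) := funext fun t => (hgsub t).symm
      have h5 : deriv g b = deriv g (b - l) := by
        conv_lhs => rw [hgeq]
        exact deriv_comp_sub_const g l b
      have h6 : deriv g b = D b := (hgd b).deriv
      have h7 : deriv g (b - l) = D (b - l) := (hgd (b - l)).deriv
      have h8 : D b = D (b - l) := by rw [← h6, ← h7, h5]
      have h9 : b - l = (e ⟨0, hnpos⟩ : ℝ) := by rw [hb]; ring
      have := hgd b
      rw [h8, h9] at this
      exact this
    have hwrap : P ⟨n-1, by omega⟩ ↔ ¬ P ⟨0, hnpos⟩ := by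
      have hab : (e ⟨n-1, by omega⟩ : ℝ) < (e ⟨0, hnpos⟩ : ℝ) + l := by
        have h1 := (hrange ⟨n-1, by omega⟩).2
        have h2 := (hrange ⟨0, hnpos⟩).1
        linarith
      have hb0 : g ((e ⟨0, hnpos⟩ : ℝ) + l) = 0 := by
        rw [hgper]; exact hg0 _
      have hsf := sign_flip hab hgcont (hg0 _) hb0 hwrapb
        (hgd _) hwrapD (hDnz _) (hDnz ⟨0, hnpos⟩)
      rw [hP]
      simp only []
      rw [hsf]
      constructor
      · intro h1 h2; linarith
      · intro h1
        rcases (hDnz ⟨0, hnpos⟩).lt_or_gt with h' | h'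
        · exact h'
        · exact absurd h' h1
    obtain ⟨hev, hc1, hc2⟩ := alt_signs_s5 hnpos P hstep hwrap
    -- transfer the counts
    have hbij : ∀ (Q : ℝ → Prop) [DecidablePred Q],
        (F.filter Q).card = (Finset.univ.filter (fun i : Fin n => Q (e i : ℝ))).card := by
      intro Q _
      apply Finset.card_bij'
        (i := fun s (hs : s ∈ F.filter Q) => (e.symm ⟨s, (Finset.mem_filter.mp hs).1⟩ : Fin n))
        (j := fun (i : Fin n) _ => (e i : ℝ))
      case hi =>
        intro a ha
        simp only [Finset.mem_filter, Finset.mem_univ, true_and]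
        rw [OrderIso.apply_symm_apply]
        exact (Finset.mem_filter.mp ha).2
      case hj =>
        intro i hi
        simp only [Finset.mem_filter, Finset.mem_univ, true_and] at hi
        exact Finset.mem_filter.mpr ⟨(e i).2, hi⟩
      case left_inv =>
        intro a ha
        rw [OrderIso.apply_symm_apply]
      case right_inv =>
        intro i hi
        exact (congrArg e.symm (Subtype.ext rfl)).trans (e.symm_apply_apply i)
    refine ⟨?_, ?_, ?_⟩
    · rw [hNcard]
      exact hev.two_dvd
    · rw [hset1, Set.ncard_coe_finset, hbij (fun s => D s < 0)]
      have heqf : Finset.univ.filter (fun i : Fin n => D (e i : ℝ) < 0) =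
          Finset.univ.filter (fun i : Fin n => ¬ P i) := by
        apply Finset.filter_congr
        intro i _
        simp only [hP, eq_iff_iff]
        constructor
        · intro h1 h2; linarith
        · intro h1
          rcases (hDnz i).lt_or_gt with h' | h'
          · exact h'
          · exact absurd h' h1
      rw [heqf, hc2, hNcard]
    · rw [hset2, Set.ncard_coe_finset, hbij (fun s => 0 < D s)]
      rw [show Finset.univ.filter (fun i : Fin n => 0 < D (e i : ℝ)) = Finset.univ.filter P from rfl]
      rw [hc1, hNcard]
end

section
/- Assume k(s) > 0 for all s. The function which assigns to each point p the number N_p of elements of { s ∈ [0,l) : (α(s) − p)·α'(s) = 0 } is locally constant on the open set ℝ² ∖ β(ℝ), the complement of the image of the evolute. -/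
open Set Filter Topology

private lemma normsq_one {T : ℂ} (hT : ‖T‖ = 1) : T.re * T.re + T.im * T.im = 1 := by
  have h := Complex.sq_norm T
  rw [hT] at h
  simpa [Complex.normSq_apply] using h.symm

private lemma dotR_basis {T : ℂ} (hT : ‖T‖ = 1) (z : ℂ) :
    z = ((dotR z T : ℝ) : ℂ) * T + ((dotR z (Complex.I * T) : ℝ) : ℂ) * (Complex.I * T) := by
  have h1 := normsq_one hT
  apply Complex.ext
  · simp [dotR, Complex.mul_re, Complex.mul_im, Complex.I_re, Complex.I_im]
    linear_combination -z.re * h1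
  · simp [dotR, Complex.mul_re, Complex.mul_im, Complex.I_re, Complex.I_im]
    linear_combination -z.im * h1

private lemma hasDerivAt_dotR_s6 {α : ℝ → ℂ} (hd1 : Differentiable ℝ α)
    (hd2 : Differentiable ℝ (deriv α)) (p : ℂ) (s : ℝ) :
    HasDerivAt (fun t => dotR (α t - p) (deriv α t))
      (dotR (deriv α s) (deriv α s) + dotR (α s - p) (deriv (deriv α) s)) s := by
  have h1 : HasDerivAt (fun t => α t - p) (deriv α s) s := (hd1 s).hasDerivAt.sub_const p
  have h2 : HasDerivAt (deriv α) (deriv (deriv α) s) s := (hd2 s).hasDerivAt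
  have h1re := (Complex.reCLM.hasFDerivAt.comp_hasDerivAt s h1)
  have h1im := (Complex.imCLM.hasFDerivAt.comp_hasDerivAt s h1)
  have h2re := (Complex.reCLM.hasFDerivAt.comp_hasDerivAt s h2)
  have h2im := (Complex.imCLM.hasFDerivAt.comp_hasDerivAt s h2)
  have := (h1re.mul h2re).add (h1im.mul h2im)
  convert this using 1
  · rfl
  · rfl
  · ext t; simp [dotR]
  simp [dotR]
  ring

private lemma cont_dotR {α : ℝ → ℂ} (hd1 : Differentiable ℝ α)
    (hc2 : Continuous (deriv α)) :
    Continuous (fun q : ℂ × ℝ => dotR (α q.2 - q.1) (deriv α q.2)) := by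
  have := hd1.continuous
  unfold dotR
  fun_prop

private lemma cont_dotR2 {α : ℝ → ℂ} (hd1 : Differentiable ℝ α)
    (hc2 : Continuous (deriv α)) (hc3 : Continuous (deriv (deriv α))) :
    Continuous (fun q : ℂ × ℝ =>
      dotR (deriv α q.2) (deriv α q.2) + dotR (α q.2 - q.1) (deriv (deriv α) q.2)) := by
  have := hd1.continuous
  unfold dotR
  fun_prop

private lemma ncard_periodic_zeros {l : ℝ} (hl : 0 < l) {f : ℝ → ℝ}
    (hf : Function.Periodic f l) (t₀ : ℝ) :
    {s ∈ Ico 0 l | f s = 0}.ncard = {s ∈ Ico t₀ (t₀ + l) | f s = 0}.ncard := by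
  have key : ∀ x y : ℝ, (∃ n : ℤ, y - x = n • l) → f x = f y := by
    rintro x y ⟨n, hn⟩
    have : y = x + n • l := by linarith [hn]
    rw [this, (hf.zsmul n) x]
  have hmod : ∀ x : ℝ, f (toIcoMod hl t₀ x) = f x :=
    fun x => key (toIcoMod hl t₀ x) x ⟨toIcoDiv hl t₀ x, (self_sub_toIcoMod hl t₀ x)⟩
  have himg : (toIcoMod hl t₀) '' {s ∈ Ico 0 l | f s = 0} = {s ∈ Ico t₀ (t₀ + l) | f s = 0} := by
    ext y
    constructor
    · rintro ⟨x, ⟨hx, hfx⟩, rfl⟩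
      exact ⟨toIcoMod_mem_Ico hl t₀ x, by rw [hmod x, hfx]⟩
    · rintro ⟨hy, hfy⟩
      have h0 : toIcoMod hl 0 y ∈ Ico (0:ℝ) l := by simpa using toIcoMod_mem_Ico hl 0 y
      have heq : f (toIcoMod hl 0 y) = f y :=
        key (toIcoMod hl 0 y) y ⟨toIcoDiv hl 0 y, (self_sub_toIcoMod hl 0 y)⟩
      refine ⟨toIcoMod hl 0 y, ⟨h0, by rw [heq, hfy]⟩, ?_⟩
      have : toIcoMod hl t₀ (toIcoMod hl 0 y) = toIcoMod hl t₀ y := by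
        apply (toIcoMod_eq_toIcoMod hl).mpr
        exact ⟨toIcoDiv hl 0 y, (self_sub_toIcoMod hl 0 y)⟩
      rw [this, (toIcoMod_eq_self hl).mpr hy]
  have hinj : Set.InjOn (toIcoMod hl t₀) {s ∈ Ico 0 l | f s = 0} := by
    rintro x ⟨hx, -⟩ y ⟨hy, -⟩ hxy
    have h := (toIcoMod_inj hl).mp hxy
    obtain ⟨m, n', hmn⟩ := h
    set n : ℤ := m - n' with hndef
    have hn' : y - x = (n:ℝ) * l := by
      simp only [nsmul_eq_mul] at hmn; rw [hndef]; push_cast; linarith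
    have h1 : (-1:ℝ) < (n:ℝ) := by nlinarith [hx.1, hx.2, hy.1, hy.2]
    have h2 : (n:ℝ) < 1 := by nlinarith [hx.1, hx.2, hy.1, hy.2]
    have h1' : (-1:ℤ) < n := by exact_mod_cast h1
    have h2' : n < 1 := by exact_mod_cast h2
    have hn0 : n = 0 := by omega
    have : y - x = 0 := by rw [hn']; simp [hn0]
    linarith
  rw [← himg, Set.ncard_image_of_injOn hinj]

private lemma local_box {g h : ℂ → ℝ → ℝ}
    (hderiv : ∀ p s, HasDerivAt (g p) (h p s) s)
    (hgc : Continuous fun q : ℂ × ℝ => g q.1 q.2)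
    (hhc : Continuous fun q : ℂ × ℝ => h q.1 q.2)
    {p₀ : ℂ} {s₀ : ℝ} (hz : g p₀ s₀ = 0) (hnz : h p₀ s₀ ≠ 0) :
    ∀ ε' > 0, ∃ ε, 0 < ε ∧ ε ≤ ε' ∧ ∃ V, V ∈ 𝓝 p₀ ∧
      ∀ p ∈ V, ∃! s, s ∈ Ioo (s₀ - ε) (s₀ + ε) ∧ g p s = 0 := by
  intro ε' hε'
  set σ : ℝ := if 0 < h p₀ s₀ then 1 else -1 with hσdef
  have hσ : 0 < σ * h p₀ s₀ := by
    rcases lt_or_gt_of_ne hnz with hlt | hgt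
    · have : σ = -1 := by simp [hσdef, not_lt.mpr hlt.le]
      rw [this]; linarith
    · have : σ = 1 := by simp [hσdef, hgt]
      rw [this]; linarith
  have hσne : σ ≠ 0 := by rcases ite_eq_or_eq (0 < h p₀ s₀) (1:ℝ) (-1) with h1 | h1 <;>
    rw [hσdef, h1] <;> norm_num
  have hUopen : IsOpen {q : ℂ × ℝ | 0 < σ * h q.1 q.2} :=
    isOpen_lt continuous_const (continuous_const.mul hhc)
  have hUmem : {q : ℂ × ℝ | 0 < σ * h q.1 q.2} ∈ 𝓝 (p₀, s₀) :=
    hUopen.mem_nhds hσ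
  rw [mem_nhds_prod_iff] at hUmem
  obtain ⟨V₁, hV₁, W₁, hW₁, hVW⟩ := hUmem
  obtain ⟨ε1, hε1, hball⟩ := Metric.mem_nhds_iff.mp hW₁
  set ε := min ε' (ε1 / 2) with hεdef
  have hεpos : 0 < ε := lt_min hε' (by linarith)
  have hεle : ε ≤ ε' := min_le_left _ _
  have hIcc : Icc (s₀ - ε) (s₀ + ε) ⊆ W₁ := by
    intro x hx
    apply hball
    rw [Metric.mem_ball, Real.dist_eq, abs_lt]
    have h1 : ε ≤ ε1 / 2 := min_le_right _ _
    constructor <;> [linarith [hx.1]; linarith [hx.2]]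
  have hgcont : ∀ p, Continuous (g p) := by
    intro p
    exact continuous_iff_continuousAt.mpr fun x => (hderiv p x).continuousAt
  have hab : s₀ - ε ≤ s₀ + ε := by linarith
  have hmono : ∀ p ∈ V₁, StrictMonoOn (fun s => σ * g p s) (Icc (s₀ - ε) (s₀ + ε)) := by
    intro p hp
    apply strictMonoOn_of_deriv_pos (convex_Icc _ _)
    · exact (continuous_const.mul (hgcont p)).continuousOn
    · intro x hx
      rw [interior_Icc] at hx
      have hd : deriv (fun s => σ * g p s) x = σ * h p x := ((hderiv p x).const_mul σ).deriv
      rw [hd]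
      have hm : (p, x) ∈ V₁ ×ˢ W₁ := ⟨hp, hIcc (Ioo_subset_Icc_self hx)⟩
      exact hVW hm
  have hs₀mem : s₀ ∈ Icc (s₀ - ε) (s₀ + ε) := by constructor <;> linarith
  have hamem : s₀ - ε ∈ Icc (s₀ - ε) (s₀ + ε) := by constructor <;> linarith
  have hbmem : s₀ + ε ∈ Icc (s₀ - ε) (s₀ + ε) := by constructor <;> linarith
  have hp₀V₁ : p₀ ∈ V₁ := mem_of_mem_nhds hV₁
  have ha0 : σ * g p₀ (s₀ - ε) < 0 := by
    have := hmono p₀ hp₀V₁ hamem hs₀mem (by linarith)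
    simpa [hz] using this
  have hb0 : 0 < σ * g p₀ (s₀ + ε) := by
    have := hmono p₀ hp₀V₁ hs₀mem hbmem (by linarith)
    simpa [hz] using this
  have hca : Continuous fun p => σ * g p (s₀ - ε) :=
    continuous_const.mul (hgc.comp (continuous_id.prodMk continuous_const))
  have hcb : Continuous fun p => σ * g p (s₀ + ε) :=
    continuous_const.mul (hgc.comp (continuous_id.prodMk continuous_const))
  refine ⟨ε, hεpos, hεle, V₁ ∩ ({p | σ * g p (s₀ - ε) < 0} ∩ {p | 0 < σ * g p (s₀ + ε)}), ?_, ?_⟩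
  · exact Filter.inter_mem hV₁ (Filter.inter_mem
      (((isOpen_lt hca continuous_const).mem_nhds ha0))
      (((isOpen_lt continuous_const hcb).mem_nhds hb0)))
  · rintro p ⟨hpV, hpa, hpb⟩
    have hivt := intermediate_value_Ioo (f := fun s => σ * g p s) hab
      (continuous_const.mul (hgcont p)).continuousOn
    have h0mem : (0:ℝ) ∈ Ioo (σ * g p (s₀ - ε)) (σ * g p (s₀ + ε)) := ⟨hpa, hpb⟩
    obtain ⟨s, hsIoo, hs0⟩ := hivt h0mem
    refine ⟨s, ⟨hsIoo, ?_⟩, ?_⟩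
    · rcases mul_eq_zero.mp hs0 with h | h
      · exact absurd h hσne
      · exact h
    · rintro s' ⟨hs'Ioo, hs'0⟩
      apply (hmono p hpV).injOn (Ioo_subset_Icc_self hs'Ioo) (Ioo_subset_Icc_self hsIoo)
      simp only [hs'0, hs0, mul_zero]

private lemma exists_min_dist {Z : Set ℝ} (hZ : Z.Finite) :
    ∃ δ > 0, ∀ z ∈ Z, ∀ z' ∈ Z, z ≠ z' → δ ≤ |z - z'| := by
  set S : Set (ℝ × ℝ) := (Z ×ˢ Z) ∩ {q | q.1 ≠ q.2} with hS
  have hSfin : S.Finite := ((hZ.prod hZ).inter_of_left _)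
  rcases S.eq_empty_or_nonempty with hSe | hSne
  · exact ⟨1, one_pos, fun z hz z' hz' hne =>
      absurd (show (z, z') ∈ S from ⟨⟨hz, hz'⟩, hne⟩) (by rw [hSe]; simp)⟩
  · obtain ⟨a, haS, hamin⟩ := Set.exists_min_image S (fun q => |q.1 - q.2|) hSfin hSne
    refine ⟨|a.1 - a.2|, ?_, fun z hz z' hz' hne => hamin (z, z') ⟨⟨hz, hz'⟩, hne⟩⟩
    rw [gt_iff_lt, abs_pos, sub_ne_zero]
    exact haS.2

/-- Assume `k > 0`. The number `N_p` of normals to `α` through `p` (per period),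
as a function of `p`, is locally constant on the complement of the image of the
evolute `β(s) = α(s) + (1/k(s))·n(s)`. -/
theorem number_of_normals_locally_constant
    (l : ℝ) (hl : 0 < l) (α : ℝ → ℂ)
    (hα : ContDiff ℝ (⊤ : ℕ∞) α)
    (hper : Function.Periodic α l)
    (hunit : ∀ s, ‖deriv α s‖ = 1)
    (k : ℝ → ℝ)
    (hk : ∀ s, deriv (deriv α) s = (k s : ℂ) * (Complex.I * deriv α s))
    (hkpos : ∀ s, 0 < k s)
    (β : ℝ → ℂ)
    (hβ : ∀ s, β s = α s + ((1 / k s : ℝ) : ℂ) * (Complex.I * deriv α s)) :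
    IsLocallyConstant
      (fun p : {q : ℂ // q ∉ Set.range β} =>
        {s ∈ Set.Ico 0 l | dotR (α s - p.1) (deriv α s) = 0}.ncard) := by
  -- smoothness consequences
  have hs : ContDiff ℝ (⊤ : ℕ∞) α := hα.of_le (by simp)
  rw [contDiff_infty_iff_deriv] at hs
  obtain ⟨hd1, hs2⟩ := hs
  rw [contDiff_infty_iff_deriv] at hs2
  obtain ⟨hd2, hs3⟩ := hs2
  have hc2 : Continuous (deriv α) := hd2.continuous
  have hc3 : Continuous (deriv (deriv α)) := hs3.continuous
  set g : ℂ → ℝ → ℝ := fun p s => dotR (α s - p) (deriv α s) with hgdef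
  set h : ℂ → ℝ → ℝ :=
    fun p s => dotR (deriv α s) (deriv α s) + dotR (α s - p) (deriv (deriv α) s) with hhdef
  have hderiv : ∀ p s, HasDerivAt (g p) (h p s) s := fun p s => hasDerivAt_dotR_s6 hd1 hd2 p s
  have hgc : Continuous fun q : ℂ × ℝ => g q.1 q.2 := cont_dotR hd1 hc2
  have hhc : Continuous fun q : ℂ × ℝ => h q.1 q.2 := cont_dotR2 hd1 hc2 hc3
  -- periodicity
  have hperd : Function.Periodic (deriv α) l := by
    intro s
    have hfun : (fun x => α (x + l)) = α := funext hper
    calc deriv α (s + l) = deriv (fun x => α (x + l)) s := (deriv_comp_add_const α l s).symm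
      _ = deriv α s := by rw [hfun]
  have hgper : ∀ p, Function.Periodic (g p) l := by
    intro p s
    simp only [hgdef, hper s, hperd s]
  -- alternate form of the derivative
  have hh_eq : ∀ p s, h p s = 1 + k s * dotR (α s - p) (Complex.I * deriv α s) := by
    intro p s
    have h1 : dotR (deriv α s) (deriv α s) = 1 := by
      have := normsq_one (hunit s)
      simpa [dotR] using this
    simp only [hhdef, h1, hk s]
    simp [dotR, Complex.mul_re, Complex.mul_im]
    ring
  -- nonvanishing of the derivative at zeros, off the evolute
  have hkey : ∀ p, p ∉ Set.range β → ∀ s, g p s = 0 → h p s ≠ 0 := by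
    intro p hp s hgz hhz
    rw [hh_eq p s] at hhz
    set c := dotR (α s - p) (Complex.I * deriv α s) with hcdef
    have hc : c = -(1 / k s) := by
      have hks := hkpos s
      field_simp
      nlinarith [hhz]
    have hdecomp := dotR_basis (hunit s) (α s - p)
    rw [show dotR (α s - p) (deriv α s) = 0 from hgz, ← hcdef, hc] at hdecomp
    apply hp
    refine ⟨s, ?_⟩
    rw [hβ s]
    push_cast at hdecomp ⊢
    linear_combination hdecomp
  -- fix a base point p₀ off the evolute
  rw [IsLocallyConstant.iff_eventually_eq]
  rintro ⟨p₀, hp₀⟩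
  -- find t₀ with g p₀ t₀ ≠ 0
  obtain ⟨t₀, ht₀⟩ : ∃ t₀, g p₀ t₀ ≠ 0 := by
    by_cases h0 : g p₀ 0 = 0
    · obtain ⟨ε, hε, -, V, hV, huniq⟩ :=
        local_box hderiv hgc hhc h0 (hkey p₀ hp₀ 0 h0) 1 one_pos
      have hp₀V : p₀ ∈ V := mem_of_mem_nhds hV
      refine ⟨ε / 2, fun hz => ?_⟩
      have h1 := (huniq p₀ hp₀V).unique
        (⟨⟨by linarith, by linarith⟩, hz⟩ : ε / 2 ∈ Ioo ((0:ℝ) - ε) (0 + ε) ∧ g p₀ (ε/2) = 0)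
        (⟨⟨by linarith, by linarith⟩, h0⟩ : (0:ℝ) ∈ Ioo ((0:ℝ) - ε) (0 + ε) ∧ g p₀ 0 = 0)
      linarith
    · exact ⟨0, h0⟩
  have ht₀l : g p₀ (t₀ + l) ≠ 0 := by rw [hgper p₀ t₀]; exact ht₀
  -- the zero set at p₀
  set Z : Set ℝ := {s ∈ Icc t₀ (t₀ + l) | g p₀ s = 0} with hZdef
  have hZIoo : ∀ z ∈ Z, z ∈ Ioo t₀ (t₀ + l) := by
    rintro z ⟨hz1, hz2⟩
    rcases eq_or_lt_of_le hz1.1 with rfl | hlt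
    · exact absurd hz2 ht₀
    rcases eq_or_lt_of_le hz1.2 with heq | hlt2
    · exact absurd (heq ▸ hz2) ht₀l
    exact ⟨hlt, hlt2⟩
  have hZcompact : IsCompact Z := by
    apply IsCompact.of_isClosed_subset isCompact_Icc
    · exact isClosed_Icc.inter (isClosed_eq (by
        have : Continuous (g p₀) := hgc.comp (continuous_const.prodMk continuous_id)
        exact this) continuous_const)
    · exact fun z hz => hz.1
  -- finiteness of Z via isolation
  have hbox1 : ∀ z : ℝ, ∃ ε > 0, ∃ V, V ∈ 𝓝 p₀ ∧
      (z ∈ Z → ∀ p ∈ V, ∃! s, s ∈ Ioo (z - ε) (z + ε) ∧ g p s = 0) := by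
    intro z
    by_cases hz : z ∈ Z
    · obtain ⟨ε, hε, -, V, hV, huniq⟩ :=
        local_box hderiv hgc hhc hz.2 (hkey p₀ hp₀ z hz.2) 1 one_pos
      exact ⟨ε, hε, V, hV, fun _ => huniq⟩
    · exact ⟨1, one_pos, univ, univ_mem, fun hzZ => absurd hzZ hz⟩
  choose ε₁ hε₁ V₁ hV₁ huniq₁ using hbox1
  have hZfin : Z.Finite := by
    have hcov : Z ⊆ ⋃ z ∈ Z, Ioo (z - ε₁ z) (z + ε₁ z) := by
      intro z hz
      exact mem_biUnion hz ⟨by linarith [hε₁ z], by linarith [hε₁ z]⟩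
    obtain ⟨F, hFsub, hFfin, hFcov⟩ :=
      hZcompact.elim_finite_subcover_image (fun z _ => isOpen_Ioo) hcov
    apply hFfin.subset (s := F)
    intro z hz
    obtain ⟨w, hwF, hwz⟩ := mem_iUnion₂.mp (hFcov hz)
    have hwZ : w ∈ Z := hFsub hwF
    have hp₀V : p₀ ∈ V₁ w := mem_of_mem_nhds (hV₁ w)
    have huw := (huniq₁ w hwZ p₀ hp₀V).unique
      (⟨hwz, hz.2⟩ : z ∈ Ioo (w - ε₁ w) (w + ε₁ w) ∧ g p₀ z = 0)
      (⟨⟨by linarith [hε₁ w], by linarith [hε₁ w]⟩, hwZ.2⟩ :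
        w ∈ Ioo (w - ε₁ w) (w + ε₁ w) ∧ g p₀ w = 0)
    rw [huw]
    exact hwF
  -- minimal distance between zeros
  obtain ⟨δ0, hδ0, hδ0min⟩ := exists_min_dist hZfin
  -- final boxes
  have hbox2 : ∀ z : ℝ, ∃ ε > 0, ∃ V, V ∈ 𝓝 p₀ ∧
      (z ∈ Z → (ε ≤ δ0 / 2 ∧ ε ≤ z - t₀ ∧ ε ≤ t₀ + l - z ∧
        ∀ p ∈ V, ∃! s, s ∈ Ioo (z - ε) (z + ε) ∧ g p s = 0)) := by
    intro z
    by_cases hz : z ∈ Z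
    · have hzIoo := hZIoo z hz
      have hεpos' : 0 < min (δ0 / 2) (min (z - t₀) (t₀ + l - z)) := by
        apply lt_min (by linarith)
        apply lt_min (by linarith [hzIoo.1]) (by linarith [hzIoo.2])
      obtain ⟨ε, hε, hεle, V, hV, huniq⟩ :=
        local_box hderiv hgc hhc hz.2 (hkey p₀ hp₀ z hz.2) _ hεpos'
      refine ⟨ε, hε, V, hV, fun _ => ⟨?_, ?_, ?_, huniq⟩⟩
      · exact le_trans hεle (min_le_left _ _)
      · exact le_trans hεle (le_trans (min_le_right _ _) (min_le_left _ _))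
      · exact le_trans hεle (le_trans (min_le_right _ _) (min_le_right _ _))
    · exact ⟨1, one_pos, univ, univ_mem, fun hzZ => absurd hzZ hz⟩
  choose ε₂ hε₂ V₂ hV₂ hprop using hbox2
  -- the complement region K
  set K : Set ℝ := Icc t₀ (t₀ + l) \ ⋃ z ∈ Z, Ioo (z - ε₂ z) (z + ε₂ z) with hKdef
  have hKcomp : IsCompact K :=
    isCompact_Icc.diff (isOpen_biUnion fun z _ => isOpen_Ioo)
  have hKnz : ∀ s ∈ K, g p₀ s ≠ 0 := by
    rintro s ⟨hs1, hs2⟩ h0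
    have hsZ : s ∈ Z := ⟨hs1, h0⟩
    exact hs2 (mem_biUnion hsZ ⟨by linarith [hε₂ s], by linarith [hε₂ s]⟩)
  have hW : ∀ᶠ p in 𝓝 p₀, ∀ s ∈ K, g p s ≠ 0 := by
    apply hKcomp.eventually_forall_of_forall_eventually
    intro s hs
    have : ContinuousAt (fun q : ℂ × ℝ => g q.1 q.2) (p₀, s) := hgc.continuousAt
    exact this.eventually_ne (hKnz s hs)
  have hVs : ∀ᶠ p in 𝓝 p₀, ∀ z ∈ Z, p ∈ V₂ z :=
    (hZfin.eventually_all).mpr fun z _ => hV₂ z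
  -- main counting
  have hmain : ∀ᶠ p in 𝓝 p₀, {s ∈ Ico t₀ (t₀ + l) | g p s = 0}.ncard = Z.ncard := by
    filter_upwards [hW, hVs] with p hWp hVp
    have huz : ∀ z ∈ Z, ∃! s, s ∈ Ioo (z - ε₂ z) (z + ε₂ z) ∧ g p s = 0 :=
      fun z hz => (hprop z hz).2.2.2 p (hVp z hz)
    have hφex : ∀ z : ℝ, ∃ s, z ∈ Z → (s ∈ Ioo (z - ε₂ z) (z + ε₂ z) ∧ g p s = 0) := by
      intro z
      by_cases hz : z ∈ Z
      · obtain ⟨s, hs, -⟩ := huz z hz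
        exact ⟨s, fun _ => hs⟩
      · exact ⟨0, fun hzZ => absurd hzZ hz⟩
    choose φ hφ using hφex
    have himg : {s ∈ Ico t₀ (t₀ + l) | g p s = 0} = φ '' Z := by
      ext s
      constructor
      · rintro ⟨hs1, hs2⟩
        have hsK : s ∉ K := fun hsK => hWp s hsK hs2
        have hsIcc : s ∈ Icc t₀ (t₀ + l) := ⟨hs1.1, hs1.2.le⟩
        have : s ∈ ⋃ z ∈ Z, Ioo (z - ε₂ z) (z + ε₂ z) := by
          by_contra hc
          exact hsK ⟨hsIcc, hc⟩
        obtain ⟨z, hzZ, hzs⟩ := mem_iUnion₂.mp this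
        have := (huz z hzZ).unique ⟨hzs, hs2⟩ (hφ z hzZ)
        exact ⟨z, hzZ, this.symm⟩
      · rintro ⟨z, hzZ, rfl⟩
        obtain ⟨hφIoo, hφ0⟩ := hφ z hzZ
        obtain ⟨hle1, hle2, hle3, -⟩ := hprop z hzZ
        refine ⟨⟨by linarith [hφIoo.1], by linarith [hφIoo.2]⟩, hφ0⟩
    have hinj : Set.InjOn φ Z := by
      intro z hz z' hz' heq
      by_contra hne
      obtain ⟨hφIoo, -⟩ := hφ z hz
      obtain ⟨hφIoo', -⟩ := hφ z' hz'
      obtain ⟨hle1, -, -, -⟩ := hprop z hz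
      obtain ⟨hle1', -, -, -⟩ := hprop z' hz'
      have hd := hδ0min z hz z' hz' hne
      rw [← heq] at hφIoo'
      rcases abs_cases (z - z') with ⟨ha, -⟩ | ⟨ha, -⟩ <;> rw [ha] at hd <;>
        linarith [hφIoo.1, hφIoo.2, hφIoo'.1, hφIoo'.2]
    rw [himg, Set.ncard_image_of_injOn hinj]
  -- transfer to [0, l)
  have hmain' : ∀ᶠ p in 𝓝 p₀, {s ∈ Ico 0 l | g p s = 0}.ncard = Z.ncard := by
    filter_upwards [hmain] with p hp
    rw [ncard_periodic_zeros hl (hgper p) t₀]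
    exact hp
  have hp₀eq : {s ∈ Ico 0 l | g p₀ s = 0}.ncard = Z.ncard := hmain'.self_of_nhds
  -- pull back to the subtype
  have hsub : ∀ᶠ q in 𝓝 (⟨p₀, hp₀⟩ : {q : ℂ // q ∉ Set.range β}),
      {s ∈ Ico 0 l | g q.1 s = 0}.ncard = Z.ncard := by
    exact (continuous_subtype_val.tendsto (⟨p₀, hp₀⟩ : {q : ℂ // q ∉ Set.range β})).eventually hmain'
  filter_upwards [hsub] with q hq
  simp only [hgdef] at hq hp₀eq
  rw [hq, hp₀eq]
end

section
/- Assume k(s) > 0 for all s. Suppose s* and ρ* satisfy α(s*) + ρ* n(s*) = 0 with ρ* = 1/k(s*), and suppose k'(s*) ≠ 0. Then there exist δ > 0 and ε₀ > 0 such that for all ε with 0 < |ε| < ε₀: if ε·k'(s*) > 0 then the equation α(s) + ε T(s) + ρ n(s) = 0 has exactly two solutions (s,ρ) with |s − s*| < δ and |ρ − ρ*| < δ, at both of which ρ·k(s) ≠ 1 and the two solutions lie on opposite sides of the curve ρ = 1/k(s); while if ε·k'(s*) < 0 the equation has no solutions in that neighbourhood. -/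
open Set

lemma morse_pos (f : ℝ → ℝ) (s0 : ℝ) (hf : ContDiff ℝ (⊤:ℕ∞) f) (h0 : f s0 = 0)
    (h1 : deriv f s0 = 0) (h2 : 0 < deriv (deriv f) s0) (δ₀ : ℝ) (hδ₀ : 0 < δ₀) :
    ∃ δ, 0 < δ ∧ δ ≤ δ₀ ∧ ∃ ε₀ > (0:ℝ), ∀ e : ℝ, 0 < |e| → |e| < ε₀ →
      ((0 < e → ∃ a b : ℝ, b < s0 ∧ s0 < a ∧
          {s | f s = e ∧ |s - s0| < δ} = {a, b} ∧ 0 < deriv f a ∧ deriv f b < 0) ∧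
       (e < 0 → {s | f s = e ∧ |s - s0| < δ} = ∅)) := by
  have hf1 : ContDiff ℝ (⊤:ℕ∞) (deriv f) := (contDiff_infty_iff_deriv.mp hf).2
  have hf2c : Continuous (deriv (deriv f)) := (contDiff_infty_iff_deriv.mp hf1).2.continuous
  have hfc : Continuous f := hf.continuous
  have hf1c : Continuous (deriv f) := hf1.continuous
  -- find r > 0 with second derivative positive on ball
  have hopen : IsOpen {s : ℝ | 0 < deriv (deriv f) s} := isOpen_lt continuous_const hf2c
  obtain ⟨r, hr, hball⟩ := Metric.isOpen_iff.mp hopen s0 h2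
  set δ := min δ₀ (r/2) with hδdef
  have hδpos : 0 < δ := lt_min hδ₀ (by linarith)
  have hδr : δ < r := lt_of_le_of_lt (min_le_right _ _) (by linarith)
  have hIcc : Icc (s0 - δ) (s0 + δ) ⊆ {s : ℝ | 0 < deriv (deriv f) s} := by
    intro s hs
    apply hball
    rw [Metric.mem_ball, Real.dist_eq]
    rcases hs with ⟨hs1, hs2⟩
    rw [abs_sub_lt_iff]; constructor <;> linarith
  have h2pos : ∀ s ∈ Icc (s0 - δ) (s0 + δ), 0 < deriv (deriv f) s := fun s hs => hIcc hs
  -- deriv f strictly monotone on the interval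
  have hmono1 : StrictMonoOn (deriv f) (Icc (s0 - δ) (s0 + δ)) := by
    apply strictMonoOn_of_deriv_pos (convex_Icc _ _) hf1c.continuousOn
    intro x hx
    rw [interior_Icc] at hx
    exact h2pos x ⟨hx.1.le, hx.2.le⟩
  have hmem0 : s0 ∈ Icc (s0 - δ) (s0 + δ) := ⟨by linarith, by linarith⟩
  have hf'neg : ∀ s ∈ Ico (s0 - δ) s0, deriv f s < 0 := by
    intro s hs
    have := hmono1 ⟨hs.1, by linarith [hs.2]⟩ hmem0 hs.2
    linarith [h1]
  have hf'pos : ∀ s ∈ Ioc s0 (s0 + δ), 0 < deriv f s := by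
    intro s hs
    have := hmono1 hmem0 ⟨by linarith [hs.1], hs.2⟩ hs.1
    linarith [h1]
  -- f strictly monotone on right, anti on left
  have hmonoR : StrictMonoOn f (Icc s0 (s0 + δ)) := by
    apply strictMonoOn_of_deriv_pos (convex_Icc _ _) hfc.continuousOn
    intro x hx
    rw [interior_Icc] at hx
    exact hf'pos x ⟨hx.1, hx.2.le⟩
  have hantiL : StrictAntiOn f (Icc (s0 - δ) s0) := by
    apply strictAntiOn_of_deriv_neg (convex_Icc _ _) hfc.continuousOn
    intro x hx
    rw [interior_Icc] at hx
    exact hf'neg x ⟨hx.1.le, hx.2⟩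
  have hfR : 0 < f (s0 + δ) := by
    have := hmonoR ⟨le_refl _, by linarith⟩ ⟨by linarith, le_refl _⟩ (by linarith)
    linarith [h0]
  have hfL : 0 < f (s0 - δ) := by
    have := hantiL ⟨le_refl _, by linarith⟩ ⟨by linarith, le_refl _⟩ (by linarith)
    linarith [h0]
  refine ⟨δ, hδpos, min_le_left _ _, min (f (s0 - δ)) (f (s0 + δ)), lt_min hfL hfR, ?_⟩
  have hnonneg : ∀ s, |s - s0| < δ → 0 ≤ f s := by
    intro s hss
    have habs := abs_sub_lt_iff.mp hss
    rcases le_or_gt s0 s with h | h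
    · rcases eq_or_lt_of_le h with rfl | h'
      · exact h0.ge
      · have := hmonoR ⟨le_refl _, by linarith⟩ ⟨h, by linarith [habs.1]⟩ h'
        linarith
    · have := hantiL ⟨by linarith [habs.2], h.le⟩ ⟨by linarith, le_refl _⟩ h
      linarith
  intro e he0 heε
  have heL : e < f (s0 - δ) := lt_of_lt_of_le (lt_of_le_of_lt (le_abs_self e) heε) (min_le_left _ _)
  have heR : e < f (s0 + δ) := lt_of_lt_of_le (lt_of_le_of_lt (le_abs_self e) heε) (min_le_right _ _)
  constructor
  · intro hepos
    -- right solution a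
    obtain ⟨a, haI, hae⟩ : ∃ a ∈ Icc s0 (s0 + δ), f a = e := by
      have : e ∈ Icc (f s0) (f (s0 + δ)) := ⟨by rw [h0]; exact hepos.le, heR.le⟩
      obtain ⟨a, ha1, ha2⟩ := intermediate_value_Icc (by linarith : s0 ≤ s0 + δ)
        hfc.continuousOn this
      exact ⟨a, ha1, ha2⟩
    have hane0 : a ≠ s0 := by rintro rfl; rw [h0] at hae; linarith
    have haR : a < s0 + δ := by
      rcases lt_or_eq_of_le haI.2 with h | rfl
      · exact h
      · linarith [hae]
    have haIoc : a ∈ Ioc s0 (s0 + δ) := ⟨lt_of_le_of_ne haI.1 (Ne.symm hane0), haI.2⟩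
    -- left solution b
    obtain ⟨b, hbI, hbe⟩ : ∃ b ∈ Icc (s0 - δ) s0, f b = e := by
      have : e ∈ Icc (f s0) (f (s0 - δ)) := ⟨by rw [h0]; exact hepos.le, heL.le⟩
      obtain ⟨b, hb1, hb2⟩ := intermediate_value_Icc' (by linarith : s0 - δ ≤ s0)
        hfc.continuousOn this
      exact ⟨b, hb1, hb2⟩
    have hbne0 : b ≠ s0 := by rintro rfl; rw [h0] at hbe; linarith
    have hbL : s0 - δ < b := by
      rcases lt_or_eq_of_le hbI.1 with h | rfl
      · exact h
      · linarith [hbe]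
    have hbIco : b ∈ Ico (s0 - δ) s0 := ⟨hbI.1, lt_of_le_of_ne hbI.2 hbne0⟩
    refine ⟨a, b, hbIco.2, haIoc.1, ?_, hf'pos a haIoc, hf'neg b hbIco⟩
    ext s
    simp only [mem_setOf_eq, mem_insert_iff, mem_singleton_iff]
    constructor
    · rintro ⟨hfs, hss⟩
      have habs := abs_sub_lt_iff.mp hss
      rcases le_or_gt s0 s with h | h
      · left
        exact hmonoR.injOn ⟨h, by linarith [habs.1]⟩ ⟨haI.1, haI.2⟩ (by rw [hfs, hae])
      · right
        exact hantiL.injOn ⟨by linarith [habs.2], h.le⟩ hbI (by rw [hfs, hbe])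
    · rintro (rfl | rfl)
      · exact ⟨hae, by rw [abs_sub_lt_iff]; constructor <;> [linarith [haR]; linarith [haIoc.1]]⟩
      · exact ⟨hbe, by rw [abs_sub_lt_iff]; constructor <;> [linarith [hbIco.2]; linarith [hbL]]⟩
  · intro heneg
    ext s
    simp only [mem_setOf_eq, mem_empty_iff_false, iff_false, not_and]
    intro hfs hss
    have := hnonneg s hss
    linarith

lemma morse_gen (f : ℝ → ℝ) (s0 : ℝ) (hf : ContDiff ℝ (⊤:ℕ∞) f) (h0 : f s0 = 0)
    (h1 : deriv f s0 = 0) (h2 : deriv (deriv f) s0 ≠ 0) (δ₀ : ℝ) (hδ₀ : 0 < δ₀) :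
    ∃ δ, 0 < δ ∧ δ ≤ δ₀ ∧ ∃ ε₀ > (0:ℝ), ∀ e : ℝ, 0 < |e| → |e| < ε₀ →
      ((0 < e * deriv (deriv f) s0 → ∃ a b : ℝ, a ≠ b ∧
          {s | f s = e ∧ |s - s0| < δ} = {a, b} ∧ 0 < deriv f a ∧ deriv f b < 0) ∧
       (e * deriv (deriv f) s0 < 0 → {s | f s = e ∧ |s - s0| < δ} = ∅)) := by
  rcases h2.lt_or_gt with hc | hc
  · -- second derivative negative: apply morse_pos to -f
    have hnf : ContDiff ℝ (⊤:ℕ∞) (-f) := hf.neg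
    have hd1 : deriv (-f) = -deriv f := by
      funext x
      exact deriv.neg
    have h0' : (-f) s0 = 0 := by simp [h0]
    have h1' : deriv (-f) s0 = 0 := by rw [hd1]; simp [h1]
    have h2' : 0 < deriv (deriv (-f)) s0 := by
      rw [hd1]
      have : deriv (-deriv f) s0 = -deriv (deriv f) s0 := deriv.neg
      rw [this]
      linarith
    obtain ⟨δ, hδpos, hδle, ε₀, hε₀, H⟩ := morse_pos (-f) s0 hnf h0' h1' h2' δ₀ hδ₀
    refine ⟨δ, hδpos, hδle, ε₀, hε₀, ?_⟩
    intro e he0 heε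
    have he0' : 0 < |(-e)| := by rwa [abs_neg]
    have heε' : |(-e)| < ε₀ := by rwa [abs_neg]
    obtain ⟨H1, H2⟩ := H (-e) he0' heε'
    have hset : {s | f s = e ∧ |s - s0| < δ} = {s | (-f) s = -e ∧ |s - s0| < δ} := by
      ext s; simp only [Set.mem_setOf_eq, Pi.neg_apply, neg_eq_iff_eq_neg, neg_neg]
    constructor
    · intro hpos
      have : 0 < -e := by nlinarith
      obtain ⟨a, b, hblt, halt, hS, hda, hdb⟩ := H1 this
      rw [hd1] at hda hdb
      simp only [Pi.neg_apply] at hda hdb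
      refine ⟨b, a, by intro h; rw [h] at hblt; linarith, ?_, by linarith, by linarith⟩
      rw [hset, hS]
      exact Set.pair_comm a b
    · intro hneg
      have : -e < 0 := by nlinarith
      rw [hset]
      exact H2 this
  · obtain ⟨δ, hδpos, hδle, ε₀, hε₀, H⟩ := morse_pos f s0 hf h0 h1 hc δ₀ hδ₀
    refine ⟨δ, hδpos, hδle, ε₀, hε₀, ?_⟩
    intro e he0 heε
    obtain ⟨H1, H2⟩ := H e he0 heε
    constructor
    · intro hpos
      have : 0 < e := by nlinarith
      obtain ⟨a, b, hb, ha, hS, hda, hdb⟩ := H1 this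
      exact ⟨a, b, by intro h; rw [h] at ha; linarith, hS, hda, hdb⟩
    · intro hneg
      have : e < 0 := by nlinarith
      exact H2 this


/-- Saddle–centre bifurcation: if the origin lies on the evolute
(`α(s*) + ρ*·n(s*) = 0` with `ρ* = 1/k(s*)`) and `k'(s*) ≠ 0`, then translating the
curve by `ε` in the tangent direction produces, for `ε·k'(s*) > 0`, exactly two
normals through the origin near `(s*,ρ*)` lying on opposite sides of the curve
`ρ = 1/k(s)` (in particular `ρ·k(s) ≠ 1` at each), and for `ε·k'(s*) < 0` none. -/
theorem saddle_centre_bifurcation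
    (l : ℝ) (hl : 0 < l) (α : ℝ → ℂ)
    (hα : ContDiff ℝ (⊤ : ℕ∞) α)
    (hper : Function.Periodic α l)
    (hunit : ∀ s, ‖deriv α s‖ = 1)
    (k : ℝ → ℝ)
    (hk : ∀ s, deriv (deriv α) s = (k s : ℂ) * (Complex.I * deriv α s))
    (hkpos : ∀ s, 0 < k s)
    (sstar ρstar : ℝ)
    (hρstar : ρstar = 1 / k sstar)
    (horigin : α sstar + (ρstar : ℂ) * (Complex.I * deriv α sstar) = 0)
    (hk' : deriv k sstar ≠ 0) :
    ∃ δ > (0 : ℝ), ∃ ε₀ > (0 : ℝ), ∀ ε : ℝ, 0 < |ε| → |ε| < ε₀ →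
      ((0 < ε * deriv k sstar →
          ∃ a b : ℝ × ℝ, a ≠ b ∧
            {x : ℝ × ℝ |
                α x.1 + (ε : ℂ) * deriv α x.1 + (x.2 : ℂ) * (Complex.I * deriv α x.1) = 0 ∧
                |x.1 - sstar| < δ ∧ |x.2 - ρstar| < δ} = {a, b} ∧
            a.2 * k a.1 < 1 ∧ 1 < b.2 * k b.1) ∧
       (ε * deriv k sstar < 0 →
          {x : ℝ × ℝ |
              α x.1 + (ε : ℂ) * deriv α x.1 + (x.2 : ℂ) * (Complex.I * deriv α x.1) = 0 ∧
              |x.1 - sstar| < δ ∧ |x.2 - ρstar| < δ} = ∅)) := by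
  classical
  have hαsm : ContDiff ℝ (⊤:ℕ∞) α := hα.of_le (by simp)
  have hTsm : ContDiff ℝ (⊤:ℕ∞) (deriv α) := (contDiff_infty_iff_deriv.mp hαsm).2
  have hT2sm : ContDiff ℝ (⊤:ℕ∞) (deriv (deriv α)) := (contDiff_infty_iff_deriv.mp hTsm).2
  have hαdiff : Differentiable ℝ α := hαsm.differentiable (by simp)
  have hTdiff : Differentiable ℝ (deriv α) := hTsm.differentiable (by simp)
  -- notation
  set T : ℝ → ℂ := deriv α with hTdef
  have hnormT : ∀ s, Complex.normSq (T s) = 1 := by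
    intro s
    rw [Complex.normSq_eq_norm_sq, hunit s]
    norm_num
  have hTne : ∀ s, T s ≠ 0 := by
    intro s hs
    have := hnormT s
    rw [hs] at this
    simp at this
  have hTT : ∀ s, T s * (starRingEnd ℂ) (T s) = 1 := by
    intro s
    rw [Complex.mul_conj, hnormT s]
    norm_num
  -- conj ∘ T is smooth and has derivative conj (deriv T)
  have hconjsm : ContDiff ℝ (⊤:ℕ∞) (fun s => (starRingEnd ℂ) (T s)) := by
    exact (Complex.conjCLE.toContinuousLinearMap.contDiff).comp hTsm
  have hconjd : ∀ s, HasDerivAt (fun t => (starRingEnd ℂ) (T t))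
      ((starRingEnd ℂ) (deriv T s)) s := by
    intro s
    exact (Complex.conjCLE.toContinuousLinearMap.hasFDerivAt).comp_hasDerivAt s
      ((hTdiff s).hasDerivAt)
  -- complex support function q = α * conj T ; f = Re q, g = Im q
  set q : ℝ → ℂ := fun s => α s * (starRingEnd ℂ) (T s) with hqdef
  set f : ℝ → ℝ := fun s => (q s).re with hfdef
  set g : ℝ → ℝ := fun s => (q s).im with hgdef
  have hqsm : ContDiff ℝ (⊤:ℕ∞) q := hαsm.mul hconjsm
  have hfsm : ContDiff ℝ (⊤:ℕ∞) f := (Complex.reCLM.contDiff).comp hqsm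
  have hgsm : ContDiff ℝ (⊤:ℕ∞) g := (Complex.imCLM.contDiff).comp hqsm
  have hq' : ∀ s, HasDerivAt q (1 - Complex.I * (k s) * q s) s := by
    intro s
    have h1 : HasDerivAt α (T s) s := (hαdiff s).hasDerivAt
    have h2 := h1.mul (hconjd s)
    refine h2.congr_deriv ?_
    symm
    rw [hk s]
    have := hTT s
    simp only [map_mul, Complex.conj_I, Complex.conj_ofReal]
    rw [hqdef]
    simp only []
    calc (1 : ℂ) - Complex.I * (k s) * (α s * (starRingEnd ℂ) (T s))
        = T s * (starRingEnd ℂ) (T s)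
          + α s * ((k s : ℂ) * (-Complex.I * (starRingEnd ℂ) (T s))) := by
          rw [this]; ring
      _ = _ := by ring
  have hf' : ∀ s, HasDerivAt f (1 + k s * g s) s := by
    intro s
    have := (Complex.reCLM.hasFDerivAt).comp_hasDerivAt s (hq' s)
    have h2 : HasDerivAt (fun t => (q t).re) ((1 - Complex.I * (k s) * q s).re) s := this
    convert h2 using 1
    simp [Complex.sub_re, Complex.mul_re, Complex.mul_im, Complex.I_re, Complex.I_im]
    exact Or.inl rfl
  have hg' : ∀ s, HasDerivAt g (-(k s * f s)) s := by
    intro s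
    have := (Complex.imCLM.hasFDerivAt).comp_hasDerivAt s (hq' s)
    have h2 : HasDerivAt (fun t => (q t).im) ((1 - Complex.I * (k s) * q s).im) s := this
    convert h2 using 1
    simp [Complex.sub_im, Complex.mul_re, Complex.mul_im, Complex.I_re, Complex.I_im]
    exact Or.inl rfl
  have hdf : deriv f = fun s => 1 + k s * g s := funext fun s => (hf' s).deriv
  have hdg : deriv g = fun s => -(k s * f s) := funext fun s => (hg' s).deriv
  -- smoothness of k
  have hkeq : k = fun s => ((deriv (deriv α)) s * (starRingEnd ℂ) (Complex.I * T s)).re := by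
    funext s
    rw [hk s]
    have h1 : (Complex.I * T s) * (starRingEnd ℂ) (Complex.I * T s) = 1 := by
      rw [Complex.mul_conj, Complex.normSq_mul, Complex.normSq_I, hnormT s]
      norm_num
    calc k s = ((k s : ℂ) * ((Complex.I * T s) * (starRingEnd ℂ) (Complex.I * T s))).re := by
          rw [h1]; simp
      _ = _ := by rw [← mul_assoc]
  have hksm : ContDiff ℝ (⊤:ℕ∞) k := by
    rw [hkeq]
    exact (Complex.reCLM.contDiff).comp
      (hT2sm.mul ((Complex.conjCLE.toContinuousLinearMap.contDiff).comp
        (contDiff_const.mul hTsm)))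
  -- values at sstar
  have hqs : q sstar = -(ρstar:ℂ) * Complex.I := by
    rw [hqdef]
    simp only []
    have hα0 : α sstar = -((ρstar:ℂ) * (Complex.I * T sstar)) := by
      have := horigin
      rw [hTdef] at this ⊢
      linear_combination this
    rw [hα0]
    have := hTT sstar
    calc -((ρstar:ℂ) * (Complex.I * T sstar)) * (starRingEnd ℂ) (T sstar)
        = -(ρstar:ℂ) * Complex.I * (T sstar * (starRingEnd ℂ) (T sstar)) := by ring
      _ = -(ρstar:ℂ) * Complex.I := by rw [this]; ring
  have hfs0 : f sstar = 0 := by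
    rw [hfdef]; simp only []; rw [hqs]
    simp
  have hgs0 : g sstar = -ρstar := by
    rw [hgdef]; simp only []; rw [hqs]
    simp
  have hρpos : 0 < ρstar := by
    rw [hρstar]
    exact one_div_pos.mpr (hkpos sstar)
  have hkρ : k sstar * ρstar = 1 := by
    rw [hρstar, mul_one_div]
    exact div_self (ne_of_gt (hkpos sstar))
  have hdfs0 : deriv f sstar = 0 := by
    rw [hdf]
    simp only []
    rw [hgs0]
    nlinarith [hkρ]
  have hdgs0 : deriv g sstar = 0 := by
    rw [hdg]
    simp only []
    rw [hfs0]
    ring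
  have hd2f : deriv (deriv f) sstar = -(ρstar * deriv k sstar) := by
    rw [hdf]
    have h1 : HasDerivAt (fun s => 1 + k s * g s)
        (deriv k sstar * g sstar + k sstar * deriv g sstar) sstar :=
      ((((hksm.differentiable (by simp)) sstar).hasDerivAt).mul
          (((hgsm.differentiable (by simp)) sstar).hasDerivAt)).const_add 1
    rw [h1.deriv, hgs0, hdgs0]
    ring
  have hd2ne : deriv (deriv f) sstar ≠ 0 := by
    rw [hd2f]
    intro h
    apply hk'
    have : ρstar * deriv k sstar = 0 := by linarith
    rcases mul_eq_zero.mp this with h' | h'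
    · linarith
    · exact h'
  -- choose δ₀ using smallness of deriv g near sstar
  have hdgcont : Continuous (deriv g) := by
    rw [hdg]
    exact (hksm.continuous.mul hfsm.continuous).neg
  have hopen : IsOpen {s : ℝ | |deriv g s| < 1/2} := by
    have : Continuous (fun s => |deriv g s|) := hdgcont.abs
    exact isOpen_lt this continuous_const
  obtain ⟨δ₀, hδ₀pos, hδ₀ball⟩ := Metric.isOpen_iff.mp hopen sstar (by
    rw [Set.mem_setOf_eq, hdgs0]; norm_num)
  have hglip : ∀ s, |s - sstar| < δ₀ → |g s - g sstar| ≤ (1/2) * |s - sstar| := by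
    intro s hs
    have hmem : s ∈ Metric.ball sstar δ₀ := by
      rw [Metric.mem_ball, Real.dist_eq]; exact hs
    have hmem0 : sstar ∈ Metric.ball sstar δ₀ := Metric.mem_ball_self hδ₀pos
    have := Convex.norm_image_sub_le_of_norm_deriv_le (f := g) (s := Metric.ball sstar δ₀) (C := 1/2)
      (fun x _ => (hgsm.differentiable (by simp)) x)
      (fun x hx => by
        have := hδ₀ball hx
        rw [Set.mem_setOf_eq] at this
        rw [Real.norm_eq_abs]
        linarith)
      (convex_ball _ _) hmem0 hmem
    rw [Real.norm_eq_abs, Real.norm_eq_abs] at this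
    exact this
  -- the key equivalence
  have key : ∀ (ε ρ s : ℝ),
      (α s + (ε : ℂ) * T s + (ρ : ℂ) * (Complex.I * T s) = 0) ↔ (f s = -ε ∧ ρ = -g s) := by
    intro ε ρ s
    have hexp : α s + (ε : ℂ) * T s + (ρ : ℂ) * (Complex.I * T s)
        = (q s + ε + ρ * Complex.I) * T s := by
      rw [hqdef]
      simp only []
      calc α s + (ε : ℂ) * T s + (ρ : ℂ) * (Complex.I * T s)
          = α s * (T s * (starRingEnd ℂ) (T s)) + (ε : ℂ) * T s
            + (ρ : ℂ) * (Complex.I * T s) := by rw [hTT s]; ring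
        _ = _ := by ring
    rw [hexp, mul_eq_zero]
    simp only [hTne s, or_false]
    rw [Complex.ext_iff]
    simp only [Complex.add_re, Complex.add_im, Complex.mul_re, Complex.mul_im,
      Complex.I_re, Complex.I_im, Complex.ofReal_re, Complex.ofReal_im, Complex.zero_re,
      Complex.zero_im]
    constructor
    · rintro ⟨h1, h2⟩
      constructor
      · rw [hfdef]; simp only []; linarith
      · rw [hgdef]; simp only []; linarith
    · rintro ⟨h1, h2⟩
      rw [hfdef] at h1
      rw [hgdef] at h2
      simp only [] at h1 h2
      constructor <;> [linarith; linarith]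
  -- apply the Morse lemma
  obtain ⟨δ, hδpos, hδle, ε₀, hε₀pos, H⟩ :=
    morse_gen f sstar hfsm hfs0 hdfs0 hd2ne δ₀ hδ₀pos
  refine ⟨δ, hδpos, ε₀, hε₀pos, ?_⟩
  intro ε hε0 hεε
  have hne0 : 0 < |(-ε)| := by rwa [abs_neg]
  have hneε : |(-ε)| < ε₀ := by rwa [abs_neg]
  obtain ⟨H1, H2⟩ := H (-ε) hne0 hneε
  constructor
  · -- two solutions
    intro hpos
    have hcond : 0 < (-ε) * deriv (deriv f) sstar := by
      rw [hd2f]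
      nlinarith
    obtain ⟨a', b', hab, hS, hda, hdb⟩ := H1 hcond
    have hamem : a' ∈ {s | f s = -ε ∧ |s - sstar| < δ} := by
      rw [hS]; left; rfl
    have hbmem : b' ∈ {s | f s = -ε ∧ |s - sstar| < δ} := by
      rw [hS]; right; rfl
    obtain ⟨hafe, haδ⟩ := hamem
    obtain ⟨hbfe, hbδ⟩ := hbmem
    have hgbound : ∀ s, |s - sstar| < δ → |(-g s) - ρstar| < δ := by
      intro s hs
      have h1 : |g s - g sstar| ≤ (1/2) * |s - sstar| :=
        hglip s (lt_of_lt_of_le hs hδle)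
      have h2 : (-g s) - ρstar = -(g s - g sstar) := by rw [hgs0]; ring
      rw [h2, abs_neg]
      calc |g s - g sstar| ≤ (1/2) * |s - sstar| := h1
        _ < δ := by
            have := abs_nonneg (s - sstar)
            linarith
    refine ⟨(a', -g a'), (b', -g b'), ?_, ?_, ?_, ?_⟩
    · intro hcontra
      exact hab (congrArg Prod.fst hcontra)
    · ext x
      simp only [Set.mem_setOf_eq, Set.mem_insert_iff, Set.mem_singleton_iff]
      constructor
      · rintro ⟨heq, hx1, hx2⟩
        rw [key ε x.2 x.1] at heq
        have hx1' : x.1 ∈ {s | f s = -ε ∧ |s - sstar| < δ} := ⟨heq.1, hx1⟩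
        rw [hS] at hx1'
        rcases hx1' with h | h
        · left
          exact Prod.ext h (by rw [heq.2, h])
        · right
          exact Prod.ext h (by rw [heq.2, h])
      · rintro (rfl | rfl)
        · exact ⟨(key ε (-g a') a').mpr ⟨hafe, rfl⟩, haδ, hgbound a' haδ⟩
        · exact ⟨(key ε (-g b') b').mpr ⟨hbfe, rfl⟩, hbδ, hgbound b' hbδ⟩
    · -- a side : ρ k < 1
      show (-g a') * k a' < 1
      have : deriv f a' = 1 + k a' * g a' := by rw [hdf]
      nlinarith
    · show 1 < (-g b') * k b'
      have : deriv f b' = 1 + k b' * g b' := by rw [hdf]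
      nlinarith
  · intro hneg
    have hcond : (-ε) * deriv (deriv f) sstar < 0 := by
      rw [hd2f]
      nlinarith
    have hempty := H2 hcond
    ext x
    simp only [Set.mem_setOf_eq, Set.mem_empty_iff_false, iff_false, not_and]
    intro heq hx1 hx2
    rw [key ε x.2 x.1] at heq
    have : x.1 ∈ {s | f s = -ε ∧ |s - sstar| < δ} := ⟨heq.1, hx1⟩
    rw [hempty] at this
    exact this
end

section
/- Let u, v : ℝ → ℝ² ∖ {0} be continuous l-periodic loops (l > 0), and let L : ℝ → GL₂(ℝ) be a continuous l-periodic family of invertible 2×2 matrices with det L(t) > 0 for all t. Identifying ℝ² with ℂ, the relative winding number is unchanged by applying L pointwise: wind(t ↦ (L(t)u(t))/(L(t)v(t))) = wind(t ↦ u(t)/v(t)), where the quotients are taken in ℂ ∖ {0}. -/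
/-!
A real 2×2 matrix `m` acts on `ℂ` as `z ↦ a z + b z̄` with `|a|² − |b|² = det m`. If `det m > 0`
then `m z = a z · D(z)`, where the distortion `D(z) = 1 + (b / a)(z̄ / z)` lies in the unit disc
around `1`, hence in the slit plane, on which `arg` is continuous. Therefore
`L u / L v = D(v)⁻¹ · D(u) · (u / v)`, and adding `arg D(u) − arg D(v)` to an angle lift of `u / v`
gives an angle lift of `L u / L v`; the correction is `l`-periodic, so the winding number is unchanged.
-/

/-- `IsWinding l γ w` says that the `l`-periodic loop `γ : ℝ → ℂ ∖ {0}` has winding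
number `w` about the origin: there is a continuous angle lift `θ` with
`γ(s) = |γ(s)|·e^{iθ(s)}` and `θ(l) − θ(0) = 2πw`. -/
def IsWinding (l : ℝ) (γ : ℝ → ℂ) (w : ℤ) : Prop :=
  ∃ θ : ℝ → ℝ, Continuous θ ∧
    (∀ s, γ s = (‖γ s‖ : ℂ) * Complex.exp ((θ s : ℂ) * Complex.I)) ∧
    θ l - θ 0 = 2 * Real.pi * w

/-- The action of a real 2×2 matrix on `ℂ ≅ ℝ²`. -/
noncomputable def mApply (m : Matrix (Fin 2) (Fin 2) ℝ) (z : ℂ) : ℂ :=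
  Complex.mk (m 0 0 * z.re + m 0 1 * z.im) (m 1 0 * z.re + m 1 1 * z.im)

open Complex ComplexConjugate

noncomputable def complexPart (m : Matrix (Fin 2) (Fin 2) ℝ) : ℂ :=
  ⟨(m 0 0 + m 1 1) / 2, (m 1 0 - m 0 1) / 2⟩

noncomputable def conjPart (m : Matrix (Fin 2) (Fin 2) ℝ) : ℂ :=
  ⟨(m 0 0 - m 1 1) / 2, (m 1 0 + m 0 1) / 2⟩

noncomputable def distortion (m : Matrix (Fin 2) (Fin 2) ℝ) (z : ℂ) : ℂ :=
  mApply m z / (complexPart m * z)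

theorem mApply_eq_complexPart_add_conjPart (m : Matrix (Fin 2) (Fin 2) ℝ) (z : ℂ) :
    mApply m z = complexPart m * z + conjPart m * conj z := by
  apply Complex.ext <;>
    simp only [mApply, complexPart, conjPart, add_re, add_im, mul_re, mul_im, conj_re, conj_im] <;>
    ring

theorem normSq_complexPart_sub_normSq_conjPart (m : Matrix (Fin 2) (Fin 2) ℝ) :
    normSq (complexPart m) - normSq (conjPart m) = m.det := by
  simp only [complexPart, conjPart, normSq_mk, Matrix.det_fin_two]
  ring

section OrientationPreserving

variable {m : Matrix (Fin 2) (Fin 2) ℝ}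

theorem norm_conjPart_lt_norm_complexPart (hm : 0 < m.det) : ‖conjPart m‖ < ‖complexPart m‖ := by
  have h := normSq_complexPart_sub_normSq_conjPart m
  rw [← sq_lt_sq₀ (norm_nonneg _) (norm_nonneg _), Complex.sq_norm, Complex.sq_norm]
  linarith

theorem complexPart_ne_zero (hm : 0 < m.det) : complexPart m ≠ 0 :=
  norm_pos_iff.mp ((norm_nonneg _).trans_lt (norm_conjPart_lt_norm_complexPart hm))

theorem distortion_eq (hm : 0 < m.det) {z : ℂ} (hz : z ≠ 0) :
    distortion m z = 1 + conjPart m / complexPart m * (conj z / z) := by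
  have ha := complexPart_ne_zero hm
  rw [distortion, mApply_eq_complexPart_add_conjPart]
  field_simp

theorem distortion_mem_slitPlane (hm : 0 < m.det) {z : ℂ} (hz : z ≠ 0) :
    distortion m z ∈ slitPlane := by
  rw [distortion_eq hm hz]
  apply mem_slitPlane_of_norm_lt_one
  have hconj : ‖conj z / z‖ = 1 := by
    rw [norm_div, norm_conj, div_self (norm_ne_zero_iff.mpr hz)]
  rw [norm_mul, hconj, mul_one, norm_div,
    div_lt_one (norm_pos_iff.mpr (complexPart_ne_zero hm))]
  exact norm_conjPart_lt_norm_complexPart hm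

theorem mApply_ne_zero (hm : 0 < m.det) {z : ℂ} (hz : z ≠ 0) : mApply m z ≠ 0 := by
  intro h
  apply slitPlane_ne_zero (distortion_mem_slitPlane hm hz)
  rw [distortion, h, zero_div]

theorem mApply_div_mApply (hm : 0 < m.det) {z w : ℂ} (hz : z ≠ 0) (hw : w ≠ 0) :
    mApply m z / mApply m w = (distortion m w)⁻¹ * (distortion m z * (z / w)) := by
  have ha := complexPart_ne_zero hm
  have hmw := mApply_ne_zero hm hw
  rw [distortion, distortion]
  field_simp

end OrientationPreserving

section Continuity

variable {X : Type*} [TopologicalSpace X] {L : X → Matrix (Fin 2) (Fin 2) ℝ} {f : X → ℂ}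

theorem Continuous.mApply (hL : Continuous L) (hf : Continuous f) :
    Continuous fun x => mApply (L x) (f x) :=
  equivRealProdCLM.symm.continuous.comp
    (by fun_prop : Continuous fun x =>
      (L x 0 0 * (f x).re + L x 0 1 * (f x).im, L x 1 0 * (f x).re + L x 1 1 * (f x).im))

theorem Continuous.complexPart (hL : Continuous L) : Continuous fun x => complexPart (L x) :=
  equivRealProdCLM.symm.continuous.comp
    (by fun_prop : Continuous fun x => ((L x 0 0 + L x 1 1) / 2, (L x 1 0 - L x 0 1) / 2))

theorem Continuous.distortion (hL : Continuous L) (hLdet : ∀ x, 0 < (L x).det)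
    (hf : Continuous f) (hf0 : ∀ x, f x ≠ 0) : Continuous fun x => distortion (L x) (f x) :=
  (hL.mApply hf).div (hL.complexPart.mul hf)
    fun x => mul_ne_zero (complexPart_ne_zero (hLdet x)) (hf0 x)

end Continuity

theorem Complex.inv_mem_slitPlane {z : ℂ} (hz : z ∈ slitPlane) : z⁻¹ ∈ slitPlane := by
  have hn : 0 < normSq z := normSq_pos.mpr (slitPlane_ne_zero hz)
  rw [mem_slitPlane_iff] at hz ⊢
  rw [inv_re, inv_im]
  rcases hz with hre | him
  · exact Or.inl (div_pos hre hn)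
  · exact Or.inr (div_ne_zero (neg_ne_zero.mpr him) hn.ne')

theorem IsWinding.mul_of_mem_slitPlane {l : ℝ} {γ Q : ℝ → ℂ} {w : ℤ} (h : IsWinding l γ w)
    (hQ : Continuous Q) (hQs : ∀ t, Q t ∈ slitPlane) (hQl : Q l = Q 0) :
    IsWinding l (fun t => Q t * γ t) w := by
  obtain ⟨θ, hθ, hγ, hθl⟩ := h
  refine ⟨fun t => θ t + arg (Q t), hθ.add ?_, fun t => ?_, ?_⟩
  · exact continuous_iff_continuousAt.mpr fun t => (continuousAt_arg (hQs t)).comp hQ.continuousAt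
  · show Q t * γ t = _
    conv_lhs => rw [← norm_mul_exp_arg_mul_I (Q t), hγ t]
    rw [norm_mul]
    push_cast
    rw [add_mul, exp_add]
    ring
  · simp only [hQl]
    linarith

theorem relative_winding_invariant_under_orientation_preserving_maps_general
    (l : ℝ) (u v : ℝ → ℂ)
    (hu : Continuous u) (hv : Continuous v)
    (hu0 : ∀ t, u t ≠ 0) (hv0 : ∀ t, v t ≠ 0)
    (hup : Function.Periodic u l) (hvp : Function.Periodic v l)
    (L : ℝ → Matrix (Fin 2) (Fin 2) ℝ)
    (hL : Continuous L) (hLp : Function.Periodic L l)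
    (hLdet : ∀ t, 0 < (L t).det)
    (w : ℤ)
    (hw : IsWinding l (fun t => u t / v t) w) :
    IsWinding l (fun t => mApply (L t) (u t) / mApply (L t) (v t)) w := by
  have hD : ∀ f : ℝ → ℂ, Continuous f → (∀ t, f t ≠ 0) → Function.Periodic f l →
      Continuous (fun t => distortion (L t) (f t)) ∧ (∀ t, distortion (L t) (f t) ∈ slitPlane) ∧
        distortion (L l) (f l) = distortion (L 0) (f 0) := fun f hf hf0 hfp =>
    ⟨hL.distortion hLdet hf hf0, fun t => distortion_mem_slitPlane (hLdet t) (hf0 t),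
      by simpa using congrArg₂ distortion (hLp 0) (hfp 0)⟩
  obtain ⟨hDu, hDus, hDul⟩ := hD u hu hu0 hup
  obtain ⟨hDv, hDvs, hDvl⟩ := hD v hv hv0 hvp
  have h := (hw.mul_of_mem_slitPlane hDu hDus hDul).mul_of_mem_slitPlane
    (hDv.inv₀ fun t => slitPlane_ne_zero (hDvs t)) (fun t => inv_mem_slitPlane (hDvs t))
    (congrArg Inv.inv hDvl)
  convert h using 2 with t
  exact mApply_div_mApply (hLdet t) (hu0 t) (hv0 t)

/-- Applying a continuous `l`-periodic family of orientation-preserving invertible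
matrices pointwise does not change the relative winding number of two loops. -/
theorem relative_winding_invariant_under_orientation_preserving_maps
    (l : ℝ) (hl : 0 < l)
    (u v : ℝ → ℂ)
    (hu : Continuous u) (hv : Continuous v)
    (hu0 : ∀ t, u t ≠ 0) (hv0 : ∀ t, v t ≠ 0)
    (hup : Function.Periodic u l) (hvp : Function.Periodic v l)
    (L : ℝ → Matrix (Fin 2) (Fin 2) ℝ)
    (hL : Continuous L) (hLp : Function.Periodic L l)
    (hLdet : ∀ t, 0 < (L t).det)
    (w : ℤ)
    (hw : IsWinding l (fun t => u t / v t) w) :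
    IsWinding l (fun t => mApply (L t) (u t) / mApply (L t) (v t)) w :=
  relative_winding_invariant_under_orientation_preserving_maps_general l u v hu hv hu0 hv0 hup hvp L
    hL hLp hLdet w hw
end

section
/- Let α be as in the context, with curvature k allowed to change sign. Let p ∈ ℝ² not lie on the image of α, and assume that for every stationary point s of D²_p (i.e. every s with (α(s) − p)·α'(s) = 0) one has ρ_s·k(s) ≠ 1, where ρ_s = (p − α(s))·n(s). Then the set of stationary points of D²_p in [0,l) is finite and nonempty, the number of stationary points with ρ_s·k(s) > 1 equals the number with ρ_s·k(s) < 1, and each of these counts is at least 1. -/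
open Set Filter Topology

/-- deriv of a periodic function is periodic (no differentiability needed). -/
lemma spc_periodic_deriv {f : ℝ → ℂ} {l : ℝ} (hp : Function.Periodic f l) :
    Function.Periodic (deriv f) l := by
  intro s
  have h1 : (fun x => f (x + l)) = f := funext fun x => hp x
  calc deriv f (s + l) = deriv (fun x => f (x + l)) s := (deriv_comp_add_const f l s).symm
  _ = deriv f s := by rw [h1]

lemma spc_periodic_deriv' {f : ℝ → ℝ} {l : ℝ} (hp : Function.Periodic f l) :
    Function.Periodic (deriv f) l := by
  intro s
  have h1 : (fun x => f (x + l)) = f := funext fun x => hp x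
  calc deriv f (s + l) = deriv (fun x => f (x + l)) s := (deriv_comp_add_const f l s).symm
  _ = deriv f s := by rw [h1]

/-- Sign flip between consecutive zeros. -/
lemma spc_flip (g g' : ℝ → ℝ) (hd : ∀ s, HasDerivAt g (g' s) s) {a b : ℝ}
    (hab : a < b) (ha0 : g a = 0) (hb0 : g b = 0)
    (hno : ∀ u ∈ Set.Ioo a b, g u ≠ 0)
    (ha' : 0 < g' a) (hb' : g' b ≠ 0) : g' b < 0 := by
  have hcont : Continuous g := by
    rw [continuous_iff_continuousAt]; exact fun x => (hd x).continuousAt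
  -- find u in Ioo a b with g u > 0
  have hsa : Filter.Tendsto (slope g a) (𝓝[≠] a) (𝓝 (g' a)) :=
    hasDerivAt_iff_tendsto_slope.1 (hd a)
  have h1 : ∀ᶠ u in 𝓝[≠] a, 0 < slope g a u := hsa.eventually (eventually_gt_nhds ha')
  have hsub : Set.Ioi a ⊆ {a}ᶜ := fun x hx => ne_of_gt hx
  have h1' : ∀ᶠ u in 𝓝[>] a, 0 < slope g a u := h1.filter_mono (nhdsWithin_mono a hsub)
  have h2 : ∀ᶠ u in 𝓝[>] a, u ∈ Set.Ioo a b :=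
    eventually_of_mem (Ioo_mem_nhdsGT_of_mem ⟨le_refl a, hab⟩) (fun x hx => hx)
  obtain ⟨u, hu1, hu2⟩ := (h1'.and h2).exists
  have hgu : 0 < g u := by
    rw [slope_def_field, ha0, sub_zero] at hu1
    rcases div_pos_iff.1 hu1 with ⟨h, _⟩ | ⟨_, h⟩
    · exact h
    · linarith [hu2.1]
  -- all of Ioo a b positive
  have hpos : ∀ v ∈ Set.Ioo a b, 0 < g v := by
    intro v hv
    by_contra hvn
    have hvneg : g v < 0 := lt_of_le_of_ne (not_lt.1 hvn) (hno v hv)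
    have huv : u ≠ v := by intro h; rw [h] at hgu; linarith
    rcases lt_or_gt_of_ne huv with h | h
    · obtain ⟨w, hw, hw0⟩ := intermediate_value_Icc' (le_of_lt h) hcont.continuousOn
        (⟨le_of_lt hvneg, le_of_lt hgu⟩ : (0:ℝ) ∈ Set.Icc (g v) (g u))
      exact hno w ⟨lt_of_lt_of_le hu2.1 hw.1, lt_of_le_of_lt hw.2 hv.2⟩ hw0
    · obtain ⟨w, hw, hw0⟩ := intermediate_value_Icc (le_of_lt h) hcont.continuousOn
        (⟨le_of_lt hvneg, le_of_lt hgu⟩ : (0:ℝ) ∈ Set.Icc (g v) (g u))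
      exact hno w ⟨lt_of_lt_of_le hv.1 hw.1, lt_of_le_of_lt hw.2 hu2.2⟩ hw0
  -- slope at b from the left is negative
  have hsb : Filter.Tendsto (slope g b) (𝓝[≠] b) (𝓝 (g' b)) :=
    hasDerivAt_iff_tendsto_slope.1 (hd b)
  have hsub' : Set.Iio b ⊆ {b}ᶜ := fun x hx => ne_of_lt hx
  have hsb' : Filter.Tendsto (slope g b) (𝓝[<] b) (𝓝 (g' b)) :=
    hsb.mono_left (nhdsWithin_mono b hsub')
  have h3 : ∀ᶠ u in 𝓝[<] b, u ∈ Set.Ioo a b :=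
    eventually_of_mem (Ioo_mem_nhdsLT_of_mem ⟨hab, le_refl b⟩) (fun x hx => hx)
  have h4 : ∀ᶠ u in 𝓝[<] b, slope g b u ≤ 0 := by
    filter_upwards [h3] with u hu
    rw [slope_def_field, hb0, sub_zero]
    exact le_of_lt (div_neg_of_pos_of_neg (hpos u hu) (by linarith [hu.2]))
  have : g' b ≤ 0 := le_of_tendsto hsb' h4
  exact lt_of_le_of_ne this hb'

/-- at a global min of F with F' = 2g, we have g = 0 and g' > 0. -/
lemma spc_min (g g' F : ℝ → ℝ) (hd : ∀ s, HasDerivAt g (g' s) s)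
    (hF : ∀ s, HasDerivAt F (2 * g s) s) (s₁ : ℝ) (hmin : ∀ x, F s₁ ≤ F x)
    (hnd : g s₁ = 0 → g' s₁ ≠ 0) : g s₁ = 0 ∧ 0 < g' s₁ := by
  have hloc : IsLocalMin F s₁ := Filter.Eventually.of_forall hmin
  have h2 : 2 * g s₁ = 0 := hloc.hasDerivAt_eq_zero (hF s₁)
  have hg0 : g s₁ = 0 := by linarith
  refine ⟨hg0, ?_⟩
  by_contra hn
  have hneg : g' s₁ < 0 := lt_of_le_of_ne (not_lt.1 hn) (hnd hg0)
  have hsa : Filter.Tendsto (slope g s₁) (𝓝[≠] s₁) (𝓝 (g' s₁)) :=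
    hasDerivAt_iff_tendsto_slope.1 (hd s₁)
  have h1 : ∀ᶠ u in 𝓝[≠] s₁, slope g s₁ u < 0 := hsa.eventually (eventually_lt_nhds hneg)
  have hsub : Set.Ioi s₁ ⊆ {s₁}ᶜ := fun x hx => ne_of_gt hx
  have h1' : {u | slope g s₁ u < 0} ∈ 𝓝[>] s₁ := (nhdsWithin_mono s₁ hsub) h1
  obtain ⟨c, hc, hcsub⟩ := mem_nhdsGT_iff_exists_Ioo_subset.1 h1'
  have hc' : s₁ < c := hc
  have hgneg : ∀ u ∈ Set.Ioo s₁ c, g u < 0 := by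
    intro u hu
    have := hcsub hu
    simp only [Set.mem_setOf_eq, slope_def_field, hg0, sub_zero] at this
    rcases div_neg_iff.1 this with ⟨_, h⟩ | ⟨h, _⟩
    · linarith [hu.1]
    · exact h
  set b := (s₁ + c) / 2 with hb
  have hsb : s₁ < b := by simp only [hb]; linarith [hc']
  have hbc : b < c := by simp only [hb]; linarith [hc']
  obtain ⟨w, hw, hweq⟩ := exists_hasDerivAt_eq_slope F (fun x => 2 * g x) hsb
    (fun x _ => (hF x).continuousAt.continuousWithinAt) (fun x _ => hF x)
  have hgw : g w < 0 := hgneg w ⟨hw.1, lt_trans hw.2 hbc⟩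
  have : (F b - F s₁) / (b - s₁) < 0 := by rw [← hweq]; linarith
  rcases div_neg_iff.1 this with ⟨_, h⟩ | ⟨h, _⟩
  · linarith
  · linarith [hmin b]


theorem spc_key (l : ℝ) (hl : 0 < l) (g g' F : ℝ → ℝ)
    (hd : ∀ s, HasDerivAt g (g' s) s)
    (hgper : Function.Periodic g l) (hg'per : Function.Periodic g' l)
    (hF : ∀ s, HasDerivAt F (2 * g s) s) (hFper : Function.Periodic F l)
    (hnd : ∀ s, g s = 0 → g' s ≠ 0) :
    ({s ∈ Set.Ico 0 l | g s = 0}).Finite ∧ ({s ∈ Set.Ico 0 l | g s = 0}).Nonempty ∧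
      {s ∈ {s ∈ Set.Ico 0 l | g s = 0} | g' s < 0}.ncard
        = {s ∈ {s ∈ Set.Ico 0 l | g s = 0} | 0 < g' s}.ncard ∧
      {s ∈ {s ∈ Set.Ico 0 l | g s = 0} | g' s < 0}.Nonempty ∧
      {s ∈ {s ∈ Set.Ico 0 l | g s = 0} | 0 < g' s}.Nonempty := by
  set Z := {s ∈ Set.Ico 0 l | g s = 0} with hZ
  have hcont : Continuous g := by
    rw [continuous_iff_continuousAt]; exact fun x => (hd x).continuousAt
  -- isolated zeros
  have hiso : ∀ a, g a = 0 → {u | g u ≠ 0} ∈ 𝓝[≠] a := by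
    intro a ha
    have hsa : Filter.Tendsto (slope g a) (𝓝[≠] a) (𝓝 (g' a)) :=
      hasDerivAt_iff_tendsto_slope.1 (hd a)
    have h1 : ∀ᶠ u in 𝓝[≠] a, slope g a u ≠ 0 := hsa.eventually (eventually_ne_nhds (hnd a ha))
    have h2 : ∀ᶠ u in 𝓝[≠] a, u ≠ a := eventually_mem_nhdsWithin.mono (fun x hx => hx)
    filter_upwards [h1, h2] with u h1u h2u
    intro hgu
    apply h1u
    rw [slope_def_field, hgu, ha]; simp
  -- finiteness
  have hZfin : Z.Finite := by
    have hWc : IsCompact (Set.Icc (0:ℝ) l ∩ {s | g s = 0}) :=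
      isCompact_Icc.inter_right (isClosed_eq hcont continuous_const)
    have hWd : DiscreteTopology ↑(Set.Icc (0:ℝ) l ∩ {s | g s = 0}) := by
      rw [discreteTopology_subtype_iff]
      intro x hx
      rw [← le_bot_iff]
      have h1 : {u | g u ≠ 0} ∈ 𝓝[≠] x ⊓ Filter.principal (Set.Icc 0 l ∩ {s | g s = 0}) :=
        Filter.mem_inf_of_left (hiso x hx.2)
      have h2 : (Set.Icc 0 l ∩ {s | g s = 0}) ∈
          𝓝[≠] x ⊓ Filter.principal (Set.Icc 0 l ∩ {s | g s = 0}) :=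
        Filter.mem_inf_of_right (Filter.mem_principal_self _)
      have h3 : {u | g u ≠ 0} ∩ (Set.Icc 0 l ∩ {s | g s = 0}) = ∅ := by
        ext u; simp only [Set.mem_inter_iff, Set.mem_setOf_eq, Set.mem_empty_iff_false]
        tauto
      intro t _
      have : (∅ : Set ℝ) ∈ 𝓝[≠] x ⊓ Filter.principal (Set.Icc 0 l ∩ {s | g s = 0}) := by
        rw [← h3]; exact Filter.inter_mem h1 h2
      exact Filter.mem_of_superset this (by simp)
    have hWfin := hWc.finite (isDiscrete_iff_discreteTopology.2 hWd)
    apply hWfin.subset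
    rintro s ⟨hs1, hs2⟩
    exact ⟨⟨hs1.1, le_of_lt hs1.2⟩, hs2⟩
  -- global min / max
  have hFc : Continuous F := by
    rw [continuous_iff_continuousAt]; exact fun x => (hF x).continuousAt
  obtain ⟨s₀, hs₀mem, hs₀min⟩ := isCompact_Icc.exists_isMinOn (Set.nonempty_Icc.2 (le_of_lt hl))
    hFc.continuousOn
  obtain ⟨s₁, hs₁, hFs₁⟩ := hFper.exists_mem_Ico₀ hl s₀
  have hgmin : ∀ x, F s₁ ≤ F x := by
    intro x
    obtain ⟨y, hy, hxy⟩ := hFper.exists_mem_Ico₀ hl x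
    rw [hxy, ← hFs₁]
    exact hs₀min ⟨hy.1, le_of_lt hy.2⟩
  obtain ⟨hgs₁, hg's₁⟩ := spc_min g g' F hd hF s₁ hgmin (hnd s₁)
  have hs₁Z : s₁ ∈ Z := ⟨hs₁, hgs₁⟩
  have hZne : Z.Nonempty := ⟨s₁, hs₁Z⟩
  -- max (apply spc_min to -F)
  obtain ⟨t₀, ht₀mem, ht₀max⟩ := isCompact_Icc.exists_isMaxOn (Set.nonempty_Icc.2 (le_of_lt hl))
    hFc.continuousOn
  obtain ⟨t₁, ht₁, hFt₁⟩ := hFper.exists_mem_Ico₀ hl t₀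
  have hgmax : ∀ x, F x ≤ F t₁ := by
    intro x
    obtain ⟨y, hy, hxy⟩ := hFper.exists_mem_Ico₀ hl x
    rw [hxy, ← hFt₁]
    exact ht₀max ⟨hy.1, le_of_lt hy.2⟩
  obtain ⟨hgt₁, hg't₁⟩ := spc_min (fun s => -g s) (fun s => -g' s) (fun s => -F s)
    (fun s => (hd s).neg) (fun s => HasDerivAt.congr_deriv (hF s).neg (by ring : -(2 * g s) = 2 * -g s))
    t₁ (fun x => neg_le_neg (hgmax x))
    (by intro h; simpa using hnd t₁ (by simpa using h))
  have hgt₁' : g t₁ = 0 := by simpa using hgt₁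
  have hg't₁' : g' t₁ < 0 := by simpa using hg't₁
  have ht₁Z : t₁ ∈ Z := ⟨ht₁, hgt₁'⟩
  -- next map
  classical
  set nxt : ℝ → ℝ := fun s => if h : ({t ∈ Z | s < t}).Nonempty then sInf {t ∈ Z | s < t}
    else sInf Z with hnxt
  have hsubfin : ∀ s, ({t ∈ Z | s < t}).Finite := fun s => hZfin.subset (fun u hu => hu.1)
  have hnxt_mem : ∀ s, nxt s ∈ Z := by
    intro s
    rw [hnxt]
    by_cases h : ({t ∈ Z | s < t}).Nonempty
    · simp only [h, dif_pos]
      exact (h.csInf_mem (hsubfin s)).1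
    · simp only [h, dif_neg, not_false_iff]
      exact hZne.csInf_mem hZfin
  -- no zeros between s and nxt s / wraparound, flipping
  have hzero_in_Z : ∀ u, 0 ≤ u → u < l → g u = 0 → u ∈ Z := fun u h1 h2 h3 => ⟨⟨h1, h2⟩, h3⟩
  have hflip : ∀ s ∈ Z, (0 < g' s → g' (nxt s) < 0) ∧ (g' s < 0 → 0 < g' (nxt s)) := by
    intro s hs
    -- establish: ∃ b, g b = 0 ∧ s < b ∧ no zeros in Ioo s b ∧ g' b = g' (nxt s)
    have hmain : g (nxt s) = 0 ∧ g' (nxt s) ≠ 0 ∧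
        ∃ b, g b = 0 ∧ s < b ∧ (∀ u ∈ Set.Ioo s b, g u ≠ 0) ∧ g' b = g' (nxt s) := by
      refine ⟨(hnxt_mem s).2, hnd _ (hnxt_mem s).2, ?_⟩
      rw [hnxt]
      by_cases h : ({t ∈ Z | s < t}).Nonempty
      · simp only [h, dif_pos]
        set b := sInf {t ∈ Z | s < t} with hb
        have hbmem : b ∈ {t ∈ Z | s < t} := h.csInf_mem (hsubfin s)
        refine ⟨b, hbmem.1.2, hbmem.2, ?_, rfl⟩
        intro u hu hgu
        have huZ : u ∈ Z := hzero_in_Z u (le_trans hs.1.1 (le_of_lt hu.1))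
          (lt_trans hu.2 hbmem.1.1.2) hgu
        have : b ≤ u := csInf_le (hsubfin s).bddBelow ⟨huZ, hu.1⟩
        linarith [hu.2]
      · simp only [h, dif_neg, not_false_iff]
        set m := sInf Z with hm
        have hmmem : m ∈ Z := hZne.csInf_mem hZfin
        refine ⟨m + l, by rw [hgper m]; exact hmmem.2, ?_, ?_, hg'per m⟩
        · calc s < l := hs.1.2
          _ ≤ m + l := by linarith [hmmem.1.1]
        · intro u hu hgu
          rcases lt_or_ge u l with hul | hul
          · exact h ⟨u, hzero_in_Z u (le_trans hs.1.1 (le_of_lt hu.1)) hul hgu, hu.1⟩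
          · have h1 : g (u - l) = 0 := by
              have := hgper (u - l); rw [sub_add_cancel] at this; rw [← this]; exact hgu
            have h2 : u - l ∈ Z := hzero_in_Z (u - l) (by linarith)
              (by linarith [hmmem.1.2, hu.2]) h1
            have : m ≤ u - l := csInf_le hZfin.bddBelow h2
            linarith [hu.2]
    obtain ⟨hb0, hbne, b, hgb, hsb, hno, hg'b⟩ := hmain
    constructor
    · intro hpos
      rw [← hg'b]
      exact spc_flip g g' hd hsb hs.2 hgb hno hpos (by rw [hg'b]; exact hbne)
    · intro hneg
      have := spc_flip (fun x => -g x) (fun x => -g' x) (fun x => (hd x).neg) hsb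
        (by simp [hs.2]) (by simp [hgb]) (fun u hu => by simpa using hno u hu)
        (by simpa using hneg) (by simpa [hg'b] using hbne)
      rw [← hg'b]
      simpa using this
  -- injectivity of nxt on Z
  have hnxt_gt : ∀ s, ({t ∈ Z | s < t}).Nonempty → s < nxt s := by
    intro s h
    rw [hnxt]
    simp only [h, dif_pos]
    exact (h.csInf_mem (hsubfin s)).2
  have hinj : ∀ s ∈ Z, ∀ t ∈ Z, s < t → nxt s ≠ nxt t := by
    intro s hs t ht hst
    have hne : ({u ∈ Z | s < u}).Nonempty := ⟨t, ht, hst⟩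
    have h1 : nxt s ≤ t := by
      rw [hnxt]; simp only [hne, dif_pos]
      exact csInf_le (hsubfin s).bddBelow ⟨ht, hst⟩
    by_cases h : ({u ∈ Z | t < u}).Nonempty
    · have h2 : t < nxt t := hnxt_gt t h
      intro hE; rw [hE] at h1; linarith
    · have h2 : nxt t ≤ s := by
        rw [hnxt]; simp only [h, dif_neg, not_false_iff]
        exact csInf_le hZfin.bddBelow hs
      have h3 : s < nxt s := hnxt_gt s hne
      intro hE; rw [hE] at h3; linarith
  have hInjOn : Set.InjOn nxt Z := by
    intro s hs t ht hE
    by_contra hne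
    rcases lt_or_gt_of_ne hne with h | h
    · exact hinj s hs t ht h hE
    · exact hinj t ht s hs h hE.symm
  -- counting
  set P := {s ∈ Z | 0 < g' s} with hP
  set N := {s ∈ Z | g' s < 0} with hN
  have hPfin : P.Finite := hZfin.subset (fun u hu => hu.1)
  have hNfin : N.Finite := hZfin.subset (fun u hu => hu.1)
  have hPN : ∀ a ∈ P, nxt a ∈ N := fun a ha => ⟨hnxt_mem a, (hflip a ha.1).1 ha.2⟩
  have hNP : ∀ a ∈ N, nxt a ∈ P := fun a ha => ⟨hnxt_mem a, (hflip a ha.1).2 ha.2⟩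
  have hle1 : P.ncard ≤ N.ncard :=
    Set.ncard_le_ncard_of_injOn nxt hPN (hInjOn.mono (fun u hu => hu.1)) hNfin
  have hle2 : N.ncard ≤ P.ncard :=
    Set.ncard_le_ncard_of_injOn nxt hNP (hInjOn.mono (fun u hu => hu.1)) hPfin
  have hcard : N.ncard = P.ncard := le_antisymm hle2 hle1
  have hPne : P.Nonempty := ⟨s₁, hs₁Z, hg's₁⟩
  have hNne : N.Nonempty := ⟨t₁, ht₁Z, hg't₁'⟩
  exact ⟨hZfin, hZne, hcard, hNne, hPne⟩

/-- With curvature allowed to change sign: if every stationary point `s` of `D²_p`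
satisfies `ρ_s·k(s) ≠ 1`, then the set of stationary points (per period) is finite
and nonempty, the number of stationary points with `ρ_s·k(s) > 1` equals the number
with `ρ_s·k(s) < 1`, and both counts are at least 1. -/
theorem stationary_points_count_general_curvature
    (l : ℝ) (hl : 0 < l) (α : ℝ → ℂ)
    (hα : ContDiff ℝ (⊤ : ℕ∞) α)
    (hper : Function.Periodic α l)
    (hunit : ∀ s, ‖deriv α s‖ = 1)
    (k : ℝ → ℝ)
    (hk : ∀ s, deriv (deriv α) s = (k s : ℂ) * (Complex.I * deriv α s))
    (p : ℂ)
    (hpα : p ∉ Set.range α)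
    (ρ : ℝ → ℝ) (hρ : ∀ s, ρ s = dotR (p - α s) (Complex.I * deriv α s))
    (hnd : ∀ s, dotR (α s - p) (deriv α s) = 0 → ρ s * k s ≠ 1)
    (S : Set ℝ) (hS : S = {s ∈ Set.Ico 0 l | dotR (α s - p) (deriv α s) = 0}) :
    S.Finite ∧ S.Nonempty ∧
    {s ∈ S | 1 < ρ s * k s}.ncard = {s ∈ S | ρ s * k s < 1}.ncard ∧
    {s ∈ S | 1 < ρ s * k s}.Nonempty ∧
    {s ∈ S | ρ s * k s < 1}.Nonempty := by
  have hd1 : ∀ s, HasDerivAt α (deriv α s) s := fun s =>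
    ((hα.differentiable (by simp)) s).hasDerivAt
  have hd2 : ∀ s, HasDerivAt (deriv α) (deriv (deriv α) s) s := by
    intro s
    have hf' : ContDiff ℝ (↑(⊤:ℕ∞)) α := hα.of_le (by simp)
    have h1 := ContDiff.iterate_deriv (𝕜 := ℝ) 1 hf'
    simp only [Function.iterate_one] at h1
    exact ((h1.differentiable (by simp)) s).hasDerivAt
  set g : ℝ → ℝ := fun s => dotR (α s - p) (deriv α s) with hgdef
  set g' : ℝ → ℝ := fun s => 1 - ρ s * k s with hg'def
  set F : ℝ → ℝ := fun s => dotR (α s - p) (α s - p) with hFdef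
  have hre : ∀ s, HasDerivAt (fun x => (α x - p).re) ((deriv α s).re) s := fun s =>
    (Complex.reCLM.hasFDerivAt.comp_hasDerivAt s ((hd1 s).sub_const p) :)
  have him : ∀ s, HasDerivAt (fun x => (α x - p).im) ((deriv α s).im) s := fun s =>
    (Complex.imCLM.hasFDerivAt.comp_hasDerivAt s ((hd1 s).sub_const p) :)
  have hre2 : ∀ s, HasDerivAt (fun x => (deriv α x).re) ((deriv (deriv α) s).re) s := fun s =>
    (Complex.reCLM.hasFDerivAt.comp_hasDerivAt s (hd2 s) :)
  have him2 : ∀ s, HasDerivAt (fun x => (deriv α x).im) ((deriv (deriv α) s).im) s := fun s =>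
    (Complex.imCLM.hasFDerivAt.comp_hasDerivAt s (hd2 s) :)
  have hn1 : ∀ s, (deriv α s).re ^ 2 + (deriv α s).im ^ 2 = 1 := by
    intro s
    have h1 : Complex.normSq (deriv α s) = 1 := by
      rw [← Complex.sq_norm, hunit s]; norm_num
    rw [Complex.normSq_apply] at h1
    nlinarith [h1]
  have hg : ∀ s, HasDerivAt g (g' s) s := by
    intro s
    have h := ((hre s).mul (hre2 s)).add ((him s).mul (him2 s))
    have hval : (deriv α s).re * (deriv α s).re + (α s - p).re * (deriv (deriv α) s).re +
        ((deriv α s).im * (deriv α s).im + (α s - p).im * (deriv (deriv α) s).im) = g' s := by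
      rw [hg'def]
      simp only [hρ s, hk s, dotR, Complex.mul_re, Complex.mul_im, Complex.I_re, Complex.I_im,
        Complex.ofReal_re, Complex.ofReal_im, Complex.sub_re, Complex.sub_im]
      nlinarith [hn1 s]
    rw [← hval]
    exact h
  have hFd : ∀ s, HasDerivAt F (2 * g s) s := by
    intro s
    have h := ((hre s).mul (hre s)).add ((him s).mul (him s))
    have hval : (deriv α s).re * (α s - p).re + (α s - p).re * (deriv α s).re +
        ((deriv α s).im * (α s - p).im + (α s - p).im * (deriv α s).im) = 2 * g s := by
      rw [hgdef]; simp only [dotR]; ring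
    rw [← hval]
    exact h
  have hdper : Function.Periodic (deriv α) l := spc_periodic_deriv hper
  have hgper : Function.Periodic g l := by
    intro x
    rw [hgdef]
    simp only [hper x, hdper x]
  have hFper : Function.Periodic F l := by
    intro x
    rw [hFdef]
    simp only [hper x]
  have hg'per : Function.Periodic g' l := by
    have hde : deriv g = g' := funext fun s => (hg s).deriv
    rw [← hde]
    exact spc_periodic_deriv' hgper
  have hnd' : ∀ s, g s = 0 → g' s ≠ 0 := by
    intro s hgs
    rw [hg'def]
    exact sub_ne_zero.2 (Ne.symm (hnd s hgs))
  obtain ⟨h1, h2, h3, h4, h5⟩ := spc_key l hl g g' F hg hgper hg'per hFd hFper hnd'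
  have hSZ : S = {s ∈ Set.Ico 0 l | g s = 0} := hS
  have e1 : {s ∈ S | 1 < ρ s * k s} = {s ∈ {s ∈ Set.Ico 0 l | g s = 0} | g' s < 0} := by
    rw [hSZ]
    ext x
    simp only [Set.mem_setOf_eq, hg'def]
    constructor
    · rintro ⟨h, h'⟩; exact ⟨h, by linarith⟩
    · rintro ⟨h, h'⟩; exact ⟨h, by linarith⟩
  have e2 : {s ∈ S | ρ s * k s < 1} = {s ∈ {s ∈ Set.Ico 0 l | g s = 0} | 0 < g' s} := by
    rw [hSZ]
    ext x
    simp only [Set.mem_setOf_eq, hg'def]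
    constructor
    · rintro ⟨h, h'⟩; exact ⟨h, by linarith⟩
    · rintro ⟨h, h'⟩; exact ⟨h, by linarith⟩
  rw [hSZ] at *
  rw [e1, e2]
  exact ⟨h1, h2, h3, h4, h5⟩
end

section
/- Let σ : U → ℝ³ be a smooth immersion as in the context, q ∈ U, ρ ∈ ℝ, and p = σ(q) + ρ n(q). Then q is a critical point of the distance-squared function D²_p(u,v) = |σ(u,v) − p|², and the Hessian matrix of D²_p at q equals 2(g(q) − ρ h(q)), where g and h are the matrices of the first and second fundamental forms. In particular, the sign of the determinant of the Hessian of D²_p at q equals the sign of det(g(q) − ρ h(q)), which equals the sign of (1 − ρ k₁)(1 − ρ k₂) with k₁, k₂ the principal curvatures at q. -/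
/-- The dot product on `ℝ³ = Fin 3 → ℝ`. -/
noncomputable def dot3 (a b : Fin 3 → ℝ) : ℝ := a 0 * b 0 + a 1 * b 1 + a 2 * b 2

lemma real_sign_mul_pos {c x : ℝ} (hc : 0 < c) : Real.sign (c * x) = Real.sign x := by
  rcases lt_trichotomy x 0 with h | h | h
  · rw [Real.sign_of_neg h, Real.sign_of_neg (mul_neg_of_pos_of_neg hc h)]
  · simp [h, Real.sign_zero]
  · rw [Real.sign_of_pos h, Real.sign_of_pos (mul_pos hc h)]

/-- `dot3` against a fixed vector, as a continuous linear map. -/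
noncomputable def dotCLM (c : Fin 3 → ℝ) : (Fin 3 → ℝ) →L[ℝ] ℝ :=
  c 0 • ContinuousLinearMap.proj 0 + c 1 • ContinuousLinearMap.proj 1 +
    c 2 • ContinuousLinearMap.proj 2

lemma dotCLM_apply (c a : Fin 3 → ℝ) : dotCLM c a = dot3 a c := by
  simp [dotCLM, dot3]; ring

lemma hasFDerivAt_dot3 {f g : ℝ × ℝ → Fin 3 → ℝ} {f' g' : ℝ × ℝ →L[ℝ] (Fin 3 → ℝ)}
    {x : ℝ × ℝ} (hf : HasFDerivAt f f' x) (hg : HasFDerivAt g g' x) :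
    HasFDerivAt (fun y => dot3 (f y) (g y))
      ((dotCLM (g x)).comp f' + (dotCLM (f x)).comp g') x := by
  have hfi : ∀ i : Fin 3, HasFDerivAt (fun y => f y i)
      ((ContinuousLinearMap.proj i).comp f') x :=
    fun i => (ContinuousLinearMap.proj (R := ℝ) (φ := fun _ : Fin 3 => ℝ) i).hasFDerivAt.comp x hf
  have hgi : ∀ i : Fin 3, HasFDerivAt (fun y => g y i)
      ((ContinuousLinearMap.proj i).comp g') x :=
    fun i => (ContinuousLinearMap.proj (R := ℝ) (φ := fun _ : Fin 3 => ℝ) i).hasFDerivAt.comp x hg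
  have h := (((hfi 0).mul (hgi 0)).add ((hfi 1).mul (hgi 1))).add ((hfi 2).mul (hgi 2))
  have heq : (fun y => dot3 (f y) (g y)) =
      fun y => (f y 0 * g y 0 + f y 1 * g y 1) + f y 2 * g y 2 := by
    funext y; simp [dot3]
  rw [heq]
  refine h.congr_fderiv ?_
  refine ContinuousLinearMap.ext fun v => ?_
  simp [dotCLM, dot3]
  ring

/-- Positivity of the Gram determinant of two linearly independent vectors in `ℝ³`. -/
lemma gram_det_pos {a b : Fin 3 → ℝ} (hab : LinearIndependent ℝ ![a, b]) :
    0 < dot3 a a * dot3 b b - dot3 a b * dot3 a b := by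
  rw [linearIndependent_fin2] at hab
  obtain ⟨hb, hnab⟩ := hab
  simp only [Matrix.cons_val_one, Matrix.head_cons, Matrix.cons_val_zero] at hb hnab
  set c0 : ℝ := a 1 * b 2 - a 2 * b 1 with hc0
  set c1 : ℝ := a 2 * b 0 - a 0 * b 2 with hc1
  set c2 : ℝ := a 0 * b 1 - a 1 * b 0 with hc2
  have lag : dot3 a a * dot3 b b - dot3 a b * dot3 a b = c0 ^ 2 + c1 ^ 2 + c2 ^ 2 := by
    unfold dot3; rw [hc0, hc1, hc2]; ring
  rw [lag]
  rcases lt_or_eq_of_le (by positivity : (0:ℝ) ≤ c0 ^ 2 + c1 ^ 2 + c2 ^ 2) with hlt | heq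
  · exact hlt
  exfalso
  have h0 : c0 = 0 := by nlinarith [sq_nonneg c0, sq_nonneg c1, sq_nonneg c2]
  have h1 : c1 = 0 := by nlinarith [sq_nonneg c0, sq_nonneg c1, sq_nonneg c2]
  have h2 : c2 = 0 := by nlinarith [sq_nonneg c0, sq_nonneg c1, sq_nonneg c2]
  rw [hc0] at h0; rw [hc1] at h1; rw [hc2] at h2
  have hbne : ∃ i, b i ≠ 0 := by
    by_contra hcon
    push_neg at hcon
    exact hb (funext fun i => hcon i)
  obtain ⟨i, hbi⟩ := hbne
  fin_cases i
  · have hbi' : b 0 ≠ 0 := by simpa using hbi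
    refine hnab (a 0 / b 0) (funext fun j => ?_)
    fin_cases j
    · show a 0 / b 0 * b 0 = a 0; field_simp
    · show a 0 / b 0 * b 1 = a 1; rw [div_mul_eq_mul_div, div_eq_iff hbi']; linarith
    · show a 0 / b 0 * b 2 = a 2; rw [div_mul_eq_mul_div, div_eq_iff hbi']; linarith
  · have hbi' : b 1 ≠ 0 := by simpa using hbi
    refine hnab (a 1 / b 1) (funext fun j => ?_)
    fin_cases j
    · show a 1 / b 1 * b 0 = a 0; rw [div_mul_eq_mul_div, div_eq_iff hbi']; linarith
    · show a 1 / b 1 * b 1 = a 1; field_simp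
    · show a 1 / b 1 * b 2 = a 2; rw [div_mul_eq_mul_div, div_eq_iff hbi']; linarith
  · have hbi' : b 2 ≠ 0 := by simpa using hbi
    refine hnab (a 2 / b 2) (funext fun j => ?_)
    fin_cases j
    · show a 2 / b 2 * b 0 = a 0; rw [div_mul_eq_mul_div, div_eq_iff hbi']; linarith
    · show a 2 / b 2 * b 1 = a 1; rw [div_mul_eq_mul_div, div_eq_iff hbi']; linarith
    · show a 2 / b 2 * b 2 = a 2; field_simp

/-- Hessian of distance squared to a point on the normal line: if
`p = σ(q) + ρ·n(q)`, then `q` is a critical point of `D²_p = |σ − p|²` and the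
Hessian of `D²_p` at `q` equals `2(g − ρh)`; in particular the sign of the
determinant of the Hessian equals `sign det(g − ρh) = sign((1 − ρk₁)(1 − ρk₂))`. -/
theorem surface_distance_squared_hessian
    (U : Set (ℝ × ℝ)) (hU : IsOpen U)
    (σ : ℝ × ℝ → (Fin 3 → ℝ))
    (hσ : ContDiffOn ℝ (⊤ : ℕ∞) σ U)
    (σu σv σuu σuv σvv : ℝ × ℝ → (Fin 3 → ℝ))
    (hσu : ∀ x, σu x = fderiv ℝ σ x (1, 0))
    (hσv : ∀ x, σv x = fderiv ℝ σ x (0, 1))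
    (hσuu : ∀ x, σuu x = fderiv ℝ (fun y => fderiv ℝ σ y (1, 0)) x (1, 0))
    (hσuv : ∀ x, σuv x = fderiv ℝ (fun y => fderiv ℝ σ y (1, 0)) x (0, 1))
    (hσvv : ∀ x, σvv x = fderiv ℝ (fun y => fderiv ℝ σ y (0, 1)) x (0, 1))
    (himm : ∀ x ∈ U, LinearIndependent ℝ ![σu x, σv x])
    (n : ℝ × ℝ → (Fin 3 → ℝ))
    (hn : ∀ x, n x =
      (Real.sqrt (dot3 (crossProduct (σu x) (σv x)) (crossProduct (σu x) (σv x))))⁻¹ •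
        crossProduct (σu x) (σv x))
    (g h : ℝ × ℝ → Matrix (Fin 2) (Fin 2) ℝ)
    (hg : ∀ x, g x = !![dot3 (σu x) (σu x), dot3 (σu x) (σv x);
                        dot3 (σu x) (σv x), dot3 (σv x) (σv x)])
    (hh : ∀ x, h x = !![dot3 (σuu x) (n x), dot3 (σuv x) (n x);
                        dot3 (σuv x) (n x), dot3 (σvv x) (n x)])
    (q : ℝ × ℝ) (hq : q ∈ U) (ρ : ℝ)
    (k₁ k₂ : ℝ)
    (hprin : ∀ x : ℝ, Matrix.det (x • (1 : Matrix (Fin 2) (Fin 2) ℝ) - (g q)⁻¹ * h q)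
      = (x - k₁) * (x - k₂))
    (p : Fin 3 → ℝ) (hp : p = σ q + ρ • n q)
    (D2 : ℝ × ℝ → ℝ) (hD2 : ∀ x, D2 x = dot3 (σ x - p) (σ x - p))
    (e : Fin 2 → ℝ × ℝ) (he : e = ![(1, 0), (0, 1)])
    (Hess : Matrix (Fin 2) (Fin 2) ℝ)
    (hHess : Hess = Matrix.of fun i j => fderiv ℝ (fun x => fderiv ℝ D2 x (e j)) q (e i)) :
    fderiv ℝ D2 q = 0 ∧
    Hess = (2 : ℝ) • (g q - ρ • h q) ∧
    Real.sign Hess.det = Real.sign (g q - ρ • h q).det ∧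
    Real.sign (g q - ρ • h q).det = Real.sign ((1 - ρ * k₁) * (1 - ρ * k₂)) := by
  have hUq : U ∈ nhds q := hU.mem_nhds hq
  have hdiffOn : DifferentiableOn ℝ σ U := hσ.differentiableOn (by simp)
  have hσat : ∀ x ∈ U, HasFDerivAt σ (fderiv ℝ σ x) x := fun x hx =>
    (hdiffOn.differentiableAt (hU.mem_nhds hx)).hasFDerivAt
  have hD2fun : D2 = fun y => dot3 (σ y - p) (σ y - p) := funext hD2
  have hD2' : ∀ x ∈ U, HasFDerivAt D2
      ((dotCLM (σ x - p)).comp (fderiv ℝ σ x) + (dotCLM (σ x - p)).comp (fderiv ℝ σ x)) x := by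
    intro x hx
    have h1 : HasFDerivAt (fun y => σ y - p) (fderiv ℝ σ x) x := (hσat x hx).sub_const p
    rw [hD2fun]
    exact hasFDerivAt_dot3 h1 h1
  have hortho : ∀ x, dot3 (σu x) (n x) = 0 ∧ dot3 (σv x) (n x) = 0 := by
    intro x
    rw [hn x]
    constructor <;>
    · simp only [dot3, cross_apply, Pi.smul_apply, smul_eq_mul, Matrix.cons_val_zero,
        Matrix.cons_val_one, Matrix.head_cons, Matrix.cons_val_two, Matrix.tail_cons]
      ring
  have hσqp : σ q - p = -(ρ • n q) := by rw [hp]; abel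
  have hvdec : ∀ (L : (ℝ × ℝ) →L[ℝ] (Fin 3 → ℝ)) (v : ℝ × ℝ),
      L v = v.1 • L (1, 0) + v.2 • L (0, 1) := by
    intro L v
    have hv : v = v.1 • ((1 : ℝ), (0 : ℝ)) + v.2 • ((0 : ℝ), (1 : ℝ)) := by
      simp [Prod.ext_iff]
    conv_lhs => rw [hv]
    rw [map_add, map_smul, map_smul]
  -- Part 1 : critical point
  have hcrit : fderiv ℝ D2 q = 0 := by
    rw [(hD2' q hq).fderiv]
    refine ContinuousLinearMap.ext fun v => ?_
    simp only [ContinuousLinearMap.add_apply, ContinuousLinearMap.comp_apply, dotCLM_apply,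
      ContinuousLinearMap.zero_apply]
    rw [hvdec (fderiv ℝ σ q) v, hσqp, ← hσu q, ← hσv q]
    have h1 := (hortho q).1
    have h2 := (hortho q).2
    simp only [dot3, Pi.add_apply, Pi.smul_apply, Pi.neg_apply, smul_eq_mul] at h1 h2 ⊢
    linear_combination (-2 * ρ * v.1) * h1 + (-2 * ρ * v.2) * h2
  -- Part 2 : the Hessian
  have hc2 : ContDiffAt ℝ (⊤ : ℕ∞) σ q := hσ.contDiffAt hUq
  have hS : DifferentiableAt ℝ (fderiv ℝ σ) q :=
    (hc2.fderiv_right (m := 1) (by exact WithTop.coe_le_coe.mpr le_top)).differentiableAt one_ne_zero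
  have happ : ∀ w : ℝ × ℝ, HasFDerivAt (fun y => fderiv ℝ σ y w)
      ((ContinuousLinearMap.apply ℝ (Fin 3 → ℝ) w).comp (fderiv ℝ (fderiv ℝ σ) q)) q :=
    fun w => ((ContinuousLinearMap.apply ℝ (Fin 3 → ℝ) w).hasFDerivAt).comp q hS.hasFDerivAt
  have hmix : ∀ w v : ℝ × ℝ, fderiv ℝ (fun y => fderiv ℝ σ y w) q v
      = fderiv ℝ (fderiv ℝ σ) q v w := fun w v => by rw [(happ w).fderiv]; rfl
  have hsymm : ∀ v w : ℝ × ℝ, fderiv ℝ (fderiv ℝ σ) q v w = fderiv ℝ (fderiv ℝ σ) q w v :=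
    hc2.isSymmSndFDerivAt (by rw [minSmoothness_of_isRCLikeNormedField]; exact WithTop.coe_le_coe.mpr le_top)
  have hfd : ∀ (w : ℝ × ℝ), ∀ x ∈ U, fderiv ℝ D2 x w
      = 2 * dot3 (σ x - p) (fderiv ℝ σ x w) := by
    intro w x hx
    rw [(hD2' x hx).fderiv]
    simp only [ContinuousLinearMap.add_apply, ContinuousLinearMap.comp_apply, dotCLM_apply]
    simp only [dot3]; ring
  have hHE : ∀ v w : ℝ × ℝ, fderiv ℝ (fun x => fderiv ℝ D2 x w) q v
      = 2 * (dot3 (fderiv ℝ σ q v) (fderiv ℝ σ q w)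
          + dot3 (σ q - p) (fderiv ℝ (fderiv ℝ σ) q v w)) := by
    intro v w
    have hev : (fun x => fderiv ℝ D2 x w) =ᶠ[nhds q]
        fun x => 2 * dot3 (σ x - p) (fderiv ℝ σ x w) := by
      filter_upwards [hUq] with x hx using hfd w x hx
    rw [hev.fderiv_eq]
    have h1 : HasFDerivAt (fun y => σ y - p) (fderiv ℝ σ q) q := (hσat q hq).sub_const p
    have h3 := (hasFDerivAt_dot3 h1 (happ w)).const_mul (2 : ℝ)
    rw [h3.fderiv]
    simp only [ContinuousLinearMap.smul_apply, ContinuousLinearMap.add_apply,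
      ContinuousLinearMap.comp_apply, dotCLM_apply, ContinuousLinearMap.apply_apply,
      smul_eq_mul]
    simp only [dot3]; ring
  have hHess2 : Hess = (2 : ℝ) • (g q - ρ • h q) := by
    rw [hHess, hg q, hh q, he]
    ext i j
    fin_cases i <;> fin_cases j
    · show fderiv ℝ (fun x => fderiv ℝ D2 x ((1:ℝ), (0:ℝ))) q ((1:ℝ), (0:ℝ)) = _
      rw [hHE, ← hmix, ← hσuu q, hσqp, ← hσu q]
      simp only [Fin.mk_zero, Fin.mk_one, Matrix.smul_apply, Matrix.sub_apply, Matrix.of_apply,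
        Matrix.cons_val', Matrix.cons_val_zero, Matrix.empty_val', Matrix.cons_val_fin_one,
        smul_eq_mul]
      simp only [dot3, Pi.neg_apply, Pi.smul_apply, smul_eq_mul]; ring
    · show fderiv ℝ (fun x => fderiv ℝ D2 x ((0:ℝ), (1:ℝ))) q ((1:ℝ), (0:ℝ)) = _
      rw [hHE, hsymm ((1:ℝ),(0:ℝ)) ((0:ℝ),(1:ℝ)), ← hmix, ← hσuv q, hσqp, ← hσu q, ← hσv q]
      simp only [Fin.mk_zero, Fin.mk_one, Matrix.smul_apply, Matrix.sub_apply, Matrix.of_apply,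
        Matrix.cons_val', Matrix.cons_val_zero, Matrix.cons_val_one, Matrix.head_cons,
        Matrix.empty_val', Matrix.cons_val_fin_one, Matrix.head_fin_const, smul_eq_mul]
      simp only [dot3, Pi.neg_apply, Pi.smul_apply, smul_eq_mul]; ring
    · show fderiv ℝ (fun x => fderiv ℝ D2 x ((1:ℝ), (0:ℝ))) q ((0:ℝ), (1:ℝ)) = _
      rw [hHE, ← hmix, ← hσuv q, hσqp, ← hσu q, ← hσv q]
      simp only [Fin.mk_zero, Fin.mk_one, Matrix.smul_apply, Matrix.sub_apply, Matrix.of_apply,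
        Matrix.cons_val', Matrix.cons_val_zero, Matrix.cons_val_one, Matrix.head_cons,
        Matrix.empty_val', Matrix.cons_val_fin_one, Matrix.head_fin_const, smul_eq_mul]
      simp only [dot3, Pi.neg_apply, Pi.smul_apply, smul_eq_mul]; ring
    · show fderiv ℝ (fun x => fderiv ℝ D2 x ((0:ℝ), (1:ℝ))) q ((0:ℝ), (1:ℝ)) = _
      rw [hHE, ← hmix, ← hσvv q, hσqp, ← hσv q]
      simp only [Fin.mk_zero, Fin.mk_one, Matrix.smul_apply, Matrix.sub_apply, Matrix.of_apply,
        Matrix.cons_val', Matrix.cons_val_zero, Matrix.cons_val_one, Matrix.head_cons,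
        Matrix.empty_val', Matrix.cons_val_fin_one, Matrix.head_fin_const, smul_eq_mul]
      simp only [dot3, Pi.neg_apply, Pi.smul_apply, smul_eq_mul]; ring
  -- Part 3 : sign of the determinant
  have hdet4 : Hess.det = 4 * (g q - ρ • h q).det := by
    rw [hHess2, Matrix.det_smul]
    norm_num
  have hsign3 : Real.sign Hess.det = Real.sign (g q - ρ • h q).det := by
    rw [hdet4, real_sign_mul_pos (by norm_num)]
  -- Part 4 : principal curvatures
  have hgpos : 0 < (g q).det := by
    rw [hg q, Matrix.det_fin_two_of]
    exact gram_det_pos (himm q hq)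
  have hfact : (g q - ρ • h q).det = (g q).det * ((1 - ρ * k₁) * (1 - ρ * k₂)) := by
    have hinv : g q * ((g q)⁻¹ * h q) = h q := by
      rw [← Matrix.mul_assoc, Matrix.mul_nonsing_inv _ (isUnit_iff_ne_zero.mpr hgpos.ne'),
        Matrix.one_mul]
    have key : g q - ρ • h q = g q * (1 - ρ • ((g q)⁻¹ * h q)) := by
      rw [Matrix.mul_sub, Matrix.mul_one, Matrix.mul_smul, hinv]
    rw [key, Matrix.det_mul]
    congr 1
    rcases eq_or_ne ρ 0 with hρ | hρ
    · simp [hρ]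
    · have h1 : (1 : Matrix (Fin 2) (Fin 2) ℝ) - ρ • ((g q)⁻¹ * h q)
          = ρ • (ρ⁻¹ • (1 : Matrix (Fin 2) (Fin 2) ℝ) - (g q)⁻¹ * h q) := by
        rw [smul_sub, smul_smul, mul_inv_cancel₀ hρ, one_smul]
      rw [h1, Matrix.det_smul, hprin ρ⁻¹]
      field_simp
      rw [Fintype.card_fin]
  have hsign4 : Real.sign (g q - ρ • h q).det = Real.sign ((1 - ρ * k₁) * (1 - ρ * k₂)) := by
    rw [hfact, real_sign_mul_pos hgpos]
  exact ⟨hcrit, hHess2, hsign3, hsign4⟩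
end

section
/- Let σ : U → ℝ³ be a smooth immersion as in the context, and let F : U × ℝ → ℝ³ be the normal map F(u,v,ρ) = σ(u,v) + ρ n(u,v). Then for all (u,v,ρ), the Jacobian determinant of F satisfies det DF(u,v,ρ) · √(det g(u,v)) = det( g(u,v) − ρ h(u,v) ). In particular DF(u,v,ρ) fails to be invertible exactly when det(g(u,v) − ρ h(u,v)) = 0, i.e. when ρ k₁ = 1 or ρ k₂ = 1 for the principal curvatures k₁, k₂ at (u,v). -/
theorem dot3_comm (a b : Fin 3 → ℝ) : dot3 a b = dot3 b a := by simp [dot3]; ring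

theorem dot3_smul_left (c : ℝ) (a b : Fin 3 → ℝ) : dot3 (c • a) b = c * dot3 a b := by
  simp [dot3]; ring

theorem fderiv_dot3 {f g : ℝ × ℝ → (Fin 3 → ℝ)} {q : ℝ × ℝ}
    (hf : DifferentiableAt ℝ f q) (hg : DifferentiableAt ℝ g q) (v : ℝ × ℝ) :
    fderiv ℝ (fun x => dot3 (f x) (g x)) q v
      = dot3 (fderiv ℝ f q v) (g q) + dot3 (f q) (fderiv ℝ g q v) := by
  have hfi : ∀ i : Fin 3, HasFDerivAt (fun x => f x i)
      ((ContinuousLinearMap.proj i).comp (fderiv ℝ f q)) q :=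
    fun i => by
      have := (ContinuousLinearMap.proj (R := ℝ) (φ := fun _ : Fin 3 => ℝ) i).hasFDerivAt.comp
        q hf.hasFDerivAt
      exact this
  have hgi : ∀ i : Fin 3, HasFDerivAt (fun x => g x i)
      ((ContinuousLinearMap.proj i).comp (fderiv ℝ g q)) q :=
    fun i => by
      have := (ContinuousLinearMap.proj (R := ℝ) (φ := fun _ : Fin 3 => ℝ) i).hasFDerivAt.comp
        q hg.hasFDerivAt
      exact this
  have H := (((hfi 0).mul (hgi 0)).add ((hfi 1).mul (hgi 1))).add ((hfi 2).mul (hgi 2))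
  have heq : (fun x => dot3 (f x) (g x))
      = fun x => ((fun x => f x 0) x * (fun x => g x 0) x + (fun x => f x 1) x * (fun x => g x 1) x)
          + (fun x => f x 2) x * (fun x => g x 2) x := by
    funext x; simp [dot3]
  rw [heq]; erw [H.fderiv]
  simp [dot3]
  ring

set_option maxHeartbeats 1600000 in
/-- The Jacobian determinant of the normal map `F(u,v,ρ) = σ(u,v) + ρ·n(u,v)` of an
immersed surface patch satisfies `det DF · √(det g) = det(g − ρh)`; in particular
`DF` fails to be invertible exactly when `det(g − ρh) = 0`, i.e. when `ρk₁ = 1` or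
`ρk₂ = 1` for the principal curvatures `k₁, k₂`. -/
theorem surface_normal_map_jacobian
    (U : Set (ℝ × ℝ)) (hU : IsOpen U)
    (σ : ℝ × ℝ → (Fin 3 → ℝ))
    (hσ : ContDiffOn ℝ (⊤ : ℕ∞) σ U)
    (σu σv σuu σuv σvv : ℝ × ℝ → (Fin 3 → ℝ))
    (hσu : ∀ x, σu x = fderiv ℝ σ x (1, 0))
    (hσv : ∀ x, σv x = fderiv ℝ σ x (0, 1))
    (hσuu : ∀ x, σuu x = fderiv ℝ (fun y => fderiv ℝ σ y (1, 0)) x (1, 0))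
    (hσuv : ∀ x, σuv x = fderiv ℝ (fun y => fderiv ℝ σ y (1, 0)) x (0, 1))
    (hσvv : ∀ x, σvv x = fderiv ℝ (fun y => fderiv ℝ σ y (0, 1)) x (0, 1))
    (himm : ∀ x ∈ U, LinearIndependent ℝ ![σu x, σv x])
    (n : ℝ × ℝ → (Fin 3 → ℝ))
    (hn : ∀ x, n x =
      (Real.sqrt (dot3 (crossProduct (σu x) (σv x)) (crossProduct (σu x) (σv x))))⁻¹ •
        crossProduct (σu x) (σv x))
    (g h : ℝ × ℝ → Matrix (Fin 2) (Fin 2) ℝ)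
    (hg : ∀ x, g x = !![dot3 (σu x) (σu x), dot3 (σu x) (σv x);
                        dot3 (σu x) (σv x), dot3 (σv x) (σv x)])
    (hh : ∀ x, h x = !![dot3 (σuu x) (n x), dot3 (σuv x) (n x);
                        dot3 (σuv x) (n x), dot3 (σvv x) (n x)])
    (F : (ℝ × ℝ) × ℝ → (Fin 3 → ℝ))
    (hF : ∀ y : (ℝ × ℝ) × ℝ, F y = σ y.1 + y.2 • n y.1)
    (E : Fin 3 → (ℝ × ℝ) × ℝ)
    (hE : E = ![((1, 0), 0), ((0, 1), 0), ((0, 0), 1)])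
    (q : ℝ × ℝ) (hq : q ∈ U) (ρ : ℝ)
    (k₁ k₂ : ℝ)
    (hprin : ∀ x : ℝ, Matrix.det (x • (1 : Matrix (Fin 2) (Fin 2) ℝ) - (g q)⁻¹ * h q)
      = (x - k₁) * (x - k₂))
    (J : Matrix (Fin 3) (Fin 3) ℝ)
    (hJ : J = Matrix.of fun i j => fderiv ℝ F (q, ρ) (E j) i) :
    J.det * Real.sqrt (g q).det = (g q - ρ • h q).det ∧
    (¬ Function.Bijective (fderiv ℝ F (q, ρ)) ↔ (g q - ρ • h q).det = 0) ∧
    ((g q - ρ • h q).det = 0 ↔ ρ * k₁ = 1 ∨ ρ * k₂ = 1) := by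
  classical
  have hmem : U ∈ nhds q := hU.mem_nhds hq
  set su : ℝ × ℝ → (Fin 3 → ℝ) := fun x => fderiv ℝ σ x (1, 0) with hsu_def
  set sv : ℝ × ℝ → (Fin 3 → ℝ) := fun x => fderiv ℝ σ x (0, 1) with hsv_def
  have hσu' : ∀ x, σu x = su x := hσu
  have hσv' : ∀ x, σv x = sv x := hσv
  -- smoothness of the first derivatives
  have hD : ContDiffOn ℝ (⊤ : ℕ∞) (fderiv ℝ σ) U := hσ.fderiv_of_isOpen hU (by simp)
  have hsuC : ContDiffOn ℝ (⊤ : ℕ∞) su U := by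
    have := (ContinuousLinearMap.apply ℝ (Fin 3 → ℝ) ((1 : ℝ), (0 : ℝ))).contDiff.comp_contDiffOn hD
    exact this
  have hsvC : ContDiffOn ℝ (⊤ : ℕ∞) sv U := by
    have := (ContinuousLinearMap.apply ℝ (Fin 3 → ℝ) ((0 : ℝ), (1 : ℝ))).contDiff.comp_contDiffOn hD
    exact this
  have hσD : DifferentiableAt ℝ σ q := (hσ.contDiffAt hmem).differentiableAt (by simp)
  have hsuD : DifferentiableAt ℝ su q := (hsuC.contDiffAt hmem).differentiableAt (by simp)
  have hsvD : DifferentiableAt ℝ sv q := (hsvC.contDiffAt hmem).differentiableAt (by simp)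
  have hDD : DifferentiableAt ℝ (fderiv ℝ σ) q := (hD.contDiffAt hmem).differentiableAt (by simp)
  -- the cross product field
  set w : ℝ × ℝ → (Fin 3 → ℝ) := fun x => crossProduct (su x) (sv x) with hw_def
  have hn' : ∀ x, n x = (Real.sqrt (dot3 (w x) (w x)))⁻¹ • w x := by
    intro x; rw [hn x, hσu' x, hσv' x]
  have hwx : ∀ x, w x = ![su x 1 * sv x 2 - su x 2 * sv x 1,
      su x 2 * sv x 0 - su x 0 * sv x 2, su x 0 * sv x 1 - su x 1 * sv x 0] := by
    intro x; rw [hw_def]; exact cross_apply _ _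
  have hsui : ∀ i, DifferentiableAt ℝ (fun x => su x i) q := fun i => by
    have := (ContinuousLinearMap.proj (R := ℝ) (φ := fun _ : Fin 3 => ℝ) i).hasFDerivAt.comp
      q hsuD.hasFDerivAt
    exact this.differentiableAt
  have hsvi : ∀ i, DifferentiableAt ℝ (fun x => sv x i) q := fun i => by
    have := (ContinuousLinearMap.proj (R := ℝ) (φ := fun _ : Fin 3 => ℝ) i).hasFDerivAt.comp
      q hsvD.hasFDerivAt
    exact this.differentiableAt
  have hwD : DifferentiableAt ℝ w q := by
    rw [show w = fun x => ![su x 1 * sv x 2 - su x 2 * sv x 1,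
      su x 2 * sv x 0 - su x 0 * sv x 2, su x 0 * sv x 1 - su x 1 * sv x 0] from funext hwx]
    rw [differentiableAt_pi]
    intro i
    fin_cases i <;> simp only [Matrix.cons_val_zero, Matrix.cons_val_one, Matrix.head_cons,
      Matrix.cons_val_two, Matrix.tail_cons] <;>
      exact ((hsui _).mul (hsvi _)).sub ((hsui _).mul (hsvi _))
  have hdD : DifferentiableAt ℝ (fun x => dot3 (w x) (w x)) q := by
    have h0 : ∀ i, DifferentiableAt ℝ (fun x => w x i) q := fun i => differentiableAt_pi.mp hwD i
    simp only [dot3]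
    exact (((h0 0).mul (h0 0)).add ((h0 1).mul (h0 1))).add ((h0 2).mul (h0 2))
  -- positivity at q
  have hwq : w q ≠ 0 := by
    rw [hw_def]
    refine crossProduct_ne_zero_iff_linearIndependent.mpr ?_
    have := himm q hq
    rwa [hσu' q, hσv' q] at this
  have hdq : 0 < dot3 (w q) (w q) := by
    obtain ⟨i, hi⟩ := Function.ne_iff.mp hwq
    have hrw : dot3 (w q) (w q) = (w q 0) ^ 2 + (w q 1) ^ 2 + (w q 2) ^ 2 := by
      simp [dot3]; ring
    rw [hrw]
    fin_cases i <;> simp only [Pi.zero_apply] at hi <;> positivity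
  have hsq : Real.sqrt (dot3 (w q) (w q)) > 0 := Real.sqrt_pos.mpr hdq
  -- differentiability of n at q
  have hnD : DifferentiableAt ℝ n q := by
    rw [show n = fun x => (Real.sqrt (dot3 (w x) (w x)))⁻¹ • w x from funext hn']
    exact ((hdD.sqrt hdq.ne').inv hsq.ne').smul hwD
  -- n is a unit vector near q
  have hev : ∀ᶠ x in nhds q, 0 < dot3 (w x) (w x) :=
    hdD.continuousAt.eventually (eventually_gt_nhds hdq)
  have hsmul2 : ∀ (c : ℝ) (a b : Fin 3 → ℝ), dot3 (c • a) (c • b) = c ^ 2 * dot3 a b := by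
    intro c a b; simp [dot3]; ring
  have hnn1 : ∀ᶠ x in nhds q, dot3 (n x) (n x) = 1 := by
    filter_upwards [hev] with x hx
    rw [hn' x, hsmul2, inv_pow, sq, Real.mul_self_sqrt hx.le, inv_mul_cancel₀ hx.ne']
  -- pointwise orthogonality n ⟂ σu, σv
  have hcrossu : ∀ x, dot3 (w x) (su x) = 0 := by
    intro x; rw [hwx x]; simp [dot3]; ring
  have hcrossv : ∀ x, dot3 (w x) (sv x) = 0 := by
    intro x; rw [hwx x]; simp [dot3]; ring
  have horthu : ∀ x, dot3 (n x) (su x) = 0 := by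
    intro x; rw [hn' x, dot3_smul_left, hcrossu x, mul_zero]
  have horthv : ∀ x, dot3 (n x) (sv x) = 0 := by
    intro x; rw [hn' x, dot3_smul_left, hcrossv x, mul_zero]
  -- derivative identities
  set nu : Fin 3 → ℝ := fderiv ℝ n q (1, 0) with hnu_def
  set nv : Fin 3 → ℝ := fderiv ℝ n q (0, 1) with hnv_def
  have hφ : ∀ v : ℝ × ℝ, dot3 (fderiv ℝ n q v) (n q) + dot3 (n q) (fderiv ℝ n q v) = 0 := by
    intro v
    have h1 : fderiv ℝ (fun x => dot3 (n x) (n x)) q = 0 := by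
      have : (fun x => dot3 (n x) (n x)) =ᶠ[nhds q] fun _ => (1 : ℝ) := hnn1
      rw [this.fderiv_eq, fderiv_fun_const]; rfl
    have h2 := fderiv_dot3 hnD hnD v
    rw [h1] at h2
    simpa using h2.symm
  have hnm : ∀ v : ℝ × ℝ, dot3 (n q) (fderiv ℝ n q v) = 0 := by
    intro v
    have := hφ v
    rw [dot3_comm (fderiv ℝ n q v) (n q)] at this
    linarith
  have hψu : ∀ v : ℝ × ℝ,
      dot3 (fderiv ℝ n q v) (su q) + dot3 (n q) (fderiv ℝ su q v) = 0 := by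
    intro v
    have h1 : fderiv ℝ (fun x => dot3 (n x) (su x)) q = 0 := by
      rw [show (fun x => dot3 (n x) (su x)) = fun _ => (0 : ℝ) from funext horthu, fderiv_fun_const]
      rfl
    have h2 := fderiv_dot3 hnD hsuD v
    rw [h1] at h2
    simpa using h2.symm
  have hψv : ∀ v : ℝ × ℝ,
      dot3 (fderiv ℝ n q v) (sv q) + dot3 (n q) (fderiv ℝ sv q v) = 0 := by
    intro v
    have h1 : fderiv ℝ (fun x => dot3 (n x) (sv x)) q = 0 := by
      rw [show (fun x => dot3 (n x) (sv x)) = fun _ => (0 : ℝ) from funext horthv, fderiv_fun_const]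
      rfl
    have h2 := fderiv_dot3 hnD hsvD v
    rw [h1] at h2
    simpa using h2.symm
  -- second derivative facts
  have happly : ∀ (v : ℝ × ℝ) (x : ℝ × ℝ),
      fderiv ℝ (fun y => fderiv ℝ σ y v) x = (ContinuousLinearMap.apply ℝ (Fin 3 → ℝ) v).comp
        (fderiv ℝ (fderiv ℝ σ) x) → True := fun _ _ _ => trivial
  have hsu2 : fderiv ℝ su q = (ContinuousLinearMap.apply ℝ (Fin 3 → ℝ) ((1 : ℝ), (0 : ℝ))).comp
      (fderiv ℝ (fderiv ℝ σ) q) := by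
    have := (ContinuousLinearMap.apply ℝ (Fin 3 → ℝ) ((1 : ℝ), (0 : ℝ))).hasFDerivAt.comp
      q hDD.hasFDerivAt
    exact this.fderiv
  have hsv2 : fderiv ℝ sv q = (ContinuousLinearMap.apply ℝ (Fin 3 → ℝ) ((0 : ℝ), (1 : ℝ))).comp
      (fderiv ℝ (fderiv ℝ σ) q) := by
    have := (ContinuousLinearMap.apply ℝ (Fin 3 → ℝ) ((0 : ℝ), (1 : ℝ))).hasFDerivAt.comp
      q hDD.hasFDerivAt
    exact this.fderiv
  have hsymm : fderiv ℝ sv q (1, 0) = σuv q := by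
    have h2 : ContDiffAt ℝ 2 σ q := (hσ.contDiffAt hmem).of_le (WithTop.coe_le_coe.mpr le_top)
    have hs := h2.isSymmSndFDerivAt (by simp)
    rw [hσuv q]
    have e1 : fderiv ℝ sv q (1, 0) = fderiv ℝ (fderiv ℝ σ) q (1, 0) (0, 1) := by
      rw [hsv2]; rfl
    have e2 : fderiv ℝ (fun y => fderiv ℝ σ y (1, 0)) q (0, 1)
        = fderiv ℝ (fderiv ℝ σ) q (0, 1) (1, 0) := by
      rw [← hsu_def, hsu2]; rfl
    rw [e1, e2, hs (1, 0) (0, 1)]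
  have hsuu : fderiv ℝ su q (1, 0) = σuu q := by rw [hσuu q]
  have hsuv : fderiv ℝ su q (0, 1) = σuv q := by rw [hσuv q]
  have hsvv : fderiv ℝ sv q (0, 1) = σvv q := by rw [hσvv q]
  -- the four curvature identities
  have i6 : dot3 nu (su q) = -dot3 (σuu q) (n q) := by
    have := hψu (1, 0); rw [hsuu, dot3_comm (n q) (σuu q)] at this; rw [hnu_def]; linarith
  have i7 : dot3 nv (su q) = -dot3 (σuv q) (n q) := by
    have := hψu (0, 1); rw [hsuv, dot3_comm (n q) (σuv q)] at this; rw [hnv_def]; linarith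
  have i8 : dot3 nu (sv q) = -dot3 (σuv q) (n q) := by
    have := hψv (1, 0); rw [hsymm, dot3_comm (n q) (σuv q)] at this; rw [hnu_def]; linarith
  have i9 : dot3 nv (sv q) = -dot3 (σvv q) (n q) := by
    have := hψv (0, 1); rw [hsvv, dot3_comm (n q) (σvv q)] at this; rw [hnv_def]; linarith
  have i3 : dot3 (n q) (n q) = 1 := hnn1.self_of_nhds
  have i4 : dot3 (n q) nu = 0 := hnm (1, 0)
  have i5 : dot3 (n q) nv = 0 := hnm (0, 1)
  -- derivative of F
  have hDF : fderiv ℝ F (q, ρ) = (fderiv ℝ σ q).comp (ContinuousLinearMap.fst ℝ (ℝ × ℝ) ℝ)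
      + (ρ • (fderiv ℝ n q).comp (ContinuousLinearMap.fst ℝ (ℝ × ℝ) ℝ)
        + (ContinuousLinearMap.snd ℝ (ℝ × ℝ) ℝ).smulRight (n q)) := by
    have h1 : HasFDerivAt (fun y : (ℝ × ℝ) × ℝ => σ y.1)
        ((fderiv ℝ σ q).comp (ContinuousLinearMap.fst ℝ (ℝ × ℝ) ℝ)) (q, ρ) :=
      hσD.hasFDerivAt.comp (q, ρ) hasFDerivAt_fst
    have h2 : HasFDerivAt (fun y : (ℝ × ℝ) × ℝ => n y.1)
        ((fderiv ℝ n q).comp (ContinuousLinearMap.fst ℝ (ℝ × ℝ) ℝ)) (q, ρ) :=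
      hnD.hasFDerivAt.comp (q, ρ) hasFDerivAt_fst
    have h3 := (hasFDerivAt_snd (𝕜 := ℝ) (E := ℝ × ℝ) (F := ℝ) (p := (q, ρ))).smul h2
    have h4 := h1.add h3
    rw [show F = fun y : (ℝ × ℝ) × ℝ => σ y.1 + y.2 • n y.1 from funext hF]
    exact h4.fderiv
  have hcol0 : fderiv ℝ F (q, ρ) ((1, 0), 0) = su q + ρ • nu := by
    rw [hDF, hnu_def]
    simp [hsu_def]
  have hcol1 : fderiv ℝ F (q, ρ) ((0, 1), 0) = sv q + ρ • nv := by
    rw [hDF, hnv_def]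
    simp [hsv_def]
  have hcol2 : fderiv ℝ F (q, ρ) ((0, 0), 1) = n q := by
    rw [hDF]
    have hz : ((0 : ℝ), (0 : ℝ)) = (0 : ℝ × ℝ) := rfl
    simp [hz]
  -- determinant of g equals |w|²  (Lagrange identity)
  have hdetgw : (g q).det = dot3 (w q) (w q) := by
    rw [hg q, hσu' q, hσv' q, hwx q]
    simp [Matrix.det_fin_two_of, dot3]
    ring
  have hi10 : dot3 (w q) (n q) = Real.sqrt ((g q).det) := by
    rw [dot3_comm (w q) (n q), hn' q, dot3_smul_left, hdetgw]
    rw [inv_mul_eq_div, div_eq_iff hsq.ne', Real.mul_self_sqrt hdq.le]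
  have hdetP : (Matrix.of ![su q, sv q, n q] : Matrix (Fin 3) (Fin 3) ℝ).det
      = dot3 (w q) (n q) := by
    rw [hwx q]
    simp [Matrix.det_fin_three, dot3]
    ring
  -- column description of J
  have hJ0 : ∀ i, J i 0 = (su q + ρ • nu) i := by
    intro i; rw [hJ]
    show fderiv ℝ F (q, ρ) (E 0) i = _
    rw [hE]
    show fderiv ℝ F (q, ρ) ((1, 0), 0) i = _
    rw [hcol0]
  have hJ1 : ∀ i, J i 1 = (sv q + ρ • nv) i := by
    intro i; rw [hJ]
    show fderiv ℝ F (q, ρ) (E 1) i = _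
    rw [hE]
    show fderiv ℝ F (q, ρ) ((0, 1), 0) i = _
    rw [hcol1]
  have hJ2 : ∀ i, J i 2 = n q i := by
    intro i; rw [hJ]
    show fderiv ℝ F (q, ρ) (E 2) i = _
    rw [hE]
    show fderiv ℝ F (q, ρ) ((0, 0), 1) i = _
    rw [hcol2]
  have i1 := horthu q
  have i2 := horthv q
  simp only [dot3] at i1 i2 i3 i4 i5 i6 i7 i8 i9
  have hmul : (Matrix.of ![su q, sv q, n q] : Matrix (Fin 3) (Fin 3) ℝ) * J =
      !![dot3 (su q) (su q) - ρ * dot3 (σuu q) (n q),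
         dot3 (su q) (sv q) - ρ * dot3 (σuv q) (n q), 0;
         dot3 (su q) (sv q) - ρ * dot3 (σuv q) (n q),
         dot3 (sv q) (sv q) - ρ * dot3 (σvv q) (n q), 0;
         0, 0, 1] := by
    ext i j
    fin_cases i <;> fin_cases j <;>
      simp [Matrix.mul_apply, Fin.sum_univ_three, hJ0, hJ1, hJ2, dot3]
    · linear_combination ρ * i6
    · linear_combination ρ * i7
    · linear_combination i1
    · linear_combination ρ * i8
    · linear_combination ρ * i9
    · linear_combination i2
    · linear_combination i1 + ρ * i4
    · linear_combination i2 + ρ * i5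
    · linear_combination i3
  have c1 : J.det * Real.sqrt (g q).det = (g q - ρ • h q).det := by
    have hdm := congrArg Matrix.det hmul
    rw [Matrix.det_mul, hdetP, hi10] at hdm
    rw [mul_comm, hdm, hg q, hh q, hσu' q, hσv' q]
    simp [Matrix.det_fin_three, Matrix.det_fin_two, Matrix.sub_apply, Matrix.smul_apply,
      smul_eq_mul]
  -- bijectivity
  have hgdetpos : 0 < (g q).det := by rw [hdetgw]; exact hdq
  have hsqg : 0 < Real.sqrt (g q).det := Real.sqrt_pos.mpr hgdetpos
  have hφbij : Function.Bijective (fun v : Fin 3 → ℝ => ((v 0, v 1), v 2)) := by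
    constructor
    · intro u v huv
      have h1 := congrArg (fun p : (ℝ × ℝ) × ℝ => p.1.1) huv
      have h2 := congrArg (fun p : (ℝ × ℝ) × ℝ => p.1.2) huv
      have h3 := congrArg (fun p : (ℝ × ℝ) × ℝ => p.2) huv
      simp only at h1 h2 h3
      funext i; fin_cases i <;> assumption
    · intro p
      exact ⟨![p.1.1, p.1.2, p.2], rfl⟩
  have hcomp : (⇑(fderiv ℝ F (q, ρ)) ∘ fun v : Fin 3 → ℝ => ((v 0, v 1), v 2)) = J.mulVec := by
    funext v
    show fderiv ℝ F (q, ρ) ((v 0, v 1), v 2) = J.mulVec v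
    have hvdec : ((v 0, v 1), v 2) = v 0 • ((((1 : ℝ), (0 : ℝ)), (0 : ℝ)) : (ℝ × ℝ) × ℝ)
        + v 1 • ((((0 : ℝ), (1 : ℝ)), (0 : ℝ)) : (ℝ × ℝ) × ℝ)
        + v 2 • ((((0 : ℝ), (0 : ℝ)), (1 : ℝ)) : (ℝ × ℝ) × ℝ) := by
      simp [Prod.ext_iff]
    rw [hvdec, map_add, map_add, map_smul, map_smul, map_smul]
    funext i
    simp only [Matrix.mulVec, dotProduct, Fin.sum_univ_three, hJ, hE, Matrix.of_apply,
      Matrix.cons_val_zero, Matrix.cons_val_one, Matrix.head_cons, Matrix.cons_val_two,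
      Matrix.tail_cons, Pi.add_apply, Pi.smul_apply, smul_eq_mul]
    ring
  have hbij : Function.Bijective (fderiv ℝ F (q, ρ)) ↔ J.det ≠ 0 := by
    have h1 : Function.Bijective (J.mulVec) ↔ Function.Bijective (fderiv ℝ F (q, ρ)) := by
      rw [← hcomp]
      exact Function.Bijective.of_comp_iff _ hφbij
    have h2 : Function.Bijective (J.mulVec) ↔ IsUnit J :=
      ⟨fun hb => Matrix.mulVec_injective_iff_isUnit.mp hb.injective,
       fun hu => ⟨Matrix.mulVec_injective_iff_isUnit.mpr hu,
         Matrix.mulVec_surjective_iff_isUnit.mpr hu⟩⟩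
    rw [← h1, h2, Matrix.isUnit_iff_isUnit_det, isUnit_iff_ne_zero]
  have c2 : ¬ Function.Bijective (fderiv ℝ F (q, ρ)) ↔ (g q - ρ • h q).det = 0 := by
    rw [hbij, not_ne_iff, ← c1, mul_eq_zero]
    simp [hsqg.ne']
  -- principal curvatures
  have hGunit : IsUnit (g q).det := isUnit_iff_ne_zero.mpr hgdetpos.ne'
  have c3 : (g q - ρ • h q).det = 0 ↔ ρ * k₁ = 1 ∨ ρ * k₂ = 1 := by
    rcases eq_or_ne ρ 0 with hρ | hρ
    · subst hρ
      simp only [zero_smul, sub_zero, zero_mul]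
      constructor
      · intro h0; exact absurd h0 hgdetpos.ne'
      · rintro (h1 | h1) <;> norm_num at h1
    · have key : (g q - ρ • h q) = g q * (1 - ρ • ((g q)⁻¹ * h q)) := by
        rw [Matrix.mul_sub, Matrix.mul_one, Matrix.mul_smul, ← Matrix.mul_assoc,
          Matrix.mul_nonsing_inv _ hGunit, Matrix.one_mul]
      have key2 : (1 : Matrix (Fin 2) (Fin 2) ℝ) - ρ • ((g q)⁻¹ * h q)
          = ρ • (ρ⁻¹ • (1 : Matrix (Fin 2) (Fin 2) ℝ) - (g q)⁻¹ * h q) := by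
        rw [smul_sub, smul_smul, mul_inv_cancel₀ hρ, one_smul]
      have key3 : (g q - ρ • h q).det = (g q).det * ((1 - ρ * k₁) * (1 - ρ * k₂)) := by
        rw [key, Matrix.det_mul, key2, Matrix.det_smul, hprin ρ⁻¹, Fintype.card_fin]
        have hρρ : ρ * ρ⁻¹ = 1 := mul_inv_cancel₀ hρ
        linear_combination ((g q).det * (ρ * ρ⁻¹ + 1 - ρ * k₁ - ρ * k₂)) * hρρ
      rw [key3, mul_eq_zero, mul_eq_zero]
      constructor
      · rintro (h0 | h0 | h0)
        · exact absurd h0 hgdetpos.ne'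
        · left; linarith
        · right; linarith
      · rintro (h1 | h1)
        · right; left; linarith
        · right; right; linarith
  exact ⟨c1, c2, c3⟩
end
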